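/- arXiv:math/9709226 — 15 statements merged into one kernel-verified Lean document; each statement's English description precedes it below -/
import Mathlib

section
/- Let n ≥ 2 and let p, q ∈ ℂ[z] be coprime polynomials with max(deg p, deg q) = n, so that f = p/q is a rational map of degree n. If the Wronskian W = p′q − p q′ vanishes at no point of ℂ ∖ {0} (i.e. the only finite critical point of f is possibly 0), then there exist a, b, c, d ∈ ℂ with ad − bc ≠ 0 such that p(z) = a z^n + b and q(z) = c z^n + d. (Lemma 1.1: a bicritical map with critical points at 0 and ∞ has the normal form f(z) = (a z^n + b)/(c z^n + d).) -/
open Polynomial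

/-!
The Wronskian `W(q, p) = q p' - q' p` has no zero on `ℂ ∖ {0}`, so `W = k X^m`. For any
functional `φ`, the combination `u = φ(q) p - φ(p) q` satisfies `W(v, u) = φ(v) W(q, p)` for
`v ∈ {p, q}`. Taking `φ = eval 0`, `u₀` vanishes at `0` and `W(v, u₀)` is `X^(ord₀ u₀ - 1)` times a
unit at `0`, so `ord₀ u₀ = m + 1 ≤ n`. Taking `φ = coeff n`, `u∞` has degree `< n` and `W(v, u∞)`
has exact degree `n + deg u∞ - 1`, so `deg u∞ + n = m + 1`. Hence `u₀ = c X^n` and `u∞` is a nonzero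
constant, and `p`, `q` are combinations of these two.
-/

namespace Polynomial

section CommRing

variable {R : Type*} [CommRing R]

theorem eq_of_coeff_C_mul_X_pow_ne_zero {a : R} {m i : ℕ} (h : (C a * X ^ m).coeff i ≠ 0) :
    i = m := by
  rw [coeff_C_mul_X_pow] at h
  exact of_not_not fun hi => h (if_neg hi)

theorem eq_C_mul_X_pow_of_X_pow_dvd {f : R[X]} {n : ℕ} (hdvd : X ^ n ∣ f)
    (hf : f.natDegree ≤ n) : f = C (f.coeff n) * X ^ n := by
  ext i
  rw [coeff_C_mul_X_pow]
  rcases lt_trichotomy i n with hi | rfl | hi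
  · rw [X_pow_dvd_iff.mp hdvd i hi, if_neg hi.ne]
  · rw [if_pos rfl]
  · rw [coeff_eq_zero_of_natDegree_lt (hf.trans_lt hi), if_neg hi.ne']

theorem natDegree_C_mul_sub_C_mul_le {p q : R[X]} {n : ℕ} (hp : p.natDegree ≤ n)
    (hq : q.natDegree ≤ n) (a b : R) : (C a * p - C b * q).natDegree ≤ n :=
  (natDegree_sub_le _ _).trans
    (max_le ((natDegree_C_mul_le _ _).trans hp) ((natDegree_C_mul_le _ _).trans hq))

theorem _root_.IsCoprime.eval_ne_zero_or [Nontrivial R] {p q : R[X]} (h : IsCoprime p q) (z : R) :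
    p.eval z ≠ 0 ∨ q.eval z ≠ 0 := by
  obtain ⟨x, y, hxy⟩ := h
  by_contra! h0
  simpa [h0] using congrArg (eval z) hxy

theorem wronskian_C_mul_sub_C_mul (φ : R[X] → R) {p q v : R[X]} (hv : v = p ∨ v = q) :
    wronskian v (C (φ q) * p - C (φ p) * q) = C (φ v) * wronskian q p := by
  rcases hv with rfl | rfl <;>
    · simp only [wronskian, derivative_sub, derivative_C_mul]
      ring

theorem wronskian_C_mul_X_pow_add_C (a b c d : R) (n : ℕ) :
    wronskian (C c * X ^ n + C d) (C a * X ^ n + C b) =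
      C ((a * d - b * c) * n) * X ^ (n - 1) := by
  cases n with
  | zero => simp [wronskian]
  | succ n =>
    simp only [wronskian, derivative_add, derivative_C_mul, derivative_X_pow, derivative_C,
      C_mul, map_natCast, map_sub, Nat.add_sub_cancel]
    ring

theorem coeff_mul_derivative_natDegree_add_sub_one (f g : R[X]) :
    (f * derivative g).coeff (f.natDegree + g.natDegree - 1) =
      g.natDegree * (f.leadingCoeff * g.leadingCoeff) := by
  obtain hg | ⟨s, hs⟩ : g.natDegree = 0 ∨ ∃ s, g.natDegree = s + 1 :=
    (Nat.eq_zero_or_eq_succ_pred _).imp id fun h => ⟨_, h⟩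
  · simp [derivative_of_natDegree_zero hg, hg]
  · have hg' : (derivative g).natDegree ≤ s := (natDegree_derivative_le g).trans (by omega)
    rw [hs, ← add_assoc, Nat.add_sub_cancel, coeff_mul_add_eq_of_natDegree_le le_rfl hg',
      coeff_derivative, leadingCoeff, leadingCoeff, hs]
    push_cast
    ring

theorem coeff_wronskian_natDegree_add_sub_one (f g : R[X]) :
    (wronskian f g).coeff (f.natDegree + g.natDegree - 1) =
      ((g.natDegree : R) - f.natDegree) * (f.leadingCoeff * g.leadingCoeff) := by
  rw [wronskian, coeff_sub, coeff_mul_derivative_natDegree_add_sub_one, mul_comm (derivative f),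
    add_comm f.natDegree, coeff_mul_derivative_natDegree_add_sub_one]
  ring

theorem coeff_wronskian_X_pow_succ_mul (v w : R[X]) (t : ℕ) :
    (wronskian v (X ^ (t + 1) * w)).coeff t = (t + 1) * (v.eval 0 * w.eval 0) := by
  have h : wronskian v (X ^ (t + 1) * w) =
      X ^ t * (C ((t : R) + 1) * v * w + X * wronskian v w) := by
    simp only [wronskian, derivative_mul, derivative_X_pow, map_add, map_natCast,
      Nat.add_sub_cancel, C_1]
    push_cast
    ring
  rw [h, coeff_X_pow_mul', if_pos le_rfl, Nat.sub_self, coeff_zero_eq_eval_zero]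
  simp [mul_assoc]

end CommRing

theorem eq_C_leadingCoeff_mul_X_pow_of_eval_ne_zero {k : Type*} [Field k] [IsAlgClosed k]
    {f : k[X]} (hf : ∀ z ≠ 0, f.eval z ≠ 0) : f = C f.leadingCoeff * X ^ f.natDegree := by
  have hroots : f.roots = Multiset.replicate f.natDegree 0 := by
    rw [← IsAlgClosed.card_roots_eq_natDegree]
    exact Multiset.eq_replicate_card.mpr fun z hz =>
      of_not_not fun hz0 => hf z hz0 (mem_roots'.mp hz).2
  conv_lhs =>
    rw [← C_leadingCoeff_mul_prod_multiset_X_sub_C (p := f) IsAlgClosed.card_roots_eq_natDegree]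
  simp [hroots]

section Field

variable {K : Type*} [Field K] {p q : K[X]}

theorem eq_C_mul_X_pow_add_C_of_C_mul_sub_C_mul {α β c e : K} {n : ℕ}
    (h₁ : C (q.eval 0) * p - C (p.eval 0) * q = C c * X ^ n)
    (h₂ : C β * p - C α * q = C e) (he : e ≠ 0) :
    (∃ a, p = C a * X ^ n + C (p.eval 0)) ∧ ∃ a, q = C a * X ^ n + C (q.eval 0) := by
  have hCe : C e = C β * C (p.eval 0) - C α * C (q.eval 0) := by
    have he : β * p.eval 0 - α * q.eval 0 = e := by simpa using congrArg (eval 0) h₂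
    rw [← he, map_sub, C_mul, C_mul]
  have hdiv : ∀ γ, C e * C (-(γ * c) / e) = -(C γ * C c) := fun γ => by
    rw [← C_mul, mul_div_cancel₀ _ he, map_neg, C_mul]
  refine ⟨⟨-(α * c) / e, mul_left_cancel₀ (C_ne_zero.mpr he) ?_⟩,
    ⟨-(β * c) / e, mul_left_cancel₀ (C_ne_zero.mpr he) ?_⟩⟩
  · linear_combination C (p.eval 0) * h₂ - C α * h₁ + p * hCe - X ^ n * hdiv α
  · linear_combination C (q.eval 0) * h₂ - C β * h₁ + q * hCe - X ^ n * hdiv β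

variable [CharZero K] {k : K} {m : ℕ}

theorem rootMultiplicity_C_eval_mul_sub_C_eval_mul (hcop : IsCoprime p q)
    (hW : wronskian q p = C k * X ^ m) (hk : k ≠ 0) :
    C (q.eval 0) * p - C (p.eval 0) * q ≠ 0 ∧
      (C (q.eval 0) * p - C (p.eval 0) * q).rootMultiplicity 0 = m + 1 := by
  set u := C (q.eval 0) * p - C (p.eval 0) * q
  obtain ⟨v, hv, hv0⟩ : ∃ v, (v = p ∨ v = q) ∧ v.eval 0 ≠ 0 := by
    rcases hcop.eval_ne_zero_or 0 with h | h
    exacts [⟨p, .inl rfl, h⟩, ⟨q, .inr rfl, h⟩]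
  have hvu : wronskian v u = C (v.eval 0 * k) * X ^ m := by
    rw [wronskian_C_mul_sub_C_mul (eval 0) hv, hW, C_mul, mul_assoc]
  have hu : u ≠ 0 := by
    rintro h
    simp [h, hv0, hk] at hvu
  obtain ⟨t, ht⟩ : ∃ t, u.rootMultiplicity 0 = t + 1 :=
    Nat.exists_eq_add_one.mpr ((rootMultiplicity_pos hu).mpr (by simp [u, mul_comm]))
  obtain ⟨w, hw, hwX⟩ := exists_eq_pow_rootMultiplicity_mul_and_not_dvd u hu 0
  rw [ht, map_zero, sub_zero] at hw
  rw [map_zero, sub_zero, X_dvd_iff, coeff_zero_eq_eval_zero] at hwX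
  have hcoeff : (wronskian v u).coeff t ≠ 0 := by
    rw [hw, coeff_wronskian_X_pow_succ_mul]
    exact mul_ne_zero (Nat.cast_add_one_ne_zero t) (mul_ne_zero hv0 hwX)
  rw [hvu] at hcoeff
  have := eq_of_coeff_C_mul_X_pow_ne_zero hcoeff
  exact ⟨hu, by omega⟩

theorem natDegree_C_coeff_mul_sub_C_coeff_mul {n : ℕ} (hdeg : max p.natDegree q.natDegree = n)
    (hW : wronskian q p = C k * X ^ m) (hk : k ≠ 0) :
    C (q.coeff n) * p - C (p.coeff n) * q ≠ 0 ∧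
      (C (q.coeff n) * p - C (p.coeff n) * q).natDegree + n = m + 1 := by
  set u := C (q.coeff n) * p - C (p.coeff n) * q
  obtain ⟨v, hv, hvn⟩ : ∃ v, (v = p ∨ v = q) ∧ v.natDegree = n := by
    rcases max_choice p.natDegree q.natDegree with h | h
    exacts [⟨p, .inl rfl, h.symm.trans hdeg⟩, ⟨q, .inr rfl, h.symm.trans hdeg⟩]
  have hv0 : v ≠ 0 := by
    rintro rfl
    rcases hv with rfl | rfl <;> simp [hk] at hW
  have hvu : wronskian v u = C (v.coeff n * k) * X ^ m := by
    rw [wronskian_C_mul_sub_C_mul (coeff · n) hv, hW, C_mul, mul_assoc]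
  have hu : u ≠ 0 := by
    rintro h
    simp [h, ← hvn, hv0, hk] at hvu
  have hlt : u.natDegree < n := by
    refine (natDegree_C_mul_sub_C_mul_le (hdeg ▸ le_max_left _ _)
      (hdeg ▸ le_max_right _ _) _ _).lt_of_ne fun h => hu (leadingCoeff_eq_zero.mp ?_)
    rw [leadingCoeff, h]
    simp [u, mul_comm]
  have hcoeff : (wronskian v u).coeff (v.natDegree + u.natDegree - 1) ≠ 0 := by
    rw [coeff_wronskian_natDegree_add_sub_one, hvn]
    refine mul_ne_zero (sub_ne_zero.mpr (Nat.cast_injective.ne hlt.ne))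
      (mul_ne_zero (leadingCoeff_ne_zero.mpr hv0) (leadingCoeff_ne_zero.mpr hu))
  rw [hvu] at hcoeff
  have := eq_of_coeff_C_mul_X_pow_ne_zero hcoeff
  exact ⟨hu, by omega⟩

end Field

end Polynomial

theorem stmt0_general (n : ℕ) (p q : Polynomial ℂ)
    (hcop : IsCoprime p q)
    (hdeg : max p.natDegree q.natDegree = n)
    (hW : ∀ z : ℂ, z ≠ 0 → (derivative p * q - p * derivative q).eval z ≠ 0) :
    ∃ a b c d : ℂ, a * d - b * c ≠ 0 ∧
      p = C a * X ^ n + C b ∧ q = C c * X ^ n + C d := by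
  have hWz : ∀ z : ℂ, z ≠ 0 → (wronskian q p).eval z ≠ 0 := by
    rwa [show wronskian q p = derivative p * q - p * derivative q by rw [wronskian]; ring]
  have hW0 : wronskian q p ≠ 0 := fun h => hWz 1 one_ne_zero (by simp [h])
  have hWform := eq_C_leadingCoeff_mul_X_pow_of_eval_ne_zero hWz
  have hk := leadingCoeff_ne_zero.mpr hW0
  obtain ⟨hu₀, hmult⟩ := rootMultiplicity_C_eval_mul_sub_C_eval_mul hcop hWform hk
  obtain ⟨hu₁, hnatDeg⟩ := natDegree_C_coeff_mul_sub_C_coeff_mul hdeg hWform hk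
  have hle : ∀ a b : ℂ, (C a * p - C b * q).natDegree ≤ n :=
    natDegree_C_mul_sub_C_mul_le (hdeg ▸ le_max_left _ _) (hdeg ▸ le_max_right _ _)
  have hdvd := pow_rootMultiplicity_dvd (C (q.eval 0) * p - C (p.eval 0) * q) 0
  rw [hmult, map_zero, sub_zero] at hdvd
  have hmn : (wronskian q p).natDegree + 1 = n := by
    have hord := natDegree_le_of_dvd hdvd hu₀
    rw [natDegree_X_pow] at hord
    exact le_antisymm (hord.trans (hle _ _)) (by omega)
  have hconst : (C (q.coeff n) * p - C (p.coeff n) * q).natDegree = 0 := by omega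
  obtain ⟨⟨a, hp⟩, ⟨c, hq⟩⟩ := eq_C_mul_X_pow_add_C_of_C_mul_sub_C_mul
    (eq_C_mul_X_pow_of_X_pow_dvd (hmn ▸ hdvd) (hle _ _)) (eq_C_of_natDegree_eq_zero hconst)
    (hconst ▸ leadingCoeff_ne_zero.mpr hu₁)
  refine ⟨a, p.eval 0, c, q.eval 0, fun hdet => hW0 ?_, hp, hq⟩
  rw [hp, hq, wronskian_C_mul_X_pow_add_C, hdet, zero_mul, C_0, zero_mul]

/-- Lemma 1.1: a bicritical rational map of degree `n ≥ 2` whose only finite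
critical point is possibly `0` (i.e. whose Wronskian vanishes nowhere on
`ℂ \ {0}`) has the normal form `f(z) = (a z^n + b)/(c z^n + d)`. -/
theorem stmt0 (n : ℕ) (hn : 2 ≤ n) (p q : Polynomial ℂ)
    (hcop : IsCoprime p q)
    (hdeg : max p.natDegree q.natDegree = n)
    (hW : ∀ z : ℂ, z ≠ 0 → (derivative p * q - p * derivative q).eval z ≠ 0) :
    ∃ a b c d : ℂ, a * d - b * c ≠ 0 ∧
      p = C a * X ^ n + C b ∧ q = C c * X ^ n + C d :=
  stmt0_general n p q hcop hdeg hW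
end

section
/- Fix n ≥ 2. Let a, b, c, d and a′, b′, c′, d′ be complex numbers with ad − bc = 1 and a′d′ − b′c′ = 1. Then the three equalities bc = b′c′, a^{n+1} b^{n−1} = a′^{n+1} b′^{n−1} and c^{n−1} d^{n+1} = c′^{n−1} d′^{n+1} hold if and only if there exist t ∈ ℂ with t ≠ 0 and ε ∈ {1, −1} such that a′ = ε t^{n−1} a, b′ t^{n+1} = ε b, c′ = ε t^{n+1} c and d′ t^{n−1} = ε d. (Theorem 1.2, injectivity: the transformation (a,b,c,d) ↦ ±(t^{n−1}a, t^{−(n+1)}b, t^{n+1}c, t^{−(n−1)}d) is the effect of conjugating f by the Möbius map z ↦ z/t², so X, Y₁, Y₂ form a complete set of conjugacy invariants for bicritical maps with marked critical points.) -/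
/-!
Conjugating by `z ↦ z / t²` rescales `(a, b, c, d)` with weights `(n-1, -(n+1), n+1, -(n-1))`,
and the sign `ε` disappears from the invariants because `ε ^ (2n) = 1`.

Conversely, write `p = n - 1`. If `a b ≠ 0`, then `u = a'/a` and `v = b/b'` satisfy
`u ^ (p+2) = v ^ p`, so a square root `s` of `v / u` has `(s ^ p)² = u²`: thus `s ^ p = ε u` and
then `s ^ (p+2) = ε v` with the same sign `ε`. The remaining coordinates are forced by
`b c = b' c'` and `a d = a' d'`. The case `c d ≠ 0` is the same argument read from the other end,
and otherwise the map is `z ↦ b / (c z^n)` or `z ↦ a z^n / d`, for which one root suffices.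
-/

variable {K : Type*} [Field K]

theorem exists_pow_eq_sign_mul_of_pow_eq_pow [IsAlgClosed K] (p : ℕ) {u v : K}
    (hu : u ≠ 0) (hv : v ≠ 0) (huv : u ^ (p + 2) = v ^ p) :
    ∃ t : K, t ≠ 0 ∧ ∃ ε : K, (ε = 1 ∨ ε = -1) ∧ t ^ p = ε * u ∧ t ^ (p + 2) = ε * v := by
  obtain ⟨s, hs⟩ := IsAlgClosed.exists_pow_nat_eq (v / u) two_pos
  have hs0 : s ≠ 0 := by
    rintro rfl
    exact div_ne_zero hv hu (by simpa using hs.symm)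
  have hsq : (s ^ p) ^ 2 = u ^ 2 := by
    rw [← pow_mul, mul_comm, pow_mul, hs, div_pow, div_eq_iff (pow_ne_zero p hu), ← huv]
    ring
  have hs_add_two : s ^ (p + 2) = s ^ p * (v / u) := by rw [pow_add, hs]
  rcases sq_eq_sq_iff_eq_or_eq_neg.mp hsq with hpos | hneg
  · refine ⟨s, hs0, 1, Or.inl rfl, by rw [hpos, one_mul], ?_⟩
    rw [hs_add_two, hpos]
    field_simp
  · refine ⟨s, hs0, -1, Or.inr rfl, by rw [hneg, neg_one_mul], ?_⟩
    rw [hs_add_two, hneg]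
    field_simp

theorem exists_twist_of_pow_mul_pow_eq [IsAlgClosed K] (p : ℕ) {x y x' y' : K}
    (hx : x ≠ 0) (hy : y ≠ 0) (hx' : x' ≠ 0) (hy' : y' ≠ 0)
    (hxy : x ^ (p + 2) * y ^ p = x' ^ (p + 2) * y' ^ p) :
    ∃ t : K, t ≠ 0 ∧ ∃ ε : K, (ε = 1 ∨ ε = -1) ∧
      x' = ε * t ^ p * x ∧ y' * t ^ (p + 2) = ε * y := by
  have huv : (x' / x) ^ (p + 2) = (y / y') ^ p := by
    rw [div_pow, div_pow, div_eq_div_iff (pow_ne_zero _ hx) (pow_ne_zero _ hy')]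
    linear_combination -hxy
  obtain ⟨t, ht, ε, hε, htp, htp2⟩ :=
    exists_pow_eq_sign_mul_of_pow_eq_pow p (div_ne_zero hx' hx) (div_ne_zero hy hy') huv
  have hεε : ε * ε = 1 := mul_self_eq_one_iff.mpr hε
  refine ⟨t, ht, ε, hε, ?_, ?_⟩
  · rw [htp, ← mul_assoc, hεε]
    field_simp
  · rw [htp2]
    field_simp

theorem mul_eq_sign_mul_of_eq_sign_mul {x y x' y' s ε : K} (hxy : x * y = x' * y')
    (hx : x ≠ 0) (hε : ε * ε = 1) (h : x' = ε * s * x) : y' * s = ε * y := by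
  refine mul_left_cancel₀ hx ?_
  linear_combination -ε * hxy - ε * y' * h - x * y' * s * hε

theorem eq_sign_mul_of_mul_eq_sign_mul {x y x' y' s ε : K} (hxy : x * y = x' * y')
    (hy : y ≠ 0) (hε : ε * ε = 1) (h : y' * s = ε * y) : x' = ε * s * x := by
  refine mul_right_cancel₀ hy ?_
  linear_combination -ε * s * hxy - x' * y * hε - ε * x' * h

theorem invariants_eq_of_twist (p : ℕ) {a b c d a' b' c' d' t ε : K} (hε : ε = 1 ∨ ε = -1)
    (ha : a' = ε * t ^ p * a) (hb : b' * t ^ (p + 2) = ε * b)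
    (hc : c' = ε * t ^ (p + 2) * c) (hd : d' * t ^ p = ε * d) :
    b * c = b' * c' ∧ a ^ (p + 2) * b ^ p = a' ^ (p + 2) * b' ^ p ∧
      c ^ p * d ^ (p + 2) = c' ^ p * d' ^ (p + 2) := by
  have hεε : ε * ε = 1 := mul_self_eq_one_iff.mpr hε
  have hb : b = ε * b' * t ^ (p + 2) := by linear_combination -b * hεε - ε * hb
  have hd : d = ε * d' * t ^ p := by linear_combination -d * hεε - ε * hd
  subst ha hb hc hd
  rcases hε with rfl | rfl <;> refine ⟨?_, ?_, ?_⟩ <;> ring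

theorem exists_ne_zero_pow_eq [IsAlgClosed K] {k : ℕ} (hk : k ≠ 0) {x : K} (hx : x ≠ 0) :
    ∃ t : K, t ≠ 0 ∧ t ^ k = x := by
  obtain ⟨t, ht⟩ := IsAlgClosed.exists_pow_nat_eq x (Nat.pos_of_ne_zero hk)
  exact ⟨t, ne_zero_pow hk (ht ▸ hx), ht⟩

theorem exists_twist_of_left_ne_zero [IsAlgClosed K] {p : ℕ} (hp : p ≠ 0)
    {a b c d a' b' c' d' : K} (had : a * d = a' * d') (hcb : c * b = c' * b')
    (hY₁ : a ^ (p + 2) * b ^ p = a' ^ (p + 2) * b' ^ p) (ha : a ≠ 0) (hb : b ≠ 0) :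
    ∃ t : K, t ≠ 0 ∧ ∃ ε : K, (ε = 1 ∨ ε = -1) ∧
      a' = ε * t ^ p * a ∧ b' * t ^ (p + 2) = ε * b ∧
      c' = ε * t ^ (p + 2) * c ∧ d' * t ^ p = ε * d := by
  have hY₁' : a' ^ (p + 2) * b' ^ p ≠ 0 :=
    hY₁ ▸ mul_ne_zero (pow_ne_zero _ ha) (pow_ne_zero _ hb)
  obtain ⟨t, ht, ε, hε, ha', hb'⟩ := exists_twist_of_pow_mul_pow_eq p ha hb
    (ne_zero_pow (by omega) (left_ne_zero_of_mul hY₁'))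
    (ne_zero_pow hp (right_ne_zero_of_mul hY₁')) hY₁
  have hεε : ε * ε = 1 := mul_self_eq_one_iff.mpr hε
  exact ⟨t, ht, ε, hε, ha', hb', eq_sign_mul_of_mul_eq_sign_mul hcb hb hεε hb',
    mul_eq_sign_mul_of_eq_sign_mul had ha hεε ha'⟩

theorem exists_twist_of_right_ne_zero [IsAlgClosed K] {p : ℕ} (hp : p ≠ 0)
    {a b c d a' b' c' d' : K} (had : a * d = a' * d') (hcb : c * b = c' * b')
    (hY₂ : c ^ p * d ^ (p + 2) = c' ^ p * d' ^ (p + 2)) (hc : c ≠ 0) (hd : d ≠ 0) :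
    ∃ t : K, t ≠ 0 ∧ ∃ ε : K, (ε = 1 ∨ ε = -1) ∧
      a' = ε * t ^ p * a ∧ b' * t ^ (p + 2) = ε * b ∧
      c' = ε * t ^ (p + 2) * c ∧ d' * t ^ p = ε * d := by
  have hY₂' : c' ^ p * d' ^ (p + 2) ≠ 0 :=
    hY₂ ▸ mul_ne_zero (pow_ne_zero _ hc) (pow_ne_zero _ hd)
  obtain ⟨t, ht, ε, hε, hdt, hct⟩ := exists_twist_of_pow_mul_pow_eq p
    (ne_zero_pow (by omega) (right_ne_zero_of_mul hY₂'))
    (ne_zero_pow hp (left_ne_zero_of_mul hY₂')) hd hc (by linear_combination -hY₂)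
  have hεε : ε * ε = 1 := mul_self_eq_one_iff.mpr hε
  have hd' : d' * t ^ p = ε * d := by linear_combination -ε * hdt - d' * t ^ p * hεε
  have hc' : c' = ε * t ^ (p + 2) * c := by linear_combination -c' * hεε - ε * hct
  exact ⟨t, ht, ε, hε, eq_sign_mul_of_mul_eq_sign_mul had hd hεε hd',
    mul_eq_sign_mul_of_eq_sign_mul hcb hc hεε hc', hc', hd'⟩

theorem exists_twist_of_invariants_eq [IsAlgClosed K] {p : ℕ} (hp : p ≠ 0)
    {a b c d a' b' c' d' : K} (h : a * d - b * c = 1) (h' : a' * d' - b' * c' = 1)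
    (hX : b * c = b' * c') (hY₁ : a ^ (p + 2) * b ^ p = a' ^ (p + 2) * b' ^ p)
    (hY₂ : c ^ p * d ^ (p + 2) = c' ^ p * d' ^ (p + 2)) :
    ∃ t : K, t ≠ 0 ∧ ∃ ε : K, (ε = 1 ∨ ε = -1) ∧
      a' = ε * t ^ p * a ∧ b' * t ^ (p + 2) = ε * b ∧
      c' = ε * t ^ (p + 2) * c ∧ d' * t ^ p = ε * d := by
  have had : a * d = a' * d' := by linear_combination h - h' + hX
  have hcb : c * b = c' * b' := by linear_combination hX
  by_cases hab : a ≠ 0 ∧ b ≠ 0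
  · exact exists_twist_of_left_ne_zero hp had hcb hY₁ hab.1 hab.2
  by_cases hcd : c ≠ 0 ∧ d ≠ 0
  · exact exists_twist_of_right_ne_zero hp had hcb hY₂ hcd.1 hcd.2
  rw [not_and_or, not_ne_iff, not_ne_iff] at hab hcd
  rcases hab with ha | hb <;> rcases hcd with hc | hd
  · simp [ha, hc] at h
  · have hbc : b' * c' = -1 := by linear_combination -h' - had + d * ha
    have hb : b ≠ 0 := by rintro rfl; simp [ha] at h
    have hb' : b' ≠ 0 := by rintro rfl; simp at hbc
    have hc' : c' ≠ 0 := by rintro rfl; simp at hbc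
    have ha' : a' = 0 := by simpa [ha, hb'] using hY₁
    have hd' : d' = 0 := by simpa [hd, hc'] using hY₂
    obtain ⟨t, ht, htq⟩ := exists_ne_zero_pow_eq (p + 1).succ_ne_zero (div_ne_zero hb hb')
    have hb't : b' * t ^ (p + 2) = 1 * b := by rw [htq]; field_simp
    exact ⟨t, ht, 1, Or.inl rfl, by simp [ha, ha'], hb't,
      eq_sign_mul_of_mul_eq_sign_mul hcb hb (one_mul 1) hb't, by simp [hd, hd']⟩
  · have had1 : a' * d' = 1 := by linear_combination -had + h + c * hb
    have ha : a ≠ 0 := by rintro rfl; simp [hb] at h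
    have ha' : a' ≠ 0 := left_ne_zero_of_mul_eq_one had1
    have hd' : d' ≠ 0 := right_ne_zero_of_mul_eq_one had1
    have hb' : b' = 0 := by simpa [hb, ha', hp] using hY₁
    have hc' : c' = 0 := by simpa [hc, hd', hp] using hY₂
    obtain ⟨t, ht, htp⟩ := exists_ne_zero_pow_eq hp (div_ne_zero ha' ha)
    have ha't : a' = 1 * t ^ p * a := by rw [htp]; field_simp
    exact ⟨t, ht, 1, Or.inl rfl, ha't, by simp [hb, hb'], by simp [hc, hc'],
      mul_eq_sign_mul_of_eq_sign_mul had ha (one_mul 1) ha't⟩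
  · simp [hb, hd] at h

/-- Theorem 1.2 (injectivity): two normalized bicritical maps
`(a z^n + b)/(c z^n + d)` with `ad - bc = 1` have the same invariants
`X = bc`, `Y₁ = a^{n+1} b^{n-1}`, `Y₂ = c^{n-1} d^{n+1}` if and only if their
coefficients are related by the transformation
`(a,b,c,d) ↦ ±(t^{n-1} a, t^{-(n+1)} b, t^{n+1} c, t^{-(n-1)} d)`. -/
theorem stmt1 (n : ℕ) (hn : 2 ≤ n) (a b c d a' b' c' d' : ℂ)
    (h : a * d - b * c = 1) (h' : a' * d' - b' * c' = 1) :
    (b * c = b' * c' ∧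
      a ^ (n + 1) * b ^ (n - 1) = a' ^ (n + 1) * b' ^ (n - 1) ∧
      c ^ (n - 1) * d ^ (n + 1) = c' ^ (n - 1) * d' ^ (n + 1)) ↔
    (∃ t : ℂ, t ≠ 0 ∧ ∃ ε : ℂ, (ε = 1 ∨ ε = -1) ∧
      a' = ε * t ^ (n - 1) * a ∧ b' * t ^ (n + 1) = ε * b ∧
      c' = ε * t ^ (n + 1) * c ∧ d' * t ^ (n - 1) = ε * d) := by
  obtain ⟨p, rfl⟩ : ∃ p, n = p + 1 := ⟨n - 1, by omega⟩
  rw [Nat.add_sub_cancel]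
  constructor
  · rintro ⟨hX, hY₁, hY₂⟩
    exact exists_twist_of_invariants_eq (by omega) h h' hX hY₁ hY₂
  · rintro ⟨t, -, ε, hε, ha, hb, hc, hd⟩
    exact invariants_eq_of_twist p hε ha hb hc hd
end

section
/- Fix n ≥ 2. For any complex numbers X, Y₁, Y₂ satisfying the relation Y₁ Y₂ = X^{n−1} (X+1)^{n+1}, there exist a, b, c, d ∈ ℂ with ad − bc = 1, bc = X, a^{n+1} b^{n−1} = Y₁ and c^{n−1} d^{n+1} = Y₂ (and then necessarily ad = X + 1). (Theorem 1.2, surjectivity: every point of the affine variety Y₁Y₂ = X^{n−1}(X+1)^{n+1} is realized by a bicritical map of degree n in normal form.) -/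
/-!
Away from `Y₁ = 0` one can normalize `a = 1`: take `b` a `(n-1)`-st root of `Y₁`, `c = X / b` and
`d = X + 1`; the relation then forces `c^{n-1} d^{n+1} = Y₂`. If `Y₁ = 0`, the relation forces
`X = 0` or `X = -1`, and the maps `z ↦ zⁿ / (c zⁿ + 1)` resp. `z ↦ -1 / (zⁿ + d)` with `c`, `d`
suitable roots of `Y₂` do the job.
-/

namespace BicriticalNormalForm

variable {K : Type*} [Field K] [IsAlgClosed K] {k m : ℕ}

theorem exists_of_ne_zero (hk : k ≠ 0) {X Y₁ Y₂ : K} (hY₁ : Y₁ ≠ 0)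
    (hrel : Y₁ * Y₂ = X ^ k * (X + 1) ^ m) :
    ∃ a b c d : K, a * d - b * c = 1 ∧ b * c = X ∧ a ^ m * b ^ k = Y₁ ∧ c ^ k * d ^ m = Y₂ := by
  obtain ⟨b, hb⟩ := IsAlgClosed.exists_pow_nat_eq Y₁ (Nat.pos_of_ne_zero hk)
  have hb0 : b ≠ 0 := by rintro rfl; exact hY₁ (by rw [← hb, zero_pow hk])
  refine ⟨1, b, X / b, X + 1, by field_simp; ring, by field_simp, by rw [one_pow, one_mul, hb], ?_⟩
  rw [div_pow, hb, div_mul_eq_mul_div, ← hrel, mul_div_cancel_left₀ _ hY₁]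

theorem exists_of_eq_zero (hk : k ≠ 0) (Y₂ : K) :
    ∃ a b c d : K, a * d - b * c = 1 ∧ b * c = 0 ∧ a ^ m * b ^ k = 0 ∧ c ^ k * d ^ m = Y₂ := by
  obtain ⟨c, hc⟩ := IsAlgClosed.exists_pow_nat_eq Y₂ (Nat.pos_of_ne_zero hk)
  exact ⟨1, 0, c, 1, by ring, by ring, by simp [zero_pow hk], by simp [hc]⟩

theorem exists_of_eq_neg_one (hm : m ≠ 0) (Y₂ : K) :
    ∃ a b c d : K, a * d - b * c = 1 ∧ b * c = -1 ∧ a ^ m * b ^ k = 0 ∧ c ^ k * d ^ m = Y₂ := by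
  obtain ⟨d, hd⟩ := IsAlgClosed.exists_pow_nat_eq Y₂ (Nat.pos_of_ne_zero hm)
  exact ⟨0, -1, 1, d, by ring, by ring, by simp [zero_pow hm], by simp [hd]⟩

theorem exists_of_rel (hk : k ≠ 0) (hm : m ≠ 0) {X Y₁ Y₂ : K}
    (hrel : Y₁ * Y₂ = X ^ k * (X + 1) ^ m) :
    ∃ a b c d : K, a * d - b * c = 1 ∧ b * c = X ∧ a ^ m * b ^ k = Y₁ ∧ c ^ k * d ^ m = Y₂ := by
  rcases eq_or_ne Y₁ 0 with rfl | hY₁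
  · rw [zero_mul, eq_comm, mul_eq_zero, pow_eq_zero_iff hk, pow_eq_zero_iff hm,
      add_eq_zero_iff_eq_neg] at hrel
    rcases hrel with rfl | rfl
    · exact exists_of_eq_zero hk Y₂
    · exact exists_of_eq_neg_one hm Y₂
  · exact exists_of_ne_zero hk hY₁ hrel

end BicriticalNormalForm

/-- Theorem 1.2 (surjectivity): every point `(X, Y₁, Y₂)` of the affine variety
`Y₁ Y₂ = X^{n-1} (X+1)^{n+1}` is realized by a bicritical map of degree `n`
in normal form `(a z^n + b)/(c z^n + d)` with `ad - bc = 1`. -/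
theorem stmt2 (n : ℕ) (hn : 2 ≤ n) (X Y₁ Y₂ : ℂ)
    (hrel : Y₁ * Y₂ = X ^ (n - 1) * (X + 1) ^ (n + 1)) :
    ∃ a b c d : ℂ, a * d - b * c = 1 ∧ b * c = X ∧
      a ^ (n + 1) * b ^ (n - 1) = Y₁ ∧ c ^ (n - 1) * d ^ (n + 1) = Y₂ ∧
      a * d = X + 1 := by
  obtain ⟨a, b, c, d, hdet, hX, hY₁, hY₂⟩ :=
    BicriticalNormalForm.exists_of_rel (by omega) n.succ_ne_zero hrel
  exact ⟨a, b, c, d, hdet, hX, hY₁, hY₂, by linear_combination hdet + hX⟩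
end

section
/- Fix n ≥ 2. Let a, b, c, d and a′, b′, c′, d′ be complex numbers with ad − bc = 1 = a′d′ − b′c′. Then bc = b′c′ and a^{n+1}b^{n−1} + c^{n−1}d^{n+1} = a′^{n+1}b′^{n−1} + c′^{n−1}d′^{n+1} hold if and only if there exist t ∈ ℂ, t ≠ 0, and ε ∈ {1, −1} such that either (a′, b′t^{n+1}, c′, d′t^{n−1}) = (ε t^{n−1} a, ε b, ε t^{n+1} c, ε d) or (a′, b′t^{n+1}, c′, d′t^{n−1}) = (ε t^{n−1} d, ε c, ε t^{n+1} b, ε a). (Corollary 1.3: the second alternative corresponds to conjugating after interchanging the two critical points, via (a,b,c,d) ↦ (d,c,b,a); hence X = bc and Y = Y₁ + Y₂ form a complete set of invariants for unmarked bicritical maps, and the moduli space M_n is biholomorphic to ℂ².) -/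
/-!
Write `n = p + 1`, so that the invariants are `X = bc`, `Y₁ = a^{p+2} b^p`, `Y₂ = c^p d^{p+2}`.
Since `ad = 1 + X`, the product `Y₁ Y₂ = X^p (1 + X)^{p+2}` is determined by `X`; hence `X` and
`Y₁ + Y₂` determine the unordered pair `{Y₁, Y₂}`, and after possibly interchanging the critical
points (`(a,b,c,d) ↦ (d,c,b,a)`) we may assume that `X`, `Y₁`, `Y₂` agree individually. If `ab ≠ 0`
choose `t` with `t² a'b' = ab`; then `Y₁ = Y₁'` forces `a'² = (t^p a)²`, so `a' = ±t^p a`, and the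
remaining coefficients follow from `X = X'` and `ad = a'd'`. The case `cd ≠ 0` is the same after
interchanging the critical points; otherwise `b = c = 0` or `a = d = 0`, and a `p`-th root of
`a'/a`, resp. a `(p+2)`-th root of `c'/c`, gives `t`.
-/

section

variable {K : Type*} [Field K]

/-- Conjugation by `z ↦ t² z`, renormalized to determinant one (`ε = ±1` being the choice of
square root): with `n = p + 1` it is
`(a, b, c, d) ↦ ε (t^{n-1} a, t^{-(n+1)} b, t^{n+1} c, t^{-(n-1)} d)`, written without division. -/
def IsRescaling (p : ℕ) (t ε a b c d a' b' c' d' : K) : Prop :=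
  a' = ε * t ^ p * a ∧ b' * t ^ (p + 2) = ε * b ∧ c' = ε * t ^ (p + 2) * c ∧ d' * t ^ p = ε * d

namespace IsRescaling

variable {p : ℕ} {t ε a b c d a' b' c' d' : K}

theorem swap (ht : t ≠ 0) (h : IsRescaling p t ε a b c d a' b' c' d') :
    IsRescaling p t⁻¹ ε d c b a d' c' b' a' := by
  obtain ⟨ha, hb, hc, hd⟩ := h
  refine ⟨?_, ?_, ?_, ?_⟩ <;> rw [inv_pow] <;> field_simp
  · linear_combination hd
  · linear_combination hc
  · linear_combination hb
  · linear_combination ha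

theorem mul_eq_mul (ht : t ≠ 0) (hε : ε ^ 2 = 1) (h : IsRescaling p t ε a b c d a' b' c' d') :
    b * c = b' * c' := by
  obtain ⟨-, hb, hc, -⟩ := h
  apply mul_right_cancel₀ (pow_ne_zero (p + 2) ht)
  linear_combination -c' * hb - ε * b * hc - b * c * t ^ (p + 2) * hε

theorem pow_mul_pow_eq (ht : t ≠ 0) (hε : ε ^ 2 = 1) (h : IsRescaling p t ε a b c d a' b' c' d') :
    a ^ (p + 2) * b ^ p = a' ^ (p + 2) * b' ^ p := by
  obtain ⟨ha, hb, -, -⟩ := h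
  apply mul_right_cancel₀ (pow_ne_zero p (pow_ne_zero (p + 2) ht))
  have hε' : ε ^ (p + 2) * ε ^ p = 1 := by
    rw [← pow_add, show p + 2 + p = 2 * (p + 1) by ring, pow_mul, hε, one_pow]
  calc a ^ (p + 2) * b ^ p * (t ^ (p + 2)) ^ p
      = ε ^ (p + 2) * ε ^ p * a ^ (p + 2) * b ^ p * (t ^ (p + 2)) ^ p := by rw [hε', one_mul]
    _ = (ε * t ^ p * a) ^ (p + 2) * (ε * b) ^ p := by ring
    _ = a' ^ (p + 2) * (b' * t ^ (p + 2)) ^ p := by rw [ha, hb]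
    _ = a' ^ (p + 2) * b' ^ p * (t ^ (p + 2)) ^ p := by ring

theorem invariants_eq (ht : t ≠ 0) (hε : ε ^ 2 = 1) (h : IsRescaling p t ε a b c d a' b' c' d') :
    b * c = b' * c' ∧ a ^ (p + 2) * b ^ p = a' ^ (p + 2) * b' ^ p ∧
      c ^ p * d ^ (p + 2) = c' ^ p * d' ^ (p + 2) := by
  refine ⟨h.mul_eq_mul ht hε, h.pow_mul_pow_eq ht hε, ?_⟩
  linear_combination (h.swap ht).pow_mul_pow_eq (inv_ne_zero ht) hε

end IsRescaling

theorem det_eq_one_cases {a b c d : K} (h : a * d - b * c = 1) :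
    (a ≠ 0 ∧ b ≠ 0) ∨ (d ≠ 0 ∧ c ≠ 0) ∨ (b = 0 ∧ c = 0) ∨ (a = 0 ∧ d = 0) := by
  by_cases ha : a = 0 <;> by_cases hb : b = 0 <;> by_cases hc : c = 0 <;> by_cases hd : d = 0 <;>
    simp_all

theorem eq_and_eq_or_eq_and_eq_of_add_eq_add_of_mul_eq_mul {x y x' y' : K}
    (hadd : x + y = x' + y') (hmul : x * y = x' * y') : (x = x' ∧ y = y') ∨ (x = y' ∧ y = x') := by
  have : (x - x') * (x - y') = 0 := by linear_combination x * hadd - hmul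
  rcases mul_eq_zero.mp this with h | h
  · exact Or.inl ⟨by linear_combination h, by linear_combination hadd - h⟩
  · exact Or.inr ⟨by linear_combination h, by linear_combination hadd - h⟩

theorem exists_ne_zero_pow_mul_eq [IsAlgClosed K] {m : ℕ} (hm : m ≠ 0) {x y : K} (hx : x ≠ 0)
    (hy : y ≠ 0) : ∃ t ≠ 0, t ^ m * y = x := by
  obtain ⟨t, ht⟩ := IsAlgClosed.exists_pow_nat_eq (x / y) (Nat.pos_of_ne_zero hm)
  refine ⟨t, fun h0 => div_ne_zero hx hy ?_, by rw [ht, div_mul_cancel₀ x hy]⟩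
  rw [← ht, h0, zero_pow hm]

variable [IsAlgClosed K] {p : ℕ} {a b c d a' b' c' d' : K}

theorem exists_isRescaling_of_ne_zero (hp : p ≠ 0) (ha : a ≠ 0) (hb : b ≠ 0)
    (hX : b * c = b' * c') (had : a * d = a' * d')
    (hY₁ : a ^ (p + 2) * b ^ p = a' ^ (p + 2) * b' ^ p) :
    ∃ t ≠ 0, ∃ ε : K, ε ^ 2 = 1 ∧ IsRescaling p t ε a b c d a' b' c' d' := by
  obtain ⟨ha', hb'⟩ : a' ≠ 0 ∧ b' ≠ 0 := by
    have : a' ^ (p + 2) * b' ^ p ≠ 0 := hY₁ ▸ mul_ne_zero (pow_ne_zero _ ha) (pow_ne_zero _ hb)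
    simpa [hp] using this
  obtain ⟨t, ht, ht2⟩ := exists_ne_zero_pow_mul_eq two_ne_zero (mul_ne_zero ha hb)
    (mul_ne_zero ha' hb')
  have hsq : a' ^ 2 = (t ^ p * a) ^ 2 := by
    apply mul_right_cancel₀ (pow_ne_zero p (mul_ne_zero ha' hb'))
    calc a' ^ 2 * (a' * b') ^ p = a ^ 2 * (a * b) ^ p := by linear_combination -hY₁
      _ = (t ^ p * a) ^ 2 * (a' * b') ^ p := by rw [← ht2]; ring
  set ε := a' / (t ^ p * a)
  have htpa : t ^ p * a ≠ 0 := mul_ne_zero (pow_ne_zero p ht) ha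
  have hε : ε ^ 2 = 1 := by rw [div_pow, hsq, div_self (pow_ne_zero 2 htpa)]
  have h1 : a' = ε * t ^ p * a := by rw [mul_assoc, div_mul_cancel₀ a' htpa]
  have h2 : b' * t ^ (p + 2) = ε * b := mul_left_cancel₀ ha <| by
    linear_combination ε * ht2 - (ε * t ^ 2 * b') * h1 - (t ^ (p + 2) * a * b') * hε
  have h3 : c' = ε * t ^ (p + 2) * c := mul_left_cancel₀ hb' <| by
    linear_combination -hX - ε * c * h2 - b * c * hε
  have h4 : d' * t ^ p = ε * d := mul_left_cancel₀ ha <| by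
    linear_combination -ε * had - ε * d' * h1 - (t ^ p * a * d') * hε
  exact ⟨t, ht, ε, hε, h1, h2, h3, h4⟩

theorem exists_isRescaling_of_diagonal (hp : p ≠ 0) (hb : b = 0) (hc : c = 0)
    (h : a * d - b * c = 1) (h' : a' * d' - b' * c' = 1) (hX : b * c = b' * c')
    (hY₁ : a ^ (p + 2) * b ^ p = a' ^ (p + 2) * b' ^ p)
    (hY₂ : c ^ p * d ^ (p + 2) = c' ^ p * d' ^ (p + 2)) :
    ∃ t ≠ 0, ∃ ε : K, ε ^ 2 = 1 ∧ IsRescaling p t ε a b c d a' b' c' d' := by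
  subst hb hc
  have had : a * d = 1 := by linear_combination h
  have had' : a' * d' = 1 := by linear_combination h' - hX
  have ha : a ≠ 0 := left_ne_zero_of_mul_eq_one had
  have ha' : a' ≠ 0 := left_ne_zero_of_mul_eq_one had'
  have hd' : d' ≠ 0 := right_ne_zero_of_mul_eq_one had'
  have hb' : b' = 0 := by simpa [hp, ha'] using hY₁.symm
  have hc' : c' = 0 := by simpa [hp, hd'] using hY₂.symm
  obtain ⟨t, ht, hta⟩ := exists_ne_zero_pow_mul_eq hp ha' ha
  refine ⟨t, ht, 1, one_pow 2, by rw [one_mul, hta], by simp [hb'], by simp [hc'], ?_⟩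
  exact mul_left_cancel₀ ha (by linear_combination d' * hta + had' - had)

theorem exists_isRescaling_of_antidiagonal (hp : p ≠ 0) (ha : a = 0) (hd : d = 0)
    (h : a * d - b * c = 1) (hX : b * c = b' * c')
    (hY₁ : a ^ (p + 2) * b ^ p = a' ^ (p + 2) * b' ^ p)
    (hY₂ : c ^ p * d ^ (p + 2) = c' ^ p * d' ^ (p + 2)) :
    ∃ t ≠ 0, ∃ ε : K, ε ^ 2 = 1 ∧ IsRescaling p t ε a b c d a' b' c' d' := by
  subst ha hd
  have hbc : b * c = -1 := by linear_combination -h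
  have hbc' : b' * c' = -1 := by linear_combination hbc - hX
  have hc : c ≠ 0 := right_ne_zero_of_mul_eq_one (a := -b) (by linear_combination -hbc)
  have hb' : b' ≠ 0 := left_ne_zero_of_mul_eq_one (b := -c') (by linear_combination -hbc')
  have hc' : c' ≠ 0 := right_ne_zero_of_mul_eq_one (a := -b') (by linear_combination -hbc')
  have ha' : a' = 0 := by simpa [hp, hb'] using hY₁.symm
  have hd' : d' = 0 := by simpa [hp, hc'] using hY₂.symm
  obtain ⟨t, ht, htc⟩ := exists_ne_zero_pow_mul_eq (by omega : p + 2 ≠ 0) hc' hc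
  refine ⟨t, ht, 1, one_pow 2, by simp [ha'], ?_, by rw [one_mul, htc], by simp [hd']⟩
  exact mul_left_cancel₀ hc (by linear_combination b' * htc - hX)

theorem exists_isRescaling (hp : p ≠ 0) (h : a * d - b * c = 1) (h' : a' * d' - b' * c' = 1)
    (hX : b * c = b' * c') (hY₁ : a ^ (p + 2) * b ^ p = a' ^ (p + 2) * b' ^ p)
    (hY₂ : c ^ p * d ^ (p + 2) = c' ^ p * d' ^ (p + 2)) :
    ∃ t ≠ 0, ∃ ε : K, ε ^ 2 = 1 ∧ IsRescaling p t ε a b c d a' b' c' d' := by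
  have had : a * d = a' * d' := by linear_combination h - h' + hX
  rcases det_eq_one_cases h with ⟨ha, hb⟩ | ⟨hd, hc⟩ | ⟨hb, hc⟩ | ⟨ha, hd⟩
  · exact exists_isRescaling_of_ne_zero hp ha hb hX had hY₁
  · obtain ⟨t, ht, ε, hε, hr⟩ := exists_isRescaling_of_ne_zero (a := d) (b := c) (c := b) (d := a)
      (a' := d') (b' := c') (c' := b') (d' := a') hp hd hc (by linear_combination hX)
      (by linear_combination had) (by linear_combination hY₂)
    exact ⟨t⁻¹, inv_ne_zero ht, ε, hε, hr.swap ht⟩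
  · exact exists_isRescaling_of_diagonal hp hb hc h h' hX hY₁ hY₂
  · exact exists_isRescaling_of_antidiagonal hp ha hd h hX hY₁ hY₂

end

/-- Corollary 1.3: two normalized bicritical maps with `ad - bc = 1` have the
same unmarked invariants `X = bc` and `Y = Y₁ + Y₂` if and only if their
coefficient quadruples are related either by the rescaling transformation
`(a,b,c,d) ↦ ±(t^{n-1} a, t^{-(n+1)} b, t^{n+1} c, t^{-(n-1)} d)` or by this
transformation composed with the critical-point interchange
`(a,b,c,d) ↦ (d,c,b,a)`. -/
theorem stmt3 (n : ℕ) (hn : 2 ≤ n) (a b c d a' b' c' d' : ℂ)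
    (h : a * d - b * c = 1) (h' : a' * d' - b' * c' = 1) :
    (b * c = b' * c' ∧
      a ^ (n + 1) * b ^ (n - 1) + c ^ (n - 1) * d ^ (n + 1) =
        a' ^ (n + 1) * b' ^ (n - 1) + c' ^ (n - 1) * d' ^ (n + 1)) ↔
    (∃ t : ℂ, t ≠ 0 ∧ ∃ ε : ℂ, (ε = 1 ∨ ε = -1) ∧
      ((a' = ε * t ^ (n - 1) * a ∧ b' * t ^ (n + 1) = ε * b ∧
        c' = ε * t ^ (n + 1) * c ∧ d' * t ^ (n - 1) = ε * d) ∨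
       (a' = ε * t ^ (n - 1) * d ∧ b' * t ^ (n + 1) = ε * c ∧
        c' = ε * t ^ (n + 1) * b ∧ d' * t ^ (n - 1) = ε * a))) := by
  obtain ⟨p, rfl⟩ : ∃ p, n = p + 1 := ⟨n - 1, by omega⟩
  simp only [Nat.add_sub_cancel, show p + 1 + 1 = p + 2 from rfl]
  have hp : p ≠ 0 := by omega
  constructor
  · rintro ⟨hX, hY⟩
    have had : a * d = a' * d' := by linear_combination h - h' + hX
    have hprod : a ^ (p + 2) * b ^ p * (c ^ p * d ^ (p + 2)) =
        a' ^ (p + 2) * b' ^ p * (c' ^ p * d' ^ (p + 2)) := by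
      calc _ = (b * c) ^ p * (a * d) ^ (p + 2) := by ring
        _ = _ := by rw [hX, had]; ring
    rcases eq_and_eq_or_eq_and_eq_of_add_eq_add_of_mul_eq_mul hY hprod with
      ⟨hY₁, hY₂⟩ | ⟨hY₁, hY₂⟩
    · obtain ⟨t, ht, ε, hε, hr⟩ := exists_isRescaling hp h h' hX hY₁ hY₂
      exact ⟨t, ht, ε, sq_eq_one_iff.mp hε, Or.inl hr⟩
    · obtain ⟨t, ht, ε, hε, hr⟩ := exists_isRescaling (a := d) (b := c) (c := b) (d := a) hp
        (by linear_combination h) h' (by linear_combination hX) (by linear_combination hY₂)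
        (by linear_combination hY₁)
      exact ⟨t, ht, ε, sq_eq_one_iff.mp hε, Or.inr hr⟩
  · rintro ⟨t, ht, ε, hε, hr | hr⟩
    · obtain ⟨hX, hY₁, hY₂⟩ := IsRescaling.invariants_eq ht (sq_eq_one_iff.mpr hε) hr
      exact ⟨hX, by rw [hY₁, hY₂]⟩
    · obtain ⟨hX, hY₁, hY₂⟩ := IsRescaling.invariants_eq ht (sq_eq_one_iff.mpr hε) hr
      exact ⟨by linear_combination hX, by linear_combination hY₁ + hY₂⟩
end

section
/- Fix n ≥ 2 and let a, b, c, d ∈ ℂ with ad − bc = 1. There exists k ∈ ℂ with k ≠ 0 such that the polynomial identity (a k^n + b z^n)(a z^n + b) = k (c z^n + d)(c k^n + d z^n) holds for all z ∈ ℂ — this identity expresses that the map f(z) = (a z^n + b)/(c z^n + d) commutes with the Möbius involution ι(z) = k/z, i.e. f(k/z) = k/f(z) — if and only if a^{n+1} b^{n−1} = c^{n−1} d^{n+1}, that is Y₁ = Y₂. (Corollary 1.4: the symmetry locus of bicritical maps commuting with a nontrivial Möbius automorphism is the variety Y² = 4 X^{n−1}(X+1)^{n+1}.) -/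
/-!
Writing `w = z ^ n` and `K = k ^ n`, the identity is a quadratic polynomial in `w`, so it holds
identically iff `a b = k c d` and `a² K + b² = k (c² K + d²)`. When `c d ≠ 0`, the relation
`a d - b c = 1` turns the second condition into `K a c = b d`; raising the first to the `n`-th power
and eliminating `K` gives `(a b)ⁿ a c = (c d)ⁿ b d`, which is `Y₁ = Y₂` multiplied by `b c`.
Conversely `k = a b / (c d)` works. The degenerate maps with `b = 0` or `a = 0` are monomials
`α zⁿ` and `β z⁻ⁿ`; they commute with `z ↦ k / z` for a suitable root `k`, and for them both sides
of the equivalence amount to `c = 0`, respectively `d = 0`.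
-/

section Field

variable {F : Type*} [Field F] {n : ℕ} {a b c d k : F}

theorem forall_commute_iff (hn : n ≠ 0) (hk : k ≠ 0) :
    (∀ z : F, (a * k ^ n + b * z ^ n) * (a * z ^ n + b) =
        k * (c * z ^ n + d) * (c * k ^ n + d * z ^ n)) ↔
      a * b = k * (c * d) ∧ a ^ 2 * k ^ n + b ^ 2 = k * (c ^ 2 * k ^ n + d ^ 2) := by
  constructor
  · intro hid
    have h0 := hid 0
    have h1 := hid 1
    simp only [zero_pow hn, one_pow] at h0 h1
    have hab : a * b = k * (c * d) :=
      mul_right_cancel₀ (pow_ne_zero n hk) (by linear_combination h0)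
    exact ⟨hab, by linear_combination h1 - (1 + k ^ n) * hab⟩
  · rintro ⟨hab, hsq⟩ z
    linear_combination ((z ^ n) ^ 2 + k ^ n) * hab + z ^ n * hsq

theorem mul_sub_eq_of_mul_eq (h : a * d - b * c = 1) (hab : a * b = k * (c * d)) :
    c * d * (a ^ 2 * k ^ n + b ^ 2 - k * (c ^ 2 * k ^ n + d ^ 2)) = k ^ n * (a * c) - b * d := by
  linear_combination (a * c * k ^ n - b * d) * h + (c ^ 2 * k ^ n + d ^ 2) * hab

theorem sq_condition_iff (h : a * d - b * c = 1) (hcd : c * d ≠ 0) (hab : a * b = k * (c * d)) :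
    a ^ 2 * k ^ n + b ^ 2 = k * (c ^ 2 * k ^ n + d ^ 2) ↔ k ^ n * (a * c) = b * d := by
  rw [← sub_eq_zero, ← sub_eq_zero (a := k ^ n * _), ← mul_sub_eq_of_mul_eq h hab,
    mul_eq_zero, or_iff_right hcd]

theorem pow_succ_mul_pow_pred_eq_iff (hn : n ≠ 0) (hbc : b * c ≠ 0) :
    a ^ (n + 1) * b ^ (n - 1) = c ^ (n - 1) * d ^ (n + 1) ↔
      (a * b) ^ n * (a * c) = (c * d) ^ n * (b * d) := by
  obtain ⟨m, rfl⟩ : ∃ m, n = m + 1 := ⟨n - 1, by omega⟩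
  rw [Nat.add_sub_cancel, ← (mul_left_injective₀ hbc).eq_iff]
  constructor <;> intro H <;> linear_combination H

theorem exists_mul_eq_and_pow_mul_eq_iff (hab : a * b ≠ 0) (hcd : c * d ≠ 0) :
    (∃ k ≠ 0, a * b = k * (c * d) ∧ k ^ n * (a * c) = b * d) ↔
      (a * b) ^ n * (a * c) = (c * d) ^ n * (b * d) := by
  constructor
  · rintro ⟨k, -, hk1, hk2⟩
    rw [hk1, mul_pow]
    linear_combination (c * d) ^ n * hk2
  · intro H
    refine ⟨a * b / (c * d), div_ne_zero hab hcd, (div_mul_cancel₀ _ hcd).symm, ?_⟩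
    rw [div_pow, div_mul_eq_mul_div, div_eq_iff (pow_ne_zero n hcd), H, mul_comm]

theorem exists_commute_conditions_iff_of_mul_ne_zero (hn : 2 ≤ n) (h : a * d - b * c = 1)
    (hab : a * b ≠ 0) :
    (∃ k ≠ 0, a * b = k * (c * d) ∧ a ^ 2 * k ^ n + b ^ 2 = k * (c ^ 2 * k ^ n + d ^ 2)) ↔
      a ^ (n + 1) * b ^ (n - 1) = c ^ (n - 1) * d ^ (n + 1) := by
  obtain ⟨ha, hb⟩ := mul_ne_zero_iff.mp hab
  by_cases hcd : c * d = 0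
  · have hY₂ : c ^ (n - 1) * d ^ (n + 1) = 0 := by
      rcases mul_eq_zero.mp hcd with hc | hd
      · simp [hc, zero_pow (by omega : n - 1 ≠ 0)]
      · simp [hd]
    simp only [hcd, mul_zero, hab, false_and, and_false, exists_false, hY₂, false_iff]
    exact mul_ne_zero (pow_ne_zero _ ha) (pow_ne_zero _ hb)
  · rw [pow_succ_mul_pow_pred_eq_iff (by omega) (mul_ne_zero hb (left_ne_zero_of_mul hcd)),
      ← exists_mul_eq_and_pow_mul_eq_iff hab hcd]
    exact exists_congr fun k => and_congr_right fun _ =>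
      and_congr_right fun hk => sq_condition_iff h hcd hk

theorem exists_ne_zero_mul_pow_eq [IsAlgClosed F] {m : ℕ} (hm : m ≠ 0) {u v : F} (hu : u ≠ 0)
    (hv : v ≠ 0) : ∃ k ≠ 0, u * k ^ m = v := by
  obtain ⟨k, hk⟩ := IsAlgClosed.exists_pow_nat_eq (v / u) (Nat.pos_of_ne_zero hm)
  refine ⟨k, ?_, by rw [hk, mul_div_cancel₀ _ hu]⟩
  rintro rfl
  exact div_ne_zero hv hu (by rw [← hk, zero_pow hm])

theorem exists_commute_conditions_iff_of_right_eq_zero [IsAlgClosed F] (hn : 2 ≤ n)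
    (h : a * d - 0 * c = 1) :
    (∃ k ≠ 0, a * 0 = k * (c * d) ∧ a ^ 2 * k ^ n + 0 ^ 2 = k * (c ^ 2 * k ^ n + d ^ 2)) ↔
      a ^ (n + 1) * 0 ^ (n - 1) = c ^ (n - 1) * d ^ (n + 1) := by
  have had : a * d = 1 := by linear_combination h
  have ha := left_ne_zero_of_mul_eq_one had
  have hd := right_ne_zero_of_mul_eq_one had
  have hY : a ^ (n + 1) * 0 ^ (n - 1) = c ^ (n - 1) * d ^ (n + 1) ↔ c = 0 := by
    have : n - 1 ≠ 0 := by omega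
    simp [zero_pow this, eq_comm (a := (0 : F)), hd, this]
  rw [hY]
  constructor
  · rintro ⟨k, hk, hcd, -⟩
    simpa [hk, hd] using hcd.symm
  · rintro rfl
    obtain ⟨k, hk, hkn⟩ := exists_ne_zero_mul_pow_eq (by omega : n - 1 ≠ 0)
      (pow_ne_zero 2 ha) (pow_ne_zero 2 hd)
    refine ⟨k, hk, by ring, ?_⟩
    rw [← Nat.sub_add_cancel (by omega : 1 ≤ n)]
    linear_combination k * hkn

theorem exists_commute_conditions_iff_of_left_eq_zero [IsAlgClosed F] (h : 0 * d - b * c = 1) :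
    (∃ k ≠ 0, 0 * b = k * (c * d) ∧ 0 ^ 2 * k ^ n + b ^ 2 = k * (c ^ 2 * k ^ n + d ^ 2)) ↔
      0 ^ (n + 1) * b ^ (n - 1) = c ^ (n - 1) * d ^ (n + 1) := by
  have hbc : b * c = -1 := by linear_combination -h
  have hbc₀ : b * c ≠ 0 := by simp [hbc]
  have hb := left_ne_zero_of_mul hbc₀
  have hc := right_ne_zero_of_mul hbc₀
  have hY : 0 ^ (n + 1) * b ^ (n - 1) = c ^ (n - 1) * d ^ (n + 1) ↔ d = 0 := by
    simp [eq_comm (a := (0 : F)), hc]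
  rw [hY]
  constructor
  · rintro ⟨k, hk, hcd, -⟩
    simpa [hk, hc] using hcd.symm
  · rintro rfl
    obtain ⟨k, hk, hkn⟩ := exists_ne_zero_mul_pow_eq (by omega : n + 1 ≠ 0)
      (pow_ne_zero 2 hc) (pow_ne_zero 2 hb)
    refine ⟨k, hk, by ring, ?_⟩
    linear_combination -hkn

end Field

/-- Corollary 1.4: a normalized bicritical map `f(z) = (a z^n + b)/(c z^n + d)`
with `ad - bc = 1` commutes with some Möbius involution `ι(z) = k/z`
(expressed by the polynomial identity
`(a k^n + b z^n)(a z^n + b) = k (c z^n + d)(c k^n + d z^n)`, i.e.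
`f(k/z) = k/f(z)`) if and only if `Y₁ = Y₂`, that is
`a^{n+1} b^{n-1} = c^{n-1} d^{n+1}`. -/
theorem stmt4 (n : ℕ) (hn : 2 ≤ n) (a b c d : ℂ) (h : a * d - b * c = 1) :
    (∃ k : ℂ, k ≠ 0 ∧ ∀ z : ℂ,
        (a * k ^ n + b * z ^ n) * (a * z ^ n + b) =
          k * (c * z ^ n + d) * (c * k ^ n + d * z ^ n)) ↔
    a ^ (n + 1) * b ^ (n - 1) = c ^ (n - 1) * d ^ (n + 1) := by
  rw [exists_congr fun k => and_congr_right fun hk => forall_commute_iff (by omega) hk]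
  rcases eq_or_ne b 0 with rfl | hb
  · exact exists_commute_conditions_iff_of_right_eq_zero hn h
  rcases eq_or_ne a 0 with rfl | ha
  · exact exists_commute_conditions_iff_of_left_eq_zero h
  exact exists_commute_conditions_iff_of_mul_ne_zero hn h (mul_ne_zero ha hb)
end

section
/- Let n ≥ 3 be odd and let a, b ∈ ℂ with a² ≠ b². Consider the symmetric bicritical map f(z) = −(a z^n + b)/(b z^n + a), which commutes with the involution ι(z) = 1/z. Then f(1) = −1 and f(−1) = 1, so {1, −1} is a period-two orbit of f, and the multiplier of this orbit is f′(1) · f′(−1) = n². (Remark 1.5, component Σ₋ of the symmetry locus: the two fixed points of ι form a period-two orbit of f with multiplier n², so Σ₋ is contained in the curve Per₂(n²).) -/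
/-! Since `n` is odd, `(-1)^n = -1`, so `f` swaps `1` and `-1`, and `n - 1` is even, so
`f'(±1) = -n (a² - b²) / (a ± b)²`. As `(a + b)(a - b) = a² - b² ≠ 0`, the product of the two
multipliers is `n²`. -/

theorem hasDerivAt_moebius_comp_pow {𝕜 : Type*} [NontriviallyNormedField 𝕜] (n : ℕ)
    (a b c d z : 𝕜) (hz : c * z ^ n + d ≠ 0) :
    HasDerivAt (fun x => (a * x ^ n + b) / (c * x ^ n + d))
      (n * z ^ (n - 1) * (a * d - b * c) / (c * z ^ n + d) ^ 2) z := by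
  have hnum := ((hasDerivAt_pow n z).const_mul a).add_const b
  have hden := ((hasDerivAt_pow n z).const_mul c).add_const d
  exact (hnum.div hden hz).congr_deriv (by ring)

theorem stmt6_general (n : ℕ) (hodd : Odd n) (a b : ℂ)
    (hab : a ^ 2 ≠ b ^ 2) :
    let f : ℂ → ℂ := fun z => -((a * z ^ n + b) / (b * z ^ n + a))
    f 1 = -1 ∧ f (-1) = 1 ∧ deriv f 1 * deriv f (-1) = (n : ℂ) ^ 2 := by
  intro f
  have hplus : b + a ≠ 0 := fun h => hab (by linear_combination (a - b) * h)
  have hminus : -b + a ≠ 0 := fun h => hab (by linear_combination (a + b) * h)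
  have hpow : (-1 : ℂ) ^ n = -1 := hodd.neg_one_pow
  have hpow' : (-1 : ℂ) ^ (n - 1) = 1 := (Nat.Odd.sub_odd hodd odd_one).neg_one_pow
  have hderiv (z : ℂ) (hz : b * z ^ n + a ≠ 0) :
      deriv f z = -(n * z ^ (n - 1) * (a * a - b * b) / (b * z ^ n + a) ^ 2) :=
    (hasDerivAt_moebius_comp_pow n a b b a z hz).neg.deriv
  refine ⟨?_, ?_, ?_⟩
  · simp only [f, one_pow, mul_one, add_comm b a]
    rw [div_self (by rwa [add_comm] at hplus)]
  · simp only [f, hpow, mul_neg_one]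
    field_simp [hminus]
    ring
  · rw [hderiv 1 (by simpa using hplus), hderiv (-1) (by simpa [hpow] using hminus), hpow, hpow']
    simp only [one_pow, mul_one, mul_neg_one]
    field_simp [hplus, hminus]
    ring

/-- Remark 1.5, component `Σ₋` of the symmetry locus: for odd `n ≥ 3` the
symmetric bicritical map `f(z) = -(a z^n + b)/(b z^n + a)` interchanges the
two fixed points `±1` of the involution `ι(z) = 1/z`, so `{1, -1}` is a
period-two orbit of `f`, and its multiplier is `f'(1) · f'(-1) = n²`. -/
theorem stmt6 (n : ℕ) (hn : 3 ≤ n) (hodd : Odd n) (a b : ℂ)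
    (hab : a ^ 2 ≠ b ^ 2) :
    let f : ℂ → ℂ := fun z => -((a * z ^ n + b) / (b * z ^ n + a))
    f 1 = -1 ∧ f (-1) = 1 ∧ deriv f 1 * deriv f (-1) = (n : ℂ) ^ 2 :=
  stmt6_general n hodd a b hab
end

section
/- Fix n ≥ 2 and a, b, c, d ∈ ℂ with ad − bc ≠ 0, and let φ(z) = (α z + β)/(γ z + δ) be a Möbius transformation (α δ − β γ ≠ 0). The conjugate map g = φ ∘ f ∘ φ⁻¹ of f(z) = (a z^n + b)/(c z^n + d) has critical points c₁ = φ(∞), c₂ = φ(0) and critical values v₁ = φ(a/c), v₂ = φ(b/d). Assume c ≠ 0, d ≠ 0, γ ≠ 0, δ ≠ 0, γ a + δ c ≠ 0 and γ b + δ d ≠ 0, so that c₁ = α/γ, c₂ = β/δ, v₁ = (α a + β c)/(γ a + δ c) and v₂ = (α b + β d)/(γ b + δ d) are all finite. Then c₁ ≠ c₂, v₁ ≠ v₂, and ((c₁ − v₁)(c₂ − v₂))/((c₁ − c₂)(v₁ − v₂)) = −bc/(ad − bc). (Lemma 1.7: the invariant X equals the negative of the cross-ratio of the critical points and critical values.)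 -/
/-!
In homogeneous coordinates a Möbius map satisfies
`φ[p:q] - φ[r:s] = (αδ - βγ)(ps - qr) / ((γp + δq)(γr + δs))`.
In a cross-ratio the factor `αδ - βγ` and the denominators cancel, so the cross-ratio of the
images is that of the determinants `ps - qr` of the preimages `∞ = [1:0]`, `0 = [0:1]`,
`a/c = [a:c]` and `b/d = [b:d]`, which is `-bc/(ad - bc)`.
-/

section Mobius

variable {K : Type*} [Field K] (α β γ δ : K)

/-- The Möbius map `z ↦ (αz + β)/(γz + δ)` evaluated at the point `[p:q]` of `ℙ¹`. -/
def mobiusHom (p q : K) : K := (α * p + β * q) / (γ * p + δ * q)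

variable {α β γ δ}

theorem mobiusHom_sub_mobiusHom {p q r s : K} (hpq : γ * p + δ * q ≠ 0)
    (hrs : γ * r + δ * s ≠ 0) :
    mobiusHom α β γ δ p q - mobiusHom α β γ δ r s =
      (α * δ - β * γ) * (p * s - q * r) / ((γ * p + δ * q) * (γ * r + δ * s)) := by
  rw [mobiusHom, mobiusHom, div_sub_div _ _ hpq hrs]
  ring

theorem mobiusHom_ne_mobiusHom {p q r s : K} (hdet : α * δ - β * γ ≠ 0)
    (hpq : γ * p + δ * q ≠ 0) (hrs : γ * r + δ * s ≠ 0) (hne : p * s - q * r ≠ 0) :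
    mobiusHom α β γ δ p q ≠ mobiusHom α β γ δ r s := by
  rw [← sub_ne_zero, mobiusHom_sub_mobiusHom hpq hrs]
  exact div_ne_zero (mul_ne_zero hdet hne) (mul_ne_zero hpq hrs)

theorem mobiusHom_crossRatio {p₁ q₁ p₂ q₂ p₃ q₃ p₄ q₄ : K} (hdet : α * δ - β * γ ≠ 0)
    (h₁ : γ * p₁ + δ * q₁ ≠ 0) (h₂ : γ * p₂ + δ * q₂ ≠ 0)
    (h₃ : γ * p₃ + δ * q₃ ≠ 0) (h₄ : γ * p₄ + δ * q₄ ≠ 0) :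
    (mobiusHom α β γ δ p₁ q₁ - mobiusHom α β γ δ p₃ q₃) *
        (mobiusHom α β γ δ p₂ q₂ - mobiusHom α β γ δ p₄ q₄) /
      ((mobiusHom α β γ δ p₁ q₁ - mobiusHom α β γ δ p₂ q₂) *
        (mobiusHom α β γ δ p₃ q₃ - mobiusHom α β γ δ p₄ q₄)) =
      (p₁ * q₃ - q₁ * p₃) * (p₂ * q₄ - q₂ * p₄) /
        ((p₁ * q₂ - q₁ * p₂) * (p₃ * q₄ - q₃ * p₄)) := by
  rw [mobiusHom_sub_mobiusHom h₁ h₃, mobiusHom_sub_mobiusHom h₂ h₄, mobiusHom_sub_mobiusHom h₁ h₂,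
    mobiusHom_sub_mobiusHom h₃ h₄]
  set e := (γ * p₁ + δ * q₁) * (γ * p₂ + δ * q₂) * (γ * p₃ + δ * q₃) * (γ * p₄ + δ * q₄)
  have he : e ≠ 0 := mul_ne_zero (mul_ne_zero (mul_ne_zero h₁ h₂) h₃) h₄
  calc _ = (α * δ - β * γ) ^ 2 * ((p₁ * q₃ - q₁ * p₃) * (p₂ * q₄ - q₂ * p₄)) / e /
          ((α * δ - β * γ) ^ 2 * ((p₁ * q₂ - q₁ * p₂) * (p₃ * q₄ - q₃ * p₄)) / e) := by
        rw [div_mul_div_comm, div_mul_div_comm]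
        congr 1 <;> congr 1 <;> ring
    _ = _ := by rw [div_div_div_cancel_right₀ he, mul_div_mul_left _ _ (pow_ne_zero 2 hdet)]

end Mobius

theorem stmt8_general (a b c d α β γ δ : ℂ)
    (hf : a * d - b * c ≠ 0) (hmob : α * δ - β * γ ≠ 0)
    (hγ : γ ≠ 0) (hδ : δ ≠ 0)
    (h1 : γ * a + δ * c ≠ 0) (h2 : γ * b + δ * d ≠ 0) :
    let c₁ : ℂ := α / γ
    let c₂ : ℂ := β / δ
    let v₁ : ℂ := (α * a + β * c) / (γ * a + δ * c)
    let v₂ : ℂ := (α * b + β * d) / (γ * b + δ * d)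
    c₁ ≠ c₂ ∧ v₁ ≠ v₂ ∧
      (c₁ - v₁) * (c₂ - v₂) / ((c₁ - c₂) * (v₁ - v₂)) =
        -(b * c) / (a * d - b * c) := by
  intro c₁ c₂ v₁ v₂
  have hc₁ : c₁ = mobiusHom α β γ δ 1 0 := by simp [c₁, mobiusHom]
  have hc₂ : c₂ = mobiusHom α β γ δ 0 1 := by simp [c₂, mobiusHom]
  have hv₁ : v₁ = mobiusHom α β γ δ a c := rfl
  have hv₂ : v₂ = mobiusHom α β γ δ b d := rfl
  have hγ' : γ * 1 + δ * 0 ≠ 0 := by simpa using hγ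
  have hδ' : γ * 0 + δ * 1 ≠ 0 := by simpa using hδ
  rw [hc₁, hc₂, hv₁, hv₂, mobiusHom_crossRatio hmob hγ' hδ' h1 h2]
  refine ⟨mobiusHom_ne_mobiusHom hmob hγ' hδ' (by norm_num),
    mobiusHom_ne_mobiusHom hmob h1 h2 (by rwa [mul_comm c b]), by ring⟩

/-- Lemma 1.7: for a bicritical map `f(z) = (a z^n + b)/(c z^n + d)` conjugated
by a Möbius map `φ(z) = (α z + β)/(γ z + δ)`, the critical points
`c₁ = φ(∞) = α/γ`, `c₂ = φ(0) = β/δ` and critical values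
`v₁ = φ(a/c)`, `v₂ = φ(b/d)` of the conjugate map satisfy `c₁ ≠ c₂`,
`v₁ ≠ v₂`, and the cross-ratio identity
`(c₁ - v₁)(c₂ - v₂) / ((c₁ - c₂)(v₁ - v₂)) = -bc/(ad - bc)`,
i.e. the invariant `X` is the negative of this cross-ratio. -/
theorem stmt8 (n : ℕ) (hn : 2 ≤ n) (a b c d α β γ δ : ℂ)
    (hf : a * d - b * c ≠ 0) (hmob : α * δ - β * γ ≠ 0)
    (hc : c ≠ 0) (hd : d ≠ 0) (hγ : γ ≠ 0) (hδ : δ ≠ 0)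
    (h1 : γ * a + δ * c ≠ 0) (h2 : γ * b + δ * d ≠ 0) :
    let c₁ : ℂ := α / γ
    let c₂ : ℂ := β / δ
    let v₁ : ℂ := (α * a + β * c) / (γ * a + δ * c)
    let v₂ : ℂ := (α * b + β * d) / (γ * b + δ * d)
    c₁ ≠ c₂ ∧ v₁ ≠ v₂ ∧
      (c₁ - v₁) * (c₂ - v₂) / ((c₁ - c₂) * (v₁ - v₂)) =
        -(b * c) / (a * d - b * c) :=
  stmt8_general a b c d α β γ δ hf hmob hγ hδ h1 h2
end

section
/- For each n ≥ 2 there exist polynomials P₀, P₁, …, P_{n+1} ∈ ℤ[X] with deg P_k ≤ k for every k, such that the following identity holds: for all a, b, c, d ∈ ℂ with ad − bc = 1 and a + b = c + d ≠ 0 (so that f(z) = (a z^n + b)/(c z^n + d) has a fixed point at z = 1), setting μ = 1/(c+d)² (so the multiplier of f at 1 is λ = n μ), X = bc and Y = a^{n+1} b^{n−1} + c^{n−1} d^{n+1}, one has μ·Y = Σ_{k=0}^{n+1} (−μ)^{n+1−k} P_k(X), i.e. μY = P_{n+1}(X) − μ P_n(X) + μ² P_{n−1}(X) − ⋯ + (−μ)^n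 P₁(X) + (−μ)^{n+1} P₀(X). (Theorem 2.3; in particular, for a bicritical map with a fixed point of multiplier λ, the product λ^n Y is a polynomial function of X and λ with integer coefficients, as in Lemma 2.1.) -/
/-!
Put `v = 1/(c+d)` and `μ = v²`. The fixed-point conditions give `a - c = d - b = v`, so `α = av`
and `δ = dv` satisfy `α + δ = 1 + μ` and `αδ = μ(X+1)`, while `ab = X + 1 - α` and
`cd = X + 1 - δ`; hence `μY = α²(X+1-α)^{n-1} + δ²(X+1-δ)^{n-1}`. Expanding binomially and writing
the power sums `α^k + δ^k` as polynomials in `α + δ` and `αδ` (a Lucas sequence) turns `μY` into an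
integer polynomial `F(X, μ)`. Since `α + δ` has total degree `1` and `αδ` total degree `2`, `F` has
total degree at most `n + 1`, which is exactly the bound `deg P_k ≤ k` for the coefficient
`P_k` of `(-μ)^{n+1-k}`.
-/

open Polynomial Finset

section LucasV

variable {R S : Type*} [CommRing R] [CommRing S]

def lucasV (P Q : R) : ℕ → R
  | 0 => 2
  | 1 => P
  | m + 2 => P * lucasV P Q (m + 1) - Q * lucasV P Q m

theorem map_lucasV (f : R →+* S) (P Q : R) :
    ∀ m, f (lucasV P Q m) = lucasV (f P) (f Q) m
  | 0 => map_ofNat f 2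
  | 1 => rfl
  | m + 2 => by
    simp only [lucasV, map_sub, map_mul, map_lucasV f P Q m, map_lucasV f P Q (m + 1)]

theorem lucasV_add_mul (α δ : R) : ∀ m, lucasV (α + δ) (α * δ) m = α ^ m + δ ^ m
  | 0 => by norm_num [lucasV]
  | 1 => by simp only [lucasV, pow_one]
  | m + 2 => by
    rw [lucasV, lucasV_add_mul α δ m, lucasV_add_mul α δ (m + 1)]
    ring

end LucasV

namespace Polynomial

section Semiring

variable {R : Type*} [Semiring R]

/-- `p ∈ R[X][Y]` has total degree at most `N`: every monomial `X^i Y^j` of `p` has `i + j ≤ N`. -/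
def TotalDegreeLE (N : ℕ) (p : R[X][X]) : Prop :=
  ∀ i j, (p.coeff j).coeff i ≠ 0 → i + j ≤ N

namespace TotalDegreeLE

variable {N M : ℕ} {p q : R[X][X]}

theorem mono (hp : TotalDegreeLE N p) (h : N ≤ M) : TotalDegreeLE M p :=
  fun i j hij => (hp i j hij).trans h

theorem zero : TotalDegreeLE N (0 : R[X][X]) := fun i j h => by simp at h

theorem add (hp : TotalDegreeLE N p) (hq : TotalDegreeLE N q) : TotalDegreeLE N (p + q) := by
  intro i j h
  rw [coeff_add, coeff_add] at h
  by_cases hpij : (p.coeff j).coeff i = 0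
  · exact hq i j (by simpa [hpij] using h)
  · exact hp i j hpij

theorem mul (hp : TotalDegreeLE N p) (hq : TotalDegreeLE M q) :
    TotalDegreeLE (N + M) (p * q) := by
  intro i j h
  rw [coeff_mul, finsetSum_coeff] at h
  obtain ⟨⟨j₁, j₂⟩, hj, h⟩ := exists_ne_zero_of_sum_ne_zero h
  rw [coeff_mul] at h
  obtain ⟨⟨i₁, i₂⟩, hi, h⟩ := exists_ne_zero_of_sum_ne_zero h
  rw [HasAntidiagonal.mem_antidiagonal] at hi hj
  have := hp i₁ j₁ (left_ne_zero_of_mul h)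
  have := hq i₂ j₂ (right_ne_zero_of_mul h)
  omega

theorem smul {S : Type*} [SMulZeroClass S R] (r : S) (hp : TotalDegreeLE N p) :
    TotalDegreeLE N (r • p) := by
  intro i j h
  rw [coeff_smul, coeff_smul] at h
  exact hp i j (right_ne_zero_of_smul h)

theorem sum {ι : Type*} (s : Finset ι) {f : ι → R[X][X]} (hf : ∀ k ∈ s, TotalDegreeLE N (f k)) :
    TotalDegreeLE N (∑ k ∈ s, f k) :=
  Finset.sum_induction f (TotalDegreeLE N) (fun _ _ => add) zero hf

theorem natDegree_le (hp : TotalDegreeLE N p) : p.natDegree ≤ N := by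
  refine natDegree_le_iff_coeff_eq_zero.mpr fun j hj => ext fun i => ?_
  by_contra h
  have := hp i j h
  omega

theorem natDegree_coeff_le (hp : TotalDegreeLE N p) (j : ℕ) : (p.coeff j).natDegree ≤ N - j := by
  refine natDegree_le_iff_coeff_eq_zero.mpr fun i hi => ?_
  by_contra h
  have := hp i j h
  omega

end TotalDegreeLE

theorem totalDegreeLE_C {N : ℕ} {a : R[X]} (ha : a.natDegree ≤ N) : TotalDegreeLE N (C a) := by
  intro i j h
  rw [coeff_C] at h
  split_ifs at h with hj
  · have := le_natDegree_of_ne_zero h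
    omega
  · simp at h

theorem totalDegreeLE_X : TotalDegreeLE 1 (X : R[X][X]) := by
  intro i j h
  rw [coeff_X] at h
  split_ifs at h with hj
  · rw [coeff_one] at h
    split_ifs at h with hi
    · omega
    · simp at h
  · simp at h

end Semiring

section Ring

variable {R : Type*} [Ring R]

noncomputable def alternatingCoeff (N : ℕ) (p : R[X][X]) (k : ℕ) : R[X] :=
  (-1) ^ (N - k) * p.coeff (N - k)

namespace TotalDegreeLE

variable {N : ℕ} {p q : R[X][X]}

theorem neg (hp : TotalDegreeLE N p) : TotalDegreeLE N (-p) := fun i j h =>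
  hp i j (by simpa using h)

theorem sub (hp : TotalDegreeLE N p) (hq : TotalDegreeLE N q) : TotalDegreeLE N (p - q) :=
  sub_eq_add_neg p q ▸ hp.add hq.neg

theorem natDegree_alternatingCoeff_le {k : ℕ} (hp : TotalDegreeLE N p) (hk : k ≤ N) :
    (alternatingCoeff N p k).natDegree ≤ k := by
  have := hp.natDegree_coeff_le (N - k)
  have hsign : ((-1 : R[X]) ^ (N - k)).natDegree = 0 := by
    rw [← C_1, ← C_neg, ← C_pow, natDegree_C]
  refine natDegree_mul_le.trans ?_
  omega

end TotalDegreeLE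

end Ring

section CommRing

variable {R : Type*} [CommRing R]

theorem totalDegreeLE_lucasV {P Q : R[X][X]} (hP : TotalDegreeLE 1 P) (hQ : TotalDegreeLE 2 Q) :
    ∀ m, TotalDegreeLE m (lucasV P Q m)
  | 0 => totalDegreeLE_C (a := 2) (by simp)
  | 1 => hP
  | m + 2 =>
    ((hP.mul (totalDegreeLE_lucasV hP hQ (m + 1))).mono (by omega)).sub
      ((hQ.mul (totalDegreeLE_lucasV hP hQ m)).mono (by omega))

namespace TotalDegreeLE

variable {N : ℕ} {p : R[X][X]}

theorem eval₂_eq_sum_alternatingCoeff {S : Type*} [CommRing S] [Algebra R S]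
    (hp : TotalDegreeLE N p) (x μ : S) :
    p.eval₂ (aeval x).toRingHom μ =
      ∑ k ∈ range (N + 1), (-μ) ^ (N - k) * aeval x (alternatingCoeff N p k) := by
  rw [eval₂_eq_sum_range' _ (Nat.lt_succ_of_le hp.natDegree_le), ← sum_range_reflect]
  refine sum_congr rfl fun k _ => ?_
  have hsign : ((-1 : S) ^ (N - k)) * (-1) ^ (N - k) = 1 := by rw [← mul_pow]; norm_num
  rw [Nat.succ_sub_one, alternatingCoeff, map_mul, map_pow, map_neg, map_one, neg_pow,
    AlgHom.toRingHom_eq_coe, RingHom.coe_coe]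
  linear_combination (-(μ ^ (N - k) * aeval x (p.coeff (N - k)))) * hsign

end TotalDegreeLE

end CommRing

end Polynomial

theorem sq_mul_sub_pow {R : Type*} [CommRing R] (s α : R) (m : ℕ) :
    α ^ 2 * (s - α) ^ m =
      ∑ j ∈ range (m + 1), ((-1) ^ (j + m) * m.choose j : ℤ) • (s ^ j * α ^ (m - j + 2)) := by
  rw [sub_pow, mul_sum]
  refine sum_congr rfl fun j _ => ?_
  rw [zsmul_eq_mul, pow_add]
  push_cast
  ring

/-- The polynomial `α²(X+1-α)^m + δ²(X+1-δ)^m`, expanded binomially, where `α, δ` are the roots of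
`T² - (1 + μ)T + μ(X + 1)`; the outer variable is `μ`. -/
noncomputable def bicriticalPoly (m : ℕ) : ℤ[X][X] :=
  ∑ j ∈ range (m + 1), ((-1) ^ (j + m) * m.choose j : ℤ) •
    (C ((X + 1) ^ j) * lucasV (1 + X) (C (X + 1) * X : ℤ[X][X]) (m - j + 2))

theorem totalDegreeLE_bicriticalPoly (m : ℕ) : TotalDegreeLE (m + 2) (bicriticalPoly m) := by
  unfold bicriticalPoly
  refine TotalDegreeLE.sum (range (m + 1)) fun j hj => TotalDegreeLE.smul _ ?_
  have hX1 : (X + 1 : ℤ[X]).natDegree ≤ 1 := natDegree_add_le_of_degree_le (by simp) (by simp)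
  have hP : TotalDegreeLE 1 (1 + X : ℤ[X][X]) :=
    (totalDegreeLE_C (a := 1) (by simp)).add totalDegreeLE_X
  have hQ : TotalDegreeLE 2 (C (X + 1) * X : ℤ[X][X]) := (totalDegreeLE_C hX1).mul totalDegreeLE_X
  have := mem_range.mp hj
  exact ((totalDegreeLE_C (natDegree_pow_le_of_le j hX1)).mul
    (totalDegreeLE_lucasV hP hQ _)).mono (by omega)

theorem eval₂_bicriticalPoly {S : Type*} [CommRing S] {x μ α δ : S} (hsum : α + δ = 1 + μ)
    (hprod : α * δ = (x + 1) * μ) (m : ℕ) :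
    (bicriticalPoly m).eval₂ (aeval x).toRingHom μ =
      α ^ 2 * (x + 1 - α) ^ m + δ ^ 2 * (x + 1 - δ) ^ m := by
  set φ := eval₂RingHom (aeval x : ℤ[X] →ₐ[ℤ] S).toRingHom μ
  have hP : φ (1 + X) = α + δ := by simp [φ, hsum]
  have hQ : φ (C (X + 1) * X) = α * δ := by simp [φ, hprod]
  have hC (j : ℕ) : φ (C ((X + 1) ^ j)) = (x + 1) ^ j := by
    rw [coe_eval₂RingHom, eval₂_C]; simp
  rw [sq_mul_sub_pow, sq_mul_sub_pow, ← sum_add_distrib, bicriticalPoly, ← coe_eval₂RingHom,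
    map_sum]
  refine sum_congr rfl fun j _ => ?_
  rw [map_zsmul, map_mul, map_lucasV, hP, hQ, hC, lucasV_add_mul, ← smul_add, ← mul_add]

namespace Bicritical

variable {K : Type*} [CommRing K] {a b c d v : K}

theorem sub_eq (hdet : a * d - b * c = 1) (hfix : a + b = c + d) (hv : v * (c + d) = 1) :
    a - c = v := by
  linear_combination (c - a) * hv + v * hdet + v * c * hfix

theorem mul_add_mul (hac : a - c = v) (hv : v * (c + d) = 1) : a * v + d * v = 1 + v ^ 2 := by
  linear_combination v * hac + hv

theorem mul_mul_mul (hdet : a * d - b * c = 1) : a * v * (d * v) = (b * c + 1) * v ^ 2 := by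
  linear_combination v ^ 2 * hdet

theorem sq_mul_invariant (hdet : a * d - b * c = 1) (hfix : a + b = c + d) (hac : a - c = v)
    (m : ℕ) :
    v ^ 2 * (a ^ (m + 2) * b ^ m + c ^ m * d ^ (m + 2)) =
      (a * v) ^ 2 * (b * c + 1 - a * v) ^ m + (d * v) ^ 2 * (b * c + 1 - d * v) ^ m := by
  have hab : a * b = b * c + 1 - a * v := by linear_combination hdet + a * hfix - a * hac
  have hcd : c * d = b * c + 1 - d * v := by linear_combination hdet - d * hac
  rw [← hab, ← hcd]
  ring

end Bicritical

/-- Theorem 2.3: there exist integer polynomials `P₀, …, P_{n+1}` with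
`deg P_k ≤ k` such that for every normalized bicritical map
`f(z) = (a z^n + b)/(c z^n + d)` (`ad - bc = 1`) with a fixed point at `z = 1`
(`a + b = c + d ≠ 0`), setting `μ = 1/(c+d)²` (so the multiplier there is
`λ = nμ`), `X = bc` and `Y = a^{n+1} b^{n-1} + c^{n-1} d^{n+1}`, one has
`μ Y = Σ_{k=0}^{n+1} (-μ)^{n+1-k} P_k(X)`. -/
theorem stmt9 (n : ℕ) (hn : 2 ≤ n) :
    ∃ P : ℕ → Polynomial ℤ,
      (∀ k ≤ n + 1, (P k).natDegree ≤ k) ∧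
      ∀ a b c d : ℂ, a * d - b * c = 1 → a + b = c + d → c + d ≠ 0 →
        (1 / (c + d) ^ 2) *
            (a ^ (n + 1) * b ^ (n - 1) + c ^ (n - 1) * d ^ (n + 1)) =
          ∑ k ∈ Finset.range (n + 2),
            (-(1 / (c + d) ^ 2)) ^ (n + 1 - k) * Polynomial.aeval (b * c) (P k) := by
  obtain ⟨m, rfl⟩ : ∃ m, n = m + 1 := ⟨n - 1, by omega⟩
  have hF := totalDegreeLE_bicriticalPoly m
  refine ⟨alternatingCoeff (m + 2) (bicriticalPoly m),
    fun k hk => hF.natDegree_alternatingCoeff_le hk, fun a b c d hdet hfix hs => ?_⟩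
  have hv : 1 / (c + d) * (c + d) = 1 := one_div_mul_cancel hs
  have hac := Bicritical.sub_eq hdet hfix hv
  rw [← one_div_pow, Nat.add_sub_cancel, Bicritical.sq_mul_invariant hdet hfix hac,
    ← eval₂_bicriticalPoly (Bicritical.mul_add_mul hac hv) (Bicritical.mul_mul_mul hdet),
    hF.eval₂_eq_sum_alternatingCoeff]
end

section
/- For each n ≥ 2, the polynomials P₀, …, P_{n+1} ∈ ℤ[X] of Theorem 2.3 — i.e. polynomials with deg P_k ≤ k such that μ·Y = Σ_{k=0}^{n+1} (−μ)^{n+1−k} P_k(X) holds for all a, b, c, d ∈ ℂ with ad − bc = 1 and a + b = c + d ≠ 0, where μ = 1/(c+d)², X = bc, Y = a^{n+1} b^{n−1} + c^{n−1} d^{n+1} — can be chosen so that moreover: P₀(X) = 1; P₁(X) = 2nX + (n−1); P_{n−1}(X) = n² X^{n−1} + Σ_{j=0}^{n−2} C(n+1, j) X^j; P_n(X) = 2X^n + (1−n) X^{n−1}; P_{n+1}(X) = X^{n−1}; the constant term satisfies P_k(0) = C(n−1, k) for every 0 ≤ k ≤ n+1; and for every 1 ≤ k ≤ n the coefficient of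 X^k in P_k equals C(2n−k, k) + C(2n−k−1, k−1). In particular each P_k with 0 ≤ k ≤ n has degree exactly k, while P_{n+1} has degree n−1. (Lemma 2.4.) -/
/-!
Write `n = m + 1`, `α = a b`, `β = c d`, `x = b c` and `μ = 1 / (c + d)²`. The normalisation
`a d - b c = 1`, `a + b = c + d` gives `α β = x (x + 1)`, `α + β = 2x + 1 - μ`,
`μ a² = (β - x + μ)²` and `μ d² = (α - x + μ)²`, hence
`μ (a^(m+2) b^m + c^m d^(m+2)) = S m := α^m (β - x + μ)² + β^m (α - x + μ)²`, and
`S (m + 2) = (2x + 1 - μ) S (m + 1) - x (x + 1) S m`. The generating polynomials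
`F m = ∑ₖ Pₖ Yᵏ` are defined by the matching recurrence
`F (m + 2) = (1 + (2X + 1) Y) F (m + 1) - X (X + 1) Y² F m`, so that
`(-μ)^(m + 2) F m (x, -1/μ) = S m`. Every stated property of the `Pₖ` is then read off this
recurrence; the constant terms, for instance, come from `F m (0, Y) = (1 + Y)^m`.
-/

open Polynomial Polynomial.Bivariate Finset

section NatDegreeCoeffLe

variable (R : Type*) [Ring R]

def natDegreeCoeffLeSubring : Subring R[X][Y] where
  carrier := {p | ∀ k, (p.coeff k).natDegree ≤ k}
  mul_mem' {p q} hp hq k := by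
    rw [coeff_mul]
    refine natDegree_sum_le_of_forall_le _ _ fun ij hij => ?_
    exact (natDegree_mul_le_of_le (hp ij.1) (hq ij.2)).trans (mem_antidiagonal.mp hij).le
  one_mem' k := by rw [coeff_one]; split_ifs <;> simp
  add_mem' {p q} hp hq k := by rw [coeff_add]; exact natDegree_add_le_of_degree_le (hp k) (hq k)
  zero_mem' := by simp
  neg_mem' {p} hp k := by rw [coeff_neg, natDegree_neg]; exact hp k

variable {R}

lemma C_mul_Y_pow_mem_natDegreeCoeffLeSubring {a : R[X]} {j : ℕ} (h : a.natDegree ≤ j) :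
    C a * Y ^ j ∈ natDegreeCoeffLeSubring R := by
  intro k
  rw [coeff_C_mul_X_pow]
  split_ifs with hk
  · exact hk ▸ h
  · simp

end NatDegreeCoeffLe

/-- The generating polynomial `F m = ∑ₖ Pₖ Yᵏ` for `n = m + 1`. -/
noncomputable def genPoly : ℕ → ℤ[X][Y]
  | 0 => 1 + C (2 * X) * Y + Y ^ 2
  | 1 => 1 + C (4 * X + 1) * Y + C (2 * X ^ 2 - X) * Y ^ 2 + C X * Y ^ 3
  | m + 2 =>
    genPoly (m + 1) + C (2 * X + 1) * Y * genPoly (m + 1) - C (X * (X + 1)) * Y ^ 2 * genPoly m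

lemma genPoly_add_two (m : ℕ) : genPoly (m + 2) =
    genPoly (m + 1) + C (2 * X + 1) * Y * genPoly (m + 1) -
      C (X * (X + 1)) * Y ^ 2 * genPoly m := rfl

lemma natDegree_genPoly_le (m : ℕ) : (genPoly m).natDegree ≤ m + 2 := by
  induction m using Nat.twoStepInduction with
  | zero => unfold genPoly; compute_degree!
  | one => unfold genPoly; compute_degree!
  | more m ih₀ ih₁ =>
    have h₁ : (C (2 * X + 1) * Y : ℤ[X][Y]).natDegree ≤ 1 := by compute_degree
    have h₂ : (C (X * (X + 1)) * Y ^ 2 : ℤ[X][Y]).natDegree ≤ 2 :=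
      natDegree_C_mul_X_pow_le _ _
    rw [genPoly_add_two]
    refine (natDegree_sub_le_of_le (natDegree_add_le_of_degree_le (n := m + 4) (by omega)
      ((natDegree_mul_le_of_le h₁ ih₁).trans (by omega)))
      (natDegree_mul_le_of_le h₂ ih₀)).trans ?_
    omega

lemma genPoly_mem (m : ℕ) : genPoly m ∈ natDegreeCoeffLeSubring ℤ := by
  have hY : (Y : ℤ[X][Y]) ∈ natDegreeCoeffLeSubring ℤ := by
    simpa using C_mul_Y_pow_mem_natDegreeCoeffLeSubring (a := (1 : ℤ[X])) (j := 1) (by simp)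
  have hCY {a : ℤ[X]} (h : a.natDegree ≤ 1) : C a * Y ∈ natDegreeCoeffLeSubring ℤ := by
    simpa using C_mul_Y_pow_mem_natDegreeCoeffLeSubring h
  induction m using Nat.twoStepInduction with
  | zero => exact add_mem (add_mem (one_mem _) (hCY (by compute_degree!))) (pow_mem hY 2)
  | one =>
    exact add_mem (add_mem (add_mem (one_mem _) (hCY (by compute_degree!)))
      (C_mul_Y_pow_mem_natDegreeCoeffLeSubring (by compute_degree!)))
      (C_mul_Y_pow_mem_natDegreeCoeffLeSubring (by compute_degree!))
  | more m ih₀ ih₁ =>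
    exact sub_mem (add_mem ih₁ (mul_mem (hCY (by compute_degree!)) ih₁))
      (mul_mem (C_mul_Y_pow_mem_natDegreeCoeffLeSubring (by compute_degree!)) ih₀)

lemma coeff_genPoly_add_two (m k : ℕ) : (genPoly (m + 2)).coeff (k + 2) =
    (genPoly (m + 1)).coeff (k + 2) + (2 * X + 1) * (genPoly (m + 1)).coeff (k + 1) -
      X * (X + 1) * (genPoly m).coeff k := by
  rw [genPoly_add_two, coeff_sub, coeff_add, mul_assoc, mul_assoc, coeff_C_mul, coeff_C_mul,
    coeff_X_mul, coeff_X_pow_mul]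

lemma coeff_genPoly_zero (m : ℕ) : (genPoly m).coeff 0 = 1 := by
  induction m using Nat.twoStepInduction with
  | zero | one => simp [genPoly]
  | more m _ ih => simpa [genPoly_add_two] using ih

lemma coeff_genPoly_one (m : ℕ) :
    (genPoly m).coeff 1 = 2 * ((m : ℤ[X]) + 1) * X + (m : ℤ[X]) := by
  induction m using Nat.twoStepInduction with
  | zero | one =>
    simp only [genPoly, coeff_add, coeff_one, coeff_C_mul, coeff_X_pow, coeff_X]
    norm_num
  | more m _ ih =>
    rw [genPoly_add_two, coeff_sub, coeff_add, mul_assoc, mul_assoc, coeff_C_mul, coeff_C_mul,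
      coeff_X_mul (n := 0), coeff_X_pow_mul', coeff_genPoly_zero, ih]
    push_cast
    ring

lemma coeff_genPoly_top (m : ℕ) : (genPoly m).coeff (m + 2) = X ^ m := by
  induction m using Nat.twoStepInduction with
  | zero | one =>
    simp only [genPoly, coeff_add, coeff_one, coeff_C_mul, coeff_X_pow, coeff_X]
    norm_num
  | more m ih₀ ih₁ =>
    have h : (genPoly (m + 1)).coeff (m + 4) = 0 :=
      coeff_eq_zero_of_natDegree_lt ((natDegree_genPoly_le _).trans_lt (by omega))
    rw [coeff_genPoly_add_two, h, ih₀, ih₁]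
    ring

lemma coeff_genPoly_top_sub_one (m : ℕ) :
    (genPoly m).coeff (m + 1) = 2 * X ^ (m + 1) - (m : ℤ[X]) * X ^ m := by
  induction m using Nat.twoStepInduction with
  | zero | one =>
    simp only [genPoly, coeff_add, coeff_one, coeff_C_mul, coeff_X_pow, coeff_X]
    norm_num
  | more m ih₀ ih₁ =>
    rw [coeff_genPoly_add_two, ih₀, ih₁, coeff_genPoly_top]
    push_cast
    ring

lemma coeff_genPoly_self_eq_add_one_pow (m : ℕ) : (genPoly m).coeff m =
    ((m : ℤ[X]) + 1) ^ 2 * X ^ m + (X + 1) ^ (m + 2) - ((m + 2).choose m : ℤ[X]) * X ^ m -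
      ((m : ℤ[X]) + 2) * X ^ (m + 1) - X ^ (m + 2) := by
  induction m using Nat.twoStepInduction with
  | zero | one =>
    simp only [genPoly, coeff_add, coeff_one, coeff_C_mul, coeff_X_pow, coeff_X]
    norm_num
    ring
  | more m ih₀ ih₁ =>
    rw [coeff_genPoly_add_two, ih₀, ih₁, coeff_genPoly_top_sub_one,
      Nat.choose_succ_succ (m + 3), Nat.choose_succ_self_right, Nat.choose_succ_succ (m + 2),
      Nat.choose_succ_self_right]
    push_cast
    ring

lemma coeff_genPoly_self (m : ℕ) : (genPoly m).coeff m =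
    C (((m + 1 : ℕ) : ℤ) ^ 2) * X ^ m +
      ∑ j ∈ range m, C (((m + 2).choose j : ℕ) : ℤ) * X ^ j := by
  rw [coeff_genPoly_self_eq_add_one_pow, add_pow (X : ℤ[X]) 1, sum_range_succ, sum_range_succ,
    sum_range_succ, Nat.choose_self, Nat.choose_succ_self_right]
  simp only [one_pow, mul_one, map_pow, map_natCast]
  rw [sum_congr rfl fun j _ => mul_comm (X ^ j : ℤ[X]) _]
  push_cast
  ring

lemma map_constantCoeff_genPoly_succ (m : ℕ) :
    (genPoly (m + 1)).map constantCoeff = (1 + X) ^ (m + 1) := by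
  induction m with
  | zero => simp [genPoly]
  | succ m ih =>
    have h₁ : constantCoeff (2 * X + 1 : ℤ[X]) = 1 := by simp
    have h₂ : constantCoeff (X * (X + 1) : ℤ[X]) = 0 := by simp
    simp only [genPoly_add_two, Polynomial.map_sub, Polynomial.map_add, Polynomial.map_mul,
      Polynomial.map_pow, map_C, map_X, h₁, h₂, map_one, map_zero, ih]
    ring

lemma coeff_zero_coeff_genPoly_succ (m k : ℕ) :
    ((genPoly (m + 1)).coeff k).coeff 0 = (m + 1).choose k := by
  simpa [coeff_map, coeff_one_add_X_pow] using
    congrArg (coeff · k) (map_constantCoeff_genPoly_succ m)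

lemma coeff_coeff_genPoly_add_two (m k : ℕ) :
    ((genPoly (m + 2)).coeff (k + 2)).coeff (k + 2) =
      ((genPoly (m + 1)).coeff (k + 2)).coeff (k + 2) +
        2 * ((genPoly (m + 1)).coeff (k + 1)).coeff (k + 1) - ((genPoly m).coeff k).coeff k := by
  have h₁ : ((genPoly (m + 1)).coeff (k + 1)).coeff (k + 2) = 0 :=
    coeff_eq_zero_of_natDegree_lt ((genPoly_mem _ _).trans_lt (by omega))
  have h₀ : ((genPoly m).coeff k).coeff (k + 1) = 0 :=
    coeff_eq_zero_of_natDegree_lt ((genPoly_mem _ _).trans_lt (by omega))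
  rw [coeff_genPoly_add_two]
  simp [add_mul, mul_add, mul_assoc, coeff_X_mul, h₀, h₁]

lemma choose_add_three_add_choose (A i : ℕ) :
    (A + 3).choose (i + 3) + A.choose i =
      (A + 1).choose (i + 3) + A.choose (i + 2) + (A + 2).choose (i + 2) +
        (A + 1).choose (i + 1) := by
  simp only [Nat.choose_succ_succ]
  ring

/-- The index is written as `i + 1` and `2 m - i` as `A`, to avoid truncated subtraction. -/
lemma coeff_coeff_genPoly_succ (m i A : ℕ) (hA : A + i = 2 * m) (hi : i ≤ m + 1) :
    ((genPoly m).coeff (i + 1)).coeff (i + 1) =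
      ((A + 1).choose (i + 1) : ℤ) + (A.choose i : ℤ) := by
  induction m using Nat.twoStepInduction generalizing i A with
  | zero | one =>
    obtain rfl : A = _ - i := Nat.eq_sub_of_add_eq hA
    interval_cases i <;>
    simp only [genPoly, coeff_add, coeff_one, coeff_C_mul, coeff_X_pow, coeff_X] <;>
    norm_num [Nat.choose, coeff_one, coeff_X]
  | more m ih₀ ih₁ =>
    rcases i with _ | _ | j
    · obtain rfl : A = 2 * m + 4 := by omega
      rw [coeff_genPoly_one]
      simp only [coeff_add, coeff_mul_X, coeff_ofNat_mul, coeff_natCast_ite, if_pos, zero_add,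
        coeff_one_zero, Nat.choose_one_right, Nat.choose_zero_right]
      push_cast
      ring
    · obtain rfl : A = 2 * m + 3 := by omega
      rw [coeff_coeff_genPoly_add_two, ih₁ 1 (2 * m + 1) (by omega) (by omega),
        ih₁ 0 (2 * m + 2) (by omega) (by omega), coeff_genPoly_zero]
      simp only [coeff_one_zero, Nat.choose_succ_succ (2 * m + 3), Nat.choose_succ_succ (2 * m + 2),
        Nat.choose_one_right, Nat.choose_zero_right]
      push_cast
      ring
    · rcases Nat.lt_or_ge j (m + 1) with hj | hj
      · obtain ⟨B, rfl⟩ : ∃ B, A = B + 2 := ⟨A - 2, by omega⟩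
        rw [coeff_coeff_genPoly_add_two, ih₁ (j + 2) B (by omega) (by omega),
          ih₁ (j + 1) (B + 1) (by omega) (by omega), ih₀ j B (by omega) (by omega)]
        have := choose_add_three_add_choose B j
        linarith
      · obtain rfl : j = m + 1 := by omega
        obtain rfl : A = m + 1 := by omega
        rw [coeff_genPoly_top, coeff_X_pow, if_neg (by omega), Nat.choose_eq_zero_of_lt (by omega),
          Nat.choose_eq_zero_of_lt (by omega)]
        simp

lemma natDegree_coeff_genPoly (m k : ℕ) (hk : k ≤ m + 1) :
    ((genPoly m).coeff k).natDegree = k := by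
  rcases k with _ | i
  · simp [coeff_genPoly_zero]
  refine le_antisymm (genPoly_mem m _) (le_natDegree_of_ne_zero ?_)
  rw [coeff_coeff_genPoly_succ m i (2 * m - i) (by omega) (by omega)]
  have : 0 < (2 * m - i + 1).choose (i + 1) := Nat.choose_pos (by omega)
  positivity

lemma sum_pow_sub_mul_coeff_eq_pow_mul_eval₂_inv {R K : Type*} [Semiring R] [Field K]
    (f : R →+* K) {p : R[X]} {N : ℕ} (hp : p.natDegree ≤ N) {u : K} (hu : u ≠ 0) :
    ∑ k ∈ range (N + 1), u ^ (N - k) * f (p.coeff k) = u ^ N * p.eval₂ f u⁻¹ := by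
  rw [eval₂_eq_sum_range' f (Nat.lt_succ_of_le hp), mul_sum]
  refine sum_congr rfl fun k hk => ?_
  rw [pow_sub₀ _ hu (Nat.le_of_lt_succ (mem_range.mp hk)), inv_pow]
  ring

section Evaluation

variable {K : Type*} [Field K]

lemma eval₂_genPoly_zero (x v : K) :
    (genPoly 0).eval₂ (aeval x).toRingHom v = 1 + 2 * x * v + v ^ 2 := by
  simp [genPoly, map_ofNat]

lemma eval₂_genPoly_one (x v : K) : (genPoly 1).eval₂ (aeval x).toRingHom v =
    1 + (4 * x + 1) * v + (2 * x ^ 2 - x) * v ^ 2 + x * v ^ 3 := by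
  simp [genPoly, eval₂_pow, map_ofNat]

lemma eval₂_genPoly_add_two (x v : K) (m : ℕ) :
    (genPoly (m + 2)).eval₂ (aeval x).toRingHom v =
    (1 + (2 * x + 1) * v) * (genPoly (m + 1)).eval₂ (aeval x).toRingHom v -
      x * (x + 1) * v ^ 2 * (genPoly m).eval₂ (aeval x).toRingHom v := by
  simp [genPoly, add_mul, map_ofNat]

variable {α β x μ : K}

lemma pow_mul_eval₂_genPoly (hμ : μ ≠ 0) (hsum : α + β = 2 * x + 1 - μ)
    (hprod : α * β = x * (x + 1)) (m : ℕ) :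
    (-μ) ^ (m + 2) * (genPoly m).eval₂ (aeval x).toRingHom (-μ)⁻¹ =
      α ^ m * (β - x + μ) ^ 2 + β ^ m * (α - x + μ) ^ 2 := by
  induction m using Nat.twoStepInduction with
  | zero =>
    have h : (-μ) ^ (0 + 2) * (genPoly 0).eval₂ (aeval x).toRingHom (-μ)⁻¹ =
        μ ^ 2 - 2 * x * μ + 1 := by
      rw [eval₂_genPoly_zero]
      field_simp
      ring
    rw [h]
    linear_combination (-(α + β + 2 * x + 1 - μ - 2 * (x - μ))) * hsum + 2 * hprod
  | one =>
    have h : (-μ) ^ (1 + 2) * (genPoly 1).eval₂ (aeval x).toRingHom (-μ)⁻¹ =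
        -μ ^ 3 + (4 * x + 1) * μ ^ 2 - (2 * x ^ 2 - x) * μ + x := by
      rw [eval₂_genPoly_one]
      field_simp
      ring
    rw [h]
    linear_combination (-(α * β + (x - μ) ^ 2)) * hsum - (2 * x + 1 - μ - 4 * (x - μ)) * hprod
  | more m ih₀ ih₁ =>
    have hrec : (-μ) ^ (m + 2 + 2) * (genPoly (m + 2)).eval₂ (aeval x).toRingHom (-μ)⁻¹ =
        (2 * x + 1 - μ) *
            ((-μ) ^ (m + 1 + 2) * (genPoly (m + 1)).eval₂ (aeval x).toRingHom (-μ)⁻¹) -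
          x * (x + 1) * ((-μ) ^ (m + 2) * (genPoly m).eval₂ (aeval x).toRingHom (-μ)⁻¹) := by
      rw [eval₂_genPoly_add_two]
      field_simp
      ring
    rw [hrec, ih₀, ih₁]
    linear_combination
      (-(α ^ (m + 1) * (β - x + μ) ^ 2 + β ^ (m + 1) * (α - x + μ) ^ 2)) * hsum +
        (α ^ m * (β - x + μ) ^ 2 + β ^ m * (α - x + μ) ^ 2) * hprod

lemma sum_aeval_coeff_genPoly (hμ : μ ≠ 0) (hsum : α + β = 2 * x + 1 - μ)
    (hprod : α * β = x * (x + 1)) (m : ℕ) :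
    α ^ m * (β - x + μ) ^ 2 + β ^ m * (α - x + μ) ^ 2 =
      ∑ k ∈ range (m + 3), (-μ) ^ (m + 2 - k) * aeval x ((genPoly m).coeff k) := by
  rw [← pow_mul_eval₂_genPoly hμ hsum hprod]
  exact (sum_pow_sub_mul_coeff_eq_pow_mul_eval₂_inv _ (natDegree_genPoly_le m)
    (neg_ne_zero.mpr hμ)).symm

end Evaluation

section NormalForm

variable {K : Type*} [CommRing K] {a b c d μ : K}

lemma sub_eq_mul_of_normalForm (h₁ : a * d - b * c = 1) (h₂ : a + b = c + d)
    (hμ : μ * (c + d) ^ 2 = 1) : d - b = μ * (c + d) := by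
  have h : (c + d) * (d - b) = 1 := by linear_combination h₁ - d * h₂
  linear_combination μ * (c + d) * h - (d - b) * hμ

lemma add_mul_eq_of_normalForm (h₁ : a * d - b * c = 1) (h₂ : a + b = c + d)
    (hμ : μ * (c + d) ^ 2 = 1) : a * b + c * d = 2 * (b * c) + 1 - μ := by
  linear_combination b * h₂ + (b + c - μ * (c + d)) * sub_eq_mul_of_normalForm h₁ h₂ hμ +
    (1 - μ) * hμ

lemma mul_mul_eq_of_normalForm (h₁ : a * d - b * c = 1) :
    a * b * (c * d) = b * c * (b * c + 1) := by
  linear_combination b * c * h₁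

lemma mul_invariant_eq_of_normalForm (h₁ : a * d - b * c = 1) (h₂ : a + b = c + d)
    (hμ : μ * (c + d) ^ 2 = 1) (m : ℕ) :
    μ * (a ^ (m + 2) * b ^ m + c ^ m * d ^ (m + 2)) =
      (a * b) ^ m * (c * d - b * c + μ) ^ 2 + (c * d) ^ m * (a * b - b * c + μ) ^ 2 := by
  have hdb := sub_eq_mul_of_normalForm h₁ h₂ hμ
  have hac : a - c = μ * (c + d) := by linear_combination h₂ + hdb
  have ha : μ * a ^ 2 = (c * d - b * c + μ) ^ 2 := by
    linear_combination μ * (a + c + μ * (c + d)) * hac + (μ ^ 2 - μ * c ^ 2) * hμ -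
      c * (c * μ * (c + d) + c * (d - b) + 2 * μ) * hdb
  have hd : μ * d ^ 2 = (a * b - b * c + μ) ^ 2 := by
    linear_combination μ * (d + b + μ * (c + d)) * hdb + (μ ^ 2 - μ * b ^ 2) * hμ -
      b * (b * μ * (c + d) + b * (a - c) + 2 * μ) * hac
  calc μ * (a ^ (m + 2) * b ^ m + c ^ m * d ^ (m + 2))
      = (a * b) ^ m * (μ * a ^ 2) + (c * d) ^ m * (μ * d ^ 2) := by ring
    _ = _ := by rw [ha, hd]

end NormalForm

lemma mul_invariant_eq_sum_genPoly {K : Type*} [Field K] {a b c d : K} (h₁ : a * d - b * c = 1)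
    (h₂ : a + b = c + d) (hs : c + d ≠ 0) (m : ℕ) :
    1 / (c + d) ^ 2 * (a ^ (m + 2) * b ^ m + c ^ m * d ^ (m + 2)) =
      ∑ k ∈ range (m + 3),
        (-(1 / (c + d) ^ 2)) ^ (m + 2 - k) * aeval (b * c) ((genPoly m).coeff k) := by
  have hμ : 1 / (c + d) ^ 2 * (c + d) ^ 2 = 1 := by field_simp
  rw [mul_invariant_eq_of_normalForm h₁ h₂ hμ]
  exact sum_aeval_coeff_genPoly (one_div_ne_zero (pow_ne_zero 2 hs))
    (add_mul_eq_of_normalForm h₁ h₂ hμ) (mul_mul_eq_of_normalForm h₁) m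


/-- Lemma 2.4: the polynomials `P₀, …, P_{n+1}` of Theorem 2.3 can be chosen
with the explicit values `P₀ = 1`, `P₁ = 2nX + (n-1)`,
`P_{n-1} = n² X^{n-1} + Σ_{j=0}^{n-2} C(n+1,j) X^j`,
`P_n = 2X^n + (1-n) X^{n-1}`, `P_{n+1} = X^{n-1}`, constant terms
`P_k(0) = C(n-1,k)`, leading coefficients
`[X^k] P_k = C(2n-k,k) + C(2n-k-1,k-1)` for `1 ≤ k ≤ n`, so that `P_k` has
degree exactly `k` for `k ≤ n` while `P_{n+1}` has degree `n-1`. -/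
theorem stmt10 (n : ℕ) (hn : 2 ≤ n) :
    ∃ P : ℕ → Polynomial ℤ,
      (∀ k ≤ n + 1, (P k).natDegree ≤ k) ∧
      (∀ a b c d : ℂ, a * d - b * c = 1 → a + b = c + d → c + d ≠ 0 →
        (1 / (c + d) ^ 2) *
            (a ^ (n + 1) * b ^ (n - 1) + c ^ (n - 1) * d ^ (n + 1)) =
          ∑ k ∈ Finset.range (n + 2),
            (-(1 / (c + d) ^ 2)) ^ (n + 1 - k) * Polynomial.aeval (b * c) (P k)) ∧
      (P 0 = 1) ∧
      (P 1 = Polynomial.C (2 * (n : ℤ)) * Polynomial.X + Polynomial.C ((n : ℤ) - 1)) ∧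
      (P (n - 1) = Polynomial.C ((n : ℤ) ^ 2) * Polynomial.X ^ (n - 1) +
        ∑ j ∈ Finset.range (n - 1),
          Polynomial.C (((n + 1).choose j : ℤ)) * Polynomial.X ^ j) ∧
      (P n = Polynomial.C 2 * Polynomial.X ^ n +
        Polynomial.C (1 - (n : ℤ)) * Polynomial.X ^ (n - 1)) ∧
      (P (n + 1) = Polynomial.X ^ (n - 1)) ∧
      (∀ k ≤ n + 1, (P k).coeff 0 = ((n - 1).choose k : ℤ)) ∧
      (∀ k, 1 ≤ k → k ≤ n →
        (P k).coeff k = ((2 * n - k).choose k : ℤ) + ((2 * n - k - 1).choose (k - 1) : ℤ)) ∧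
      (∀ k ≤ n, (P k).natDegree = k) ∧
      ((P (n + 1)).natDegree = n - 1) := by
  obtain ⟨m, rfl⟩ : ∃ m, n = m + 2 := ⟨n - 2, by omega⟩
  refine ⟨(genPoly (m + 1)).coeff, fun k _ => genPoly_mem _ k,
    fun a b c d h₁ h₂ hs => mul_invariant_eq_sum_genPoly h₁ h₂ hs (m + 1),
    coeff_genPoly_zero _, ?_, coeff_genPoly_self (m + 1), ?_, coeff_genPoly_top _,
    fun k _ => coeff_zero_coeff_genPoly_succ m k, fun k hk₁ hk₂ => ?_,
    fun k hk => natDegree_coeff_genPoly _ k hk, ?_⟩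
  · rw [coeff_genPoly_one]
    simp only [map_mul, map_sub, map_ofNat, map_natCast, map_one]
    push_cast
    ring
  · rw [coeff_genPoly_top_sub_one, show m + 2 - 1 = m + 1 from rfl]
    simp only [map_sub, map_natCast, map_one, map_ofNat]
    push_cast
    ring
  · obtain ⟨i, rfl⟩ : ∃ i, k = i + 1 := ⟨k - 1, by omega⟩
    rw [coeff_coeff_genPoly_succ (m + 1) i (2 * m + 2 - i) (by omega) (by omega),
      show 2 * (m + 2) - (i + 1) = 2 * m + 2 - i + 1 by omega,
      show 2 * m + 2 - i + 1 - 1 = 2 * m + 2 - i by omega, Nat.add_sub_cancel]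
  · rw [coeff_genPoly_top, natDegree_X_pow]
    rfl
end

section
/- Fix n ≥ 2, λ ∈ ℂ with λ ≠ 0, and X₀ ∈ ℂ. Then: (i) there exist a, b, c, d ∈ ℂ with ad − bc = 1, a + b = c + d ≠ 0, n/(c+d)² = λ and bc = X₀, i.e. there is a degree-n bicritical map with invariant X = X₀ having a fixed point of multiplier λ at z = 1; and (ii) for any two such quadruples (a,b,c,d) and (a′,b′,c′,d′) one has a^{n+1} b^{n−1} + c^{n−1} d^{n+1} = a′^{n+1} b′^{n−1} + c′^{n−1} d′^{n+1}. (Corollary 2.2: for λ ≠ 0, each fiber {X = X₀} of moduli space contains one and only one conjugacy class with a fixed point of multiplier λ, so Per₁(λ) is the graph of a function Y = Y(X).) -/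
/-! A normalized map with `c + d = s` has `a = s - b`, `d = s - c`, and `ad - bc = 1` becomes
`b + c = s - 1/s`. So `s` together with `X = bc` fixes `{b, c}` as the roots of a quadratic, which
gives existence over `ℂ`. The multiplier fixes `s` up to sign, so any two normalized maps in
`Per₁(λ) ∩ {X = X₀}` differ by swapping the roots `b ↔ c` (which sends `(a, b, c, d)` to
`(d, c, b, a)`) and possibly the sign `(a, b, c, d) ↦ (-a, -b, -c, -d)`. Both leave `Y` unchanged,
the latter because `Y` is homogeneous of even degree `2n`. -/

open Polynomial

theorem neg_pow_mul_neg_pow_of_even {R : Type*} [CommMonoid R] [HasDistribNeg R] {m k : ℕ}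
    (h : Even (m + k)) (x y : R) : (-x) ^ m * (-y) ^ k = x ^ m * y ^ k := by
  rw [neg_pow x, neg_pow y, mul_mul_mul_comm, ← pow_add, h.neg_one_pow, one_mul]

theorem exists_add_eq_and_mul_eq {K : Type*} [Field K] [IsAlgClosed K] (t p : K) :
    ∃ b c : K, b + c = t ∧ b * c = p := by
  obtain ⟨b, hb⟩ := IsAlgClosed.exists_root (C 1 * X ^ 2 + C (-t) * X + C p)
    (by rw [degree_quadratic one_ne_zero]; decide)
  refine ⟨b, t - b, by ring, ?_⟩
  simp only [IsRoot, eval_add, eval_mul, eval_C, eval_pow, eval_X] at hb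
  linear_combination -hb

theorem eq_and_eq_or_eq_and_eq_of_add_eq_of_mul_eq {R : Type*} [CommRing R] [IsDomain R]
    {b c b' c' : R} (hsum : b' + c' = b + c) (hprod : b' * c' = b * c) :
    (b' = b ∧ c' = c) ∨ (b' = c ∧ c' = b) := by
  have hroots : (b' - b) * (b' - c) = 0 := by linear_combination b' * hsum - hprod
  rcases mul_eq_zero.mp hroots with h | h
  · exact .inl ⟨by linear_combination h, by linear_combination hsum - h⟩
  · exact .inr ⟨by linear_combination h, by linear_combination hsum - h⟩

/-- The invariant `Y` of the bicritical map `(a z^n + b)/(c z^n + d)`. -/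
def bicriticalY {R : Type*} [CommRing R] (n : ℕ) (a b c d : R) : R :=
  a ^ (n + 1) * b ^ (n - 1) + c ^ (n - 1) * d ^ (n + 1)

section NormalForm

variable {R : Type*} [CommRing R]

theorem bicriticalY_neg {n : ℕ} (hn : 1 ≤ n) (a b c d : R) :
    bicriticalY n (-a) (-b) (-c) (-d) = bicriticalY n a b c d := by
  have hev : Even (n + 1 + (n - 1)) := ⟨n, by omega⟩
  rw [bicriticalY, bicriticalY, neg_pow_mul_neg_pow_of_even hev,
    neg_pow_mul_neg_pow_of_even (add_comm (n + 1) (n - 1) ▸ hev)]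

theorem bicriticalY_swap (n : ℕ) (a b c d : R) :
    bicriticalY n d c b a = bicriticalY n a b c d := by
  unfold bicriticalY
  ring

theorem mul_add_eq_sq_sub_one_of_normal_form {a b c d : R} (hdet : a * d - b * c = 1)
    (hfix : a + b = c + d) : (c + d) * (b + c) = (c + d) ^ 2 - 1 := by
  linear_combination -hdet + d * hfix

theorem normal_form_eq_or_eq_swap [IsDomain R] {a b c d a' b' c' d' : R}
    (hdet : a * d - b * c = 1) (hfix : a + b = c + d) (hs : c + d ≠ 0)
    (hdet' : a' * d' - b' * c' = 1) (hfix' : a' + b' = c' + d')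
    (hs' : c' + d' = c + d) (hprod : b' * c' = b * c) :
    (a' = a ∧ b' = b ∧ c' = c ∧ d' = d) ∨ (a' = d ∧ b' = c ∧ c' = b ∧ d' = a) := by
  have hsum : b' + c' = b + c := mul_left_cancel₀ hs <| by
    rw [mul_add_eq_sq_sub_one_of_normal_form hdet hfix, ← hs',
      mul_add_eq_sq_sub_one_of_normal_form hdet' hfix']
  rcases eq_and_eq_or_eq_and_eq_of_add_eq_of_mul_eq hsum hprod with ⟨hb, hc⟩ | ⟨hb, hc⟩
  · exact .inl ⟨by linear_combination hfix' + hs' - hfix - hb, hb, hc,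
      by linear_combination hs' - hc⟩
  · exact .inr ⟨by linear_combination hfix' + hs' - hb, hb, hc,
      by linear_combination hs' - hc - hfix⟩

theorem bicriticalY_eq_of_sq_eq [IsDomain R] {n : ℕ} (hn : 1 ≤ n) {a b c d a' b' c' d' : R}
    (hdet : a * d - b * c = 1) (hfix : a + b = c + d) (hs : c + d ≠ 0)
    (hdet' : a' * d' - b' * c' = 1) (hfix' : a' + b' = c' + d')
    (hsq : (c' + d') ^ 2 = (c + d) ^ 2) (hprod : b' * c' = b * c) :
    bicriticalY n a' b' c' d' = bicriticalY n a b c d := by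
  have key {a₁ b₁ c₁ d₁ : R} (hdet₁ : a₁ * d₁ - b₁ * c₁ = 1) (hfix₁ : a₁ + b₁ = c₁ + d₁)
      (hs₁ : c₁ + d₁ = c + d) (hprod₁ : b₁ * c₁ = b * c) :
      bicriticalY n a₁ b₁ c₁ d₁ = bicriticalY n a b c d := by
    rcases normal_form_eq_or_eq_swap hdet hfix hs hdet₁ hfix₁ hs₁ hprod₁ with
      ⟨rfl, rfl, rfl, rfl⟩ | ⟨rfl, rfl, rfl, rfl⟩
    · rfl
    · exact bicriticalY_swap n _ _ _ _
  rcases sq_eq_sq_iff_eq_or_eq_neg.mp hsq with hs' | hs'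
  · exact key hdet' hfix' hs' hprod
  · rw [← bicriticalY_neg hn]
    exact key (by linear_combination hdet') (by linear_combination -hfix')
      (by linear_combination -hs') (by linear_combination hprod)

end NormalForm

theorem exists_normal_form {K : Type*} [Field K] [IsAlgClosed K] {s : K} (hs : s ≠ 0)
    (X₀ : K) :
    ∃ a b c d : K, a * d - b * c = 1 ∧ a + b = c + d ∧ c + d = s ∧ b * c = X₀ := by
  obtain ⟨b, c, hsum, hprod⟩ := exists_add_eq_and_mul_eq (s - s⁻¹) X₀
  refine ⟨s - b, b, c, s - c, ?_, by ring, by ring, hprod⟩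
  linear_combination (-s) * hsum + mul_inv_cancel₀ hs

/-- Corollary 2.2: for `λ ≠ 0`, each fiber `{X = X₀}` of moduli space contains
one and only one conjugacy class with a fixed point of multiplier `λ`:
(i) some normalized bicritical map (`ad - bc = 1`, fixed point at `z = 1` with
`a + b = c + d ≠ 0` and multiplier `n/(c+d)² = λ`) has `bc = X₀`, and
(ii) any two such maps have the same invariant
`Y = a^{n+1} b^{n-1} + c^{n-1} d^{n+1}`. -/
theorem stmt11 (n : ℕ) (hn : 2 ≤ n) (lam X₀ : ℂ) (hlam : lam ≠ 0) :
    (∃ a b c d : ℂ, a * d - b * c = 1 ∧ a + b = c + d ∧ c + d ≠ 0 ∧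
      (n : ℂ) / (c + d) ^ 2 = lam ∧ b * c = X₀) ∧
    (∀ a b c d a' b' c' d' : ℂ,
      a * d - b * c = 1 → a + b = c + d → c + d ≠ 0 →
        (n : ℂ) / (c + d) ^ 2 = lam → b * c = X₀ →
      a' * d' - b' * c' = 1 → a' + b' = c' + d' → c' + d' ≠ 0 →
        (n : ℂ) / (c' + d') ^ 2 = lam → b' * c' = X₀ →
      a ^ (n + 1) * b ^ (n - 1) + c ^ (n - 1) * d ^ (n + 1) =
        a' ^ (n + 1) * b' ^ (n - 1) + c' ^ (n - 1) * d' ^ (n + 1)) := by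
  have hn0 : (n : ℂ) ≠ 0 := Nat.cast_ne_zero.mpr (by omega)
  constructor
  · obtain ⟨s, hs⟩ := IsAlgClosed.exists_pow_nat_eq ((n : ℂ) / lam) two_pos
    have hs0 : s ≠ 0 := by
      rintro rfl
      exact div_ne_zero hn0 hlam (by rw [← hs, zero_pow two_ne_zero])
    obtain ⟨a, b, c, d, hdet, hfix, rfl, hprod⟩ := exists_normal_form hs0 X₀
    exact ⟨a, b, c, d, hdet, hfix, hs0, by rw [hs, div_div_cancel₀ hn0], hprod⟩
  · intro a b c d a' b' c' d' hdet hfix hs hmul hprod hdet' hfix' _ hmul' hprod'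
    have hsq : (c' + d') ^ 2 = (c + d) ^ 2 := by
      rw [← div_div_cancel₀ hn0 (b := (c + d) ^ 2), hmul, ← hmul', div_div_cancel₀ hn0]
    exact (bicriticalY_eq_of_sq_eq (n := n) (by omega) hdet hfix hs hdet' hfix' hsq
      (hprod'.trans hprod.symm)).symm
end

section
/- Fix n ≥ 2 and λ ∈ ℂ with λ ≠ 0. There is a unique polynomial F_λ ∈ ℂ[X] of degree ≤ n such that every quadruple a, b, c, d ∈ ℂ with ad − bc = 1, a + b = c + d ≠ 0 and n/(c+d)² = λ satisfies a^{n+1} b^{n−1} + c^{n−1} d^{n+1} = F_λ(bc); i.e. the curve Per₁(λ) is the graph Y = F_λ(X). Moreover the coefficient of X^n in F_λ equals −2, the coefficient of X^{n−1} equals n(λ + λ⁻¹ + 1) − 1, and the constant term equals F_λ(0) = λ(n−λ)^{n−1}/n^n. Consequently, for any λ′ ∈ ℂ with λ′ ≠ 0, λ′ ≠ λ and λλ′ ≠ 1, the difference F_λ − F_{λ′} is a polynomial of degree exactly n−1; hence the curves Per₁(λ) and Per₁(λ′) have exactly n−1 intersections counted with multiplicity. (Corollary 2.5.) -/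
/-- `IsPer1Graph n lam F` says that the curve `Per₁(lam)` in the moduli space of
degree-`n` bicritical maps is the graph `Y = F(X)`: `F` has degree `≤ n`, and
every normalized bicritical map (`ad - bc = 1`) with a fixed point at `z = 1`
(`a + b = c + d ≠ 0`) of multiplier `lam = n/(c+d)²` satisfies
`Y = F(X)` where `X = bc` and `Y = a^{n+1} b^{n-1} + c^{n-1} d^{n+1}`. -/
def IsPer1Graph (n : ℕ) (lam : ℂ) (F : Polynomial ℂ) : Prop :=
  F.natDegree ≤ n ∧
  ∀ a b c d : ℂ, a * d - b * c = 1 → a + b = c + d → c + d ≠ 0 →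
    (n : ℂ) / (c + d) ^ 2 = lam →
    a ^ (n + 1) * b ^ (n - 1) + c ^ (n - 1) * d ^ (n + 1) =
      Polynomial.eval (b * c) F


open Polynomial Finset

lemma natDegree_lin_le (a b : ℂ) : (C a + C b * X : ℂ[X]).natDegree ≤ 1 := by
  refine (natDegree_add_le _ _).trans (max_le (by simp) ?_)
  exact (natDegree_C_mul_le b X).trans (by simp)

/-- Coefficients of a power of a linear polynomial. -/
lemma coeff_lin_pow (b c : ℂ) (K j : ℕ) :
    ((C c + C b * X : ℂ[X]) ^ K).coeff j = c ^ (K - j) * b ^ j * (K.choose j) := by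
  have h : (C c + C b * X : ℂ[X]) ^ K
      = ∑ i ∈ Finset.range (K+1), C (c ^ (K - i) * b ^ i * (K.choose i)) * X ^ i := by
    rw [add_comm, add_pow]
    refine Finset.sum_congr rfl fun i hi => ?_
    rw [mul_pow, ← C_pow, ← C_pow, ← C_eq_natCast]
    simp only [C_mul]
    ring
  rw [h, finset_sum_coeff]
  simp only [coeff_C_mul, coeff_X_pow]
  rw [Finset.sum_eq_single j]
  · simp
  · intro i _ hij
    simp [Ne.symm hij]
  · intro hj
    have hKj : K < j := by
      simp only [Finset.mem_range] at hj; omega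
    simp [Nat.choose_eq_zero_of_lt hKj]

lemma coeff_comp_neg (p : ℂ[X]) (j : ℕ) :
    (p.comp (-X)).coeff j = (-1)^j * p.coeff j := by
  induction p using Polynomial.induction_on' with
  | add p q hp hq => simp only [add_comp, coeff_add, hp, hq]; ring
  | monomial i a =>
    rw [← C_mul_X_pow_eq_monomial, mul_comp, C_comp, pow_comp, X_comp, neg_pow]
    have h1 : ((-1 : ℂ[X]))^i = C ((-1)^i) := by rw [map_pow, map_neg, map_one]
    rw [h1, ← mul_assoc, ← C_mul, coeff_C_mul, coeff_C_mul, coeff_X_pow]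
    by_cases h : j = i
    · subst h; simp; ring
    · simp [h]

lemma reflect_lin_pow (a b : ℂ) (K : ℕ) :
    reflect K ((C a + C b * X : ℂ[X])^K) = (C b + C a * X)^K := by
  induction K with
  | zero => simp
  | succ k ih =>
    have hdeg : ((C a + C b * X : ℂ[X])^k).natDegree ≤ k := by
      refine natDegree_pow_le.trans ?_
      calc k * (C a + C b * X : ℂ[X]).natDegree ≤ k * 1 :=
            Nat.mul_le_mul_left k (natDegree_lin_le a b)
        _ = k := by omega
    rw [pow_succ, reflect_mul _ _ hdeg (natDegree_lin_le a b), ih, pow_succ]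
    congr 1
    have hX : (C b * X : ℂ[X]) = C b * X^1 := by rw [pow_one]
    rw [reflect_add, reflect_C, hX, reflect_C_mul_X_pow]
    have : revAt 1 1 = 0 := revAt_le (le_refl 1)
    rw [this, pow_one, pow_zero, mul_one]
    ring

lemma per1_main (m : ℕ) (lam : ℂ) (hlam : lam ≠ 0) :
    ∃ F : Polynomial ℂ,
      IsPer1Graph (m+2) lam F ∧ (∀ F', IsPer1Graph (m+2) lam F' → F' = F) ∧
      F.coeff (m+2) = -2 ∧
      F.coeff (m+1) = ((m+2 : ℕ) : ℂ) * (lam + lam⁻¹ + 1) - 1 ∧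
      F.coeff 0 = lam * (((m+2 : ℕ) : ℂ) - lam) ^ (m+1) / ((m+2 : ℕ) : ℂ) ^ (m+2) := by
  have hm2 : ((m+2 : ℕ) : ℂ) ≠ 0 := Nat.cast_ne_zero.mpr (by omega)
  obtain ⟨s, hs⟩ : ∃ s : ℂ, s^2 = ((m+2:ℕ):ℂ) / lam :=
    IsAlgClosed.exists_pow_nat_eq _ (by norm_num)
  have hs0 : s ≠ 0 := by
    intro h
    rw [h] at hs
    rw [zero_pow (by norm_num : (2:ℕ) ≠ 0), eq_comm, _root_.div_eq_zero_iff] at hs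
    rcases hs with h1 | h1
    · exact hm2 h1
    · exact hlam h1
  have hss : s * s⁻¹ = 1 := mul_inv_cancel₀ hs0
  have hli : lam * lam⁻¹ = 1 := mul_inv_cancel₀ hlam
  have hlam2 : lam * s^2 = ((m+2:ℕ):ℂ) := by
    rw [hs]; field_simp
  set v : ℂ := (s + s⁻¹)/2 with hv
  set w : ℂ := (s - s⁻¹)/2 with hw
  have hvws : v + w = s := by rw [hv, hw]; ring
  have hvwi : v - w = s⁻¹ := by rw [hv, hw]; ring
  set P1 : ℂ[X] := (C v + C (-1) * X)^(m+3) with hP1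
  set P2 : ℂ[X] := (C w + C 1 * X)^(m+1) with hP2
  set R : ℂ[X] := P1 * P2 with hR
  set Ph : ℂ[X] := R + R.comp (-X) with hPh
  set q : ℂ[X] := C (w^2) + C (-1) * X with hq
  set F : ℂ[X] := ∑ k ∈ Finset.range (m+3), C (Ph.coeff (2*k)) * q^k with hF
  set G : ℂ[X] := ∑ k ∈ Finset.range (m+3), C (Ph.coeff (2*k)) * X^k with hG
  -- degrees
  have hdP1 : P1.natDegree ≤ m+3 := by
    rw [hP1]
    exact natDegree_pow_le.trans
      (le_trans (Nat.mul_le_mul_left _ (natDegree_lin_le _ _)) (by omega))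
  have hdP2 : P2.natDegree ≤ m+1 := by
    rw [hP2]
    exact natDegree_pow_le.trans
      (le_trans (Nat.mul_le_mul_left _ (natDegree_lin_le _ _)) (by omega))
  have hdR : R.natDegree ≤ 2*m+4 := by
    rw [hR]
    exact natDegree_mul_le.trans (by omega)
  have hdRc : (R.comp (-X)).natDegree ≤ 2*m+4 := by
    refine natDegree_comp_le.trans ?_
    have h1 : (-X : ℂ[X]).natDegree = 1 := by rw [natDegree_neg, natDegree_X]
    rw [h1, mul_one]
    exact hdR
  have hdPh : Ph.natDegree ≤ 2*m+4 := by
    rw [hPh]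
    exact (natDegree_add_le _ _).trans (max_le hdR hdRc)
  have hPhc : Ph.comp (-X) = Ph := by
    rw [hPh, add_comp, comp_assoc, neg_comp, X_comp, neg_neg, comp_X, add_comm]
  have hodd : ∀ j, Odd j → Ph.coeff j = 0 := by
    intro j hj
    have h := coeff_comp_neg Ph j
    rw [hPhc, hj.neg_one_pow] at h
    linear_combination h / 2
  have hPh2 : ∀ k, Ph.coeff (2*k) = 2 * R.coeff (2*k) := by
    intro k
    rw [hPh, coeff_add, coeff_comp_neg, pow_mul]
    norm_num
    ring
  have hGcomp : G.comp (X^2) = Ph := by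
    apply Polynomial.ext
    intro j
    rw [hG, Polynomial.sum_comp]
    have hterm : ∀ k, ((C (Ph.coeff (2*k)) * X^k).comp (X^2) : ℂ[X])
        = C (Ph.coeff (2*k)) * X^(2*k) := by
      intro k
      rw [mul_comp, C_comp, pow_comp, X_comp, ← pow_mul]
    rw [Finset.sum_congr rfl (fun k _ => hterm k), finset_sum_coeff]
    simp only [coeff_C_mul, coeff_X_pow]
    rcases Nat.even_or_odd j with he | ho
    · obtain ⟨k0, hk0⟩ := he
      have hj2 : j = 2*k0 := by omega
      subst hj2
      by_cases hk : k0 < m+3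
      · rw [Finset.sum_eq_single k0]
        · simp
        · intro i _ hik
          have : ¬ (2*k0 = 2*i) := by omega
          simp [this]
        · intro habs
          exact absurd (Finset.mem_range.mpr hk) habs
      · have h1 : ∀ i ∈ Finset.range (m+3), Ph.coeff (2*i) * (if 2*k0 = 2*i then (1:ℂ) else 0) = 0 := by
          intro i hi
          rw [Finset.mem_range] at hi
          have : ¬ (2*k0 = 2*i) := by omega
          simp [this]
        rw [Finset.sum_eq_zero h1, eq_comm]
        apply coeff_eq_zero_of_natDegree_lt
        exact lt_of_le_of_lt hdPh (by omega)
    · have h1 : ∀ i ∈ Finset.range (m+3), Ph.coeff (2*i) * (if j = 2*i then (1:ℂ) else 0) = 0 := by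
        intro i hi
        have : ¬ (j = 2*i) := by
          intro h; rw [h] at ho; exact (Nat.not_odd_iff_even.mpr ⟨i, by omega⟩) ho
        simp [this]
      rw [Finset.sum_eq_zero h1, eq_comm]
      exact hodd j ho
  have hFeval : ∀ x : ℂ, F.eval x = G.eval (w^2 - x) := by
    intro x
    rw [hF, hG, eval_finset_sum, eval_finset_sum]
    refine Finset.sum_congr rfl fun k _ => ?_
    rw [eval_mul, eval_mul, eval_C, eval_C, eval_pow, eval_pow, hq]
    simp only [eval_add, eval_mul, eval_C, eval_X]
    ring_nf
  have hPh_eval : ∀ t : ℂ, Ph.eval t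
      = (v - t)^(m+3) * (t + w)^(m+1) + (v + t)^(m+3) * (w - t)^(m+1) := by
    intro t
    rw [hPh, eval_add, eval_comp]
    rw [hR, hP1, hP2]
    simp only [eval_mul, eval_pow, eval_add, eval_neg, eval_C, eval_X, eval_mul]
    ring_nf
  have hG2 : ∀ t : ℂ, G.eval (t^2) = Ph.eval t := by
    intro t
    have h := congrArg (Polynomial.eval t) hGcomp
    rwa [eval_comp, eval_pow, eval_X] at h
  have hqdeg : ∀ k : ℕ, ((q:ℂ[X])^k).natDegree ≤ k := by
    intro k
    rw [hq]
    exact natDegree_pow_le.trans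
      (le_trans (Nat.mul_le_mul_left _ (natDegree_lin_le _ _)) (by omega))
  have hFdeg : F.natDegree ≤ m+2 := by
    rw [hF]
    refine natDegree_sum_le_of_forall_le _ _ fun k hk => ?_
    rw [Finset.mem_range] at hk
    refine natDegree_mul_le.trans ?_
    have := hqdeg k
    have hC : (C (Ph.coeff (2*k))).natDegree = 0 := natDegree_C _
    omega
  -- the key graph computation, for c + d = s
  have key : ∀ a b c d : ℂ, a*d - b*c = 1 → a + b = s → c + d = s →
      a^(m+3) * b^(m+1) + c^(m+1) * d^(m+3) = F.eval (b*c) := by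
    intro a b c d h1 h2 h3
    have h4 : s*d - s*b = 1 := by linear_combination h1 - d*h2 + b*h3
    have hd : d = b + s⁻¹ := by linear_combination s⁻¹ * h4 + (b - d) * hss
    have ha : a = s - b := by linear_combination h2
    have hc : c = s - d := by linear_combination h3
    set t0 : ℂ := b - w with ht0
    have hb' : b = t0 + w := by rw [ht0]; ring
    have ha' : a = v - t0 := by rw [ha, ht0]; linear_combination hvws
    have hd' : d = v + t0 := by rw [hd, ht0]; linear_combination hvwi
    have hc' : c = w - t0 := by rw [hc, hd, ht0]; linear_combination hvws - hvwi
    have hbc : b * c = w^2 - t0^2 := by rw [hb', hc']; ring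
    rw [hFeval, hbc, show w^2 - (w^2 - t0^2) = t0^2 by ring, hG2, hPh_eval]
    rw [ha', hb', hc', hd']
    ring
  have hgraph : IsPer1Graph (m+2) lam F := by
    constructor
    · exact hFdeg
    · intro a b c d h1 h2 h3 h4
      simp only [show m+2+1 = m+3 by omega, show m+2-1 = m+1 by omega]
      have hsq : (c+d)^2 = s^2 := by
        have h5 : lam * (c+d)^2 = ((m+2:ℕ):ℂ) := by
          rw [← h4]
          field_simp
        refine mul_left_cancel₀ hlam ?_
        rw [h5, hlam2]
      have hzero : (c+d-s)*(c+d+s) = 0 := by linear_combination hsq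
      rcases mul_eq_zero.mp hzero with h | h
      · have hcd : c + d = s := by linear_combination h
        exact key a b c d h1 (h2.trans hcd) hcd
      · have hcd : c + d = -s := by linear_combination h
        have e1 : ∀ x y : ℂ, (-x)^(m+3)*(-y)^(m+1) = x^(m+3)*y^(m+1) := by
          intro x y
          have hone : (-1:ℂ)^(m+3) * (-1:ℂ)^(m+1) = 1 := by
            rw [← pow_add, show m+3+(m+1) = 2*(m+2) by omega, pow_mul]
            norm_num
          calc (-x)^(m+3)*(-y)^(m+1)
              = ((-1:ℂ)^(m+3)*(-1:ℂ)^(m+1)) * (x^(m+3)*y^(m+1)) := by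
                rw [neg_pow, neg_pow]; ring
            _ = x^(m+3)*y^(m+1) := by rw [hone, one_mul]
        have r := key (-a) (-b) (-c) (-d) (by linear_combination h1)
          (by linear_combination -h2 - hcd) (by linear_combination -hcd)
        rw [neg_mul_neg] at r
        rw [e1 a b] at r
        have e2 : (-c:ℂ)^(m+1)*(-d)^(m+3) = c^(m+1)*d^(m+3) := by
          linear_combination e1 d c
        rw [e2] at r
        exact r
  have huniq : ∀ F', IsPer1Graph (m+2) lam F' → F' = F := by
    intro F' hF'
    apply Polynomial.funext
    intro x
    obtain ⟨r, hr⟩ : ∃ r : ℂ, r^2 = w^2 - x :=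
      IsAlgClosed.exists_pow_nat_eq _ (by norm_num)
    set b : ℂ := r + w with hb
    set a : ℂ := s - b with hha
    set d : ℂ := b + s⁻¹ with hhd
    set c : ℂ := s - d with hhc
    have hcd : c + d = s := by rw [hhc]; ring
    have h1 : a*d - b*c = 1 := by
      rw [hha, hhd, hhc]
      linear_combination hss
    have h2 : a + b = c + d := by rw [hha, hcd]; ring
    have h3 : c + d ≠ 0 := by rw [hcd]; exact hs0
    have h4 : ((m+2:ℕ):ℂ)/(c+d)^2 = lam := by
      rw [hcd, hs, div_div_eq_mul_div, mul_comm, mul_div_assoc, div_self hm2, mul_one]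
    have hx : b * c = x := by
      have hcr : c = w - r := by
        rw [hhc, hhd, hb]
        linear_combination hvws - hvwi
      rw [hb, hcr]
      linear_combination -hr
    have e' := hF'.2 a b c d h1 h2 h3 h4
    have e := hgraph.2 a b c d h1 h2 h3 h4
    rw [hx] at e e'
    rw [← e', e]
  -- reflection and coefficient extraction
  have hlam2' : lam * s^2 = (m:ℂ)+2 := by push_cast at hlam2 ⊢; exact hlam2
  have hm2' : ((m:ℂ)+2) ≠ 0 := by push_cast at hm2 ⊢; exact hm2
  have hreflR : reflect (2*m+4) R = ((C (-1) + C v * X)^(m+3)) * ((C 1 + C w * X)^(m+1)) := by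
    have h := reflect_mul P1 P2 hdP1 hdP2
    rw [show (m+3)+(m+1) = 2*m+4 by omega] at h
    rw [hR, h, hP1, hP2, reflect_lin_pow, reflect_lin_pow]
  have hRcoeff : ∀ k, k ≤ 2*m+4 → R.coeff (2*m+4-k)
      = (((C (-1) + C v * X)^(m+3)) * ((C 1 + C w * X)^(m+1)) : ℂ[X]).coeff k := by
    intro k hk
    rw [← hreflR, coeff_reflect, revAt_le hk]
  set Q1 : ℂ[X] := (C (-1) + C v * X)^(m+3) with hQ1
  set Q2 : ℂ[X] := (C 1 + C w * X)^(m+1) with hQ2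
  have hsgn13 : (-1:ℂ)^(m+3) = (-1:ℂ)^(m+1) := by
    rw [show m+3 = (m+1)+2 by omega, pow_add]
    norm_num
  have hsqr : (-1:ℂ)^(m+1) * (-1:ℂ)^(m+1) = 1 := by
    rw [← pow_add]
    exact Even.neg_one_pow ⟨m+1, by omega⟩
  have hPhval1 : Ph.coeff (2*(m+2)) = 2 * (-1:ℂ)^(m+1) := by
    rw [hPh2, show 2*(m+2) = 2*m+4-0 by omega, hRcoeff 0 (by omega), mul_coeff_zero,
      hQ1, hQ2, coeff_lin_pow, coeff_lin_pow]
    simp [hsgn13]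
  have hc1 : ((Nat.choose (m+1) 2 : ℕ) : ℂ) = ((m:ℂ)+1)*m/2 := by
    have hnat : (m+1).choose 2 * 2 = (m+1)*m := by
      rw [Nat.choose_two_right, Nat.add_sub_cancel]
      exact Nat.div_mul_cancel (even_iff_two_dvd.mp (by simpa [mul_comm] using Nat.even_mul_succ_self m))
    have hcast := congrArg (Nat.cast : ℕ → ℂ) hnat
    push_cast at hcast
    field_simp
    linear_combination hcast
  have hc3 : ((Nat.choose (m+3) 2 : ℕ) : ℂ) = ((m:ℂ)+3)*((m:ℂ)+2)/2 := by
    have hnat : (m+3).choose 2 * 2 = (m+3)*(m+2) := by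
      rw [Nat.choose_two_right, show m+3-1 = m+2 by omega]
      exact Nat.div_mul_cancel (even_iff_two_dvd.mp (by simpa [mul_comm] using Nat.even_mul_succ_self (m+2)))
    have hcast := congrArg (Nat.cast : ℕ → ℂ) hnat
    push_cast at hcast
    field_simp
    linear_combination hcast
  have hQQ2 : (Q1 * Q2).coeff 2
      = Q1.coeff 0 * Q2.coeff 2 + Q1.coeff 1 * Q2.coeff 1 + Q1.coeff 2 * Q2.coeff 0 := by
    rw [coeff_mul, Finset.Nat.sum_antidiagonal_eq_sum_range_succ_mk]
    rw [Finset.sum_range_succ, Finset.sum_range_succ, Finset.sum_range_succ,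
      Finset.sum_range_zero]
    norm_num
  have hPhval2 : Ph.coeff (2*(m+1)) = 2 * (-1:ℂ)^(m+1) *
      (((m:ℂ)+1)*m/2 * w^2 - ((m:ℂ)+3)*((m:ℂ)+1)*(v*w) + ((m:ℂ)+3)*((m:ℂ)+2)/2 * v^2) := by
    rw [hPh2, show 2*(m+1) = 2*m+4-2 by omega, hRcoeff 2 (by omega), hQQ2]
    rw [hQ1, hQ2]
    rw [coeff_lin_pow, coeff_lin_pow, coeff_lin_pow, coeff_lin_pow, coeff_lin_pow, coeff_lin_pow]
    rw [show m+3-0 = m+3 by omega, show m+3-1 = m+2 by omega, show m+3-2 = m+1 by omega,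
      show m+1-0 = m+1 by omega, show m+1-1 = m by omega]
    rw [Nat.choose_zero_right, Nat.choose_one_right, Nat.choose_zero_right, Nat.choose_one_right]
    rw [hc1, hc3]
    rw [hsgn13, show (-1:ℂ)^(m+2) = (-1:ℂ)^(m+1) * (-1) from pow_succ (-1:ℂ) (m+1)]
    push_cast
    ring
  have hFcoeff : ∀ j, F.coeff j = ∑ k ∈ Finset.range (m+3), Ph.coeff (2*k) * ((q:ℂ[X])^k).coeff j := by
    intro j
    rw [hF, finset_sum_coeff]
    exact Finset.sum_congr rfl fun k _ => by rw [coeff_C_mul]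
  have hqc : ∀ k j : ℕ, ((q:ℂ[X])^k).coeff j = (w^2)^(k-j) * (-1)^j * (k.choose j) := by
    intro k j
    rw [hq]
    exact coeff_lin_pow (-1) (w^2) k j
  have hzero1 : ∀ j, m+1 ≤ j → ∑ k ∈ Finset.range (j), Ph.coeff (2*k) * ((q:ℂ[X])^k).coeff j = 0 := by
    intro j hj
    refine Finset.sum_eq_zero fun k hk => ?_
    rw [Finset.mem_range] at hk
    rw [coeff_eq_zero_of_natDegree_lt (lt_of_le_of_lt (hqdeg k) hk)]
    ring
  have hcoefftop : F.coeff (m+2) = -2 := by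
    rw [hFcoeff, show m+3 = (m+2)+1 by omega, Finset.sum_range_succ,
      hzero1 (m+2) (by omega), zero_add, hqc, Nat.sub_self, pow_zero, Nat.choose_self,
      hPhval1]
    push_cast
    linear_combination -2 * hsqr
  have hcoeffsub : F.coeff (m+1) = ((m+2:ℕ):ℂ) * (lam + lam⁻¹ + 1) - 1 := by
    have hv2 : v^2 = (s^2 + 2 + (s⁻¹)^2)/4 := by rw [hv]; linear_combination hss/2
    have hw2 : w^2 = (s^2 - 2 + (s⁻¹)^2)/4 := by rw [hw]; linear_combination -hss/2
    have hvw2 : v*w = (s^2 - (s⁻¹)^2)/4 := by rw [hv, hw]; ring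
    have hllam : ((m:ℂ)+2) * lam⁻¹ = s^2 := by
      linear_combination (-lam⁻¹)*hlam2' + s^2*hli
    have hlamm : ((m:ℂ)+2) * lam = ((m:ℂ)+2)^2 * (s⁻¹)^2 := by
      linear_combination (((m:ℂ)+2)*(s⁻¹)^2)*hlam2' - (((m:ℂ)+2)*lam*(s*s⁻¹+1))*hss
    rw [hFcoeff, show m+3 = (m+1)+1+1 by omega, Finset.sum_range_succ, Finset.sum_range_succ,
      hzero1 (m+1) le_rfl, zero_add, show (m+1)+1 = m+2 by omega, hqc, hqc,
      Nat.sub_self, pow_zero, Nat.choose_self, show m+2-(m+1) = 1 by omega, pow_one,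
      Nat.choose_succ_self_right, hPhval1, hPhval2]
    push_cast
    linear_combination (norm := ring_nf)  (2*(((m:ℂ)+1)*m/2 * w^2 - ((m:ℂ)+3)*((m:ℂ)+1)*(v*w)
        + ((m:ℂ)+3)*((m:ℂ)+2)/2 * v^2) + 2*((m:ℂ)+2)*w^2)*hsqr
      + (((m:ℂ)+1)*m + 2*((m:ℂ)+2))*hw2 + (((m:ℂ)+3)*((m:ℂ)+2))*hv2
      + (-2*((m:ℂ)+3)*((m:ℂ)+1))*hvw2 - hllam - hlamm
  have hF0 : F.coeff 0 = lam * (((m+2:ℕ):ℂ) - lam)^(m+1) / ((m+2:ℕ):ℂ)^(m+2) := by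
    have h2' : s + 0 = (s - s⁻¹) + s⁻¹ := by ring
    have h3' : (s - s⁻¹) + s⁻¹ ≠ 0 := by rw [show (s-s⁻¹)+s⁻¹ = s by ring]; exact hs0
    have h4' : ((m+2:ℕ):ℂ)/((s-s⁻¹)+s⁻¹)^2 = lam := by
      rw [show (s-s⁻¹)+s⁻¹ = s by ring, hs, div_div_eq_mul_div, mul_comm, mul_div_assoc,
        div_self hm2, mul_one]
    have e := hgraph.2 s 0 (s-s⁻¹) s⁻¹ (by linear_combination hss) h2' h3' h4'
    simp only [show m+2+1 = m+3 by omega, show m+2-1 = m+1 by omega] at e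
    rw [zero_pow (by omega : m+1 ≠ 0), mul_zero, zero_add, zero_mul] at e
    rw [coeff_zero_eq_eval_zero, ← e]
    have hlam_eq : lam = ((m:ℂ)+2) * (s⁻¹*s⁻¹) := by
      linear_combination (s⁻¹*s⁻¹)*hlam2' - lam*(s*s⁻¹+1)*hss
    have hkey : ((m:ℂ)+2) - lam = ((m:ℂ)+2)*(s⁻¹*(s - s⁻¹)) := by
      rw [hlam_eq]
      linear_combination (-((m:ℂ)+2))*hss
    push_cast
    rw [eq_div_iff (pow_ne_zero _ hm2'), hkey, hlam_eq, mul_pow, mul_pow,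
      show m+3 = (m+1)+2 by omega, pow_add, show m+2 = (m+1)+1 by omega, pow_succ]
    ring
  exact ⟨F, hgraph, huniq, hcoefftop, hcoeffsub, hF0⟩

/-- Corollary 2.5: for `λ ≠ 0` the curve `Per₁(λ)` is the graph of a unique
polynomial `F_λ` of degree `≤ n`, with `[X^n] F_λ = -2`,
`[X^{n-1}] F_λ = n(λ + λ⁻¹ + 1) - 1` and `F_λ(0) = λ(n-λ)^{n-1}/nⁿ`.
Consequently, for `λ' ∉ {0, λ}` with `λλ' ≠ 1`, the difference `F_λ - F_{λ'}`
has degree exactly `n - 1`, so `Per₁(λ)` and `Per₁(λ')` have exactly `n - 1`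
intersections counted with multiplicity. -/
theorem stmt12 (n : ℕ) (hn : 2 ≤ n) (lam lam' : ℂ) (hlam : lam ≠ 0)
    (hlam' : lam' ≠ 0) (hne : lam' ≠ lam) (hprod : lam * lam' ≠ 1) :
    ∃ F G : Polynomial ℂ,
      IsPer1Graph n lam F ∧ (∀ F', IsPer1Graph n lam F' → F' = F) ∧
      F.coeff n = -2 ∧
      F.coeff (n - 1) = (n : ℂ) * (lam + lam⁻¹ + 1) - 1 ∧
      F.coeff 0 = lam * ((n : ℂ) - lam) ^ (n - 1) / (n : ℂ) ^ n ∧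
      IsPer1Graph n lam' G ∧ (∀ G', IsPer1Graph n lam' G' → G' = G) ∧
      (F - G).natDegree = n - 1 := by
  obtain ⟨m, rfl⟩ : ∃ m, n = m + 2 := ⟨n - 2, by omega⟩
  obtain ⟨F, hF1, hF2, hF3, hF4, hF5⟩ := per1_main m lam hlam
  obtain ⟨G, hG1, hG2, hG3, hG4, hG5⟩ := per1_main m lam' hlam'
  have hmn : m + 2 - 1 = m + 1 := by omega
  refine ⟨F, G, hF1, hF2, hF3, by rw [hmn]; exact hF4, by rw [hmn]; exact hF5, hG1, hG2, ?_⟩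
  rw [hmn]
  have hsubc : (F - G).coeff (m+2) = 0 := by
    rw [coeff_sub, hF3, hG3]; ring
  have hdle : (F - G).natDegree ≤ m + 1 := by
    rw [natDegree_le_iff_coeff_eq_zero]
    intro N hN
    rcases eq_or_lt_of_le (show m+2 ≤ N by omega) with h | h
    · rw [← h]; exact hsubc
    · rw [coeff_sub, coeff_eq_zero_of_natDegree_lt (lt_of_le_of_lt hF1.1 h),
        coeff_eq_zero_of_natDegree_lt (lt_of_le_of_lt hG1.1 h), sub_zero]
  refine natDegree_eq_of_le_of_coeff_ne_zero hdle ?_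
  rw [coeff_sub, hF4, hG4]
  intro habs
  have hli : lam * lam⁻¹ = 1 := mul_inv_cancel₀ hlam
  have hli' : lam' * lam'⁻¹ = 1 := mul_inv_cancel₀ hlam'
  have hm2' : ((m:ℂ)+2) ≠ 0 := by
    have : ((m+2:ℕ):ℂ) ≠ 0 := Nat.cast_ne_zero.mpr (by omega)
    push_cast at this ⊢; exact this
  have habs' : lam + lam⁻¹ - lam' - lam'⁻¹ = 0 := by
    push_cast at habs
    have h2 : ((m:ℂ)+2) * (lam + lam⁻¹ - lam' - lam'⁻¹) = 0 := by linear_combination habs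
    rcases mul_eq_zero.mp h2 with h | h
    · exact absurd h hm2'
    · exact h
  have hkey : (lam - lam') * (1 - lam⁻¹*lam'⁻¹) = 0 := by
    linear_combination habs' - lam'⁻¹*hli + lam⁻¹*hli'
  rcases mul_eq_zero.mp hkey with h | h
  · have heq : lam = lam' := by linear_combination h
    exact hne heq.symm
  · apply hprod
    have h2 : lam⁻¹ * lam'⁻¹ = 1 := by linear_combination -h
    linear_combination (-lam*lam')*h2 + lam'*lam'⁻¹*hli + hli'
end

section
/- Fix n ≥ 2. Let a, b, c, d ∈ ℂ with ad − bc = 1 and c ≠ 0, and let σ_k (for 0 ≤ k ≤ n+1, with σ₀ = 1) denote the k-th elementary symmetric function of the multiset of n+1 fixed-point multipliers of f(z) = (a z^n + b)/(c z^n + d), i.e. of the multiset obtained by mapping each root z (with multiplicity) of Φ(z) = c z^{n+1} − a z^n + d z − b to f′(z) = n z^{n−1}/(c z^n + d)². Then Σ_{k=0}^{n+1} (−1)^k (n − k) σ_k = 0. (Remark 2.9: the linear relation among the elementary symmetric functions of the fixed-point multipliers of a bicritical map arising from the holomorphic fixed point formula; it does not involve the invariant Y.) -/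
/-!
Write `Q(z) = c zⁿ + d`. At a fixed point `z`, `ad - bc = 1` gives `1 - λ(z) = Φ'(z) / Q(z)`.
If the fixed points are simple, the residue (Lagrange) formula
`∑ Q(z) / Φ'(z) = [zⁿ]Q / lc(Φ) = 1` is the holomorphic fixed point formula
`∑ 1 / (1 - λ) = 1`, i.e. `P'(1) = P(1)` for `P(x) = ∏ (x - λ)`. If some fixed point is
multiple, `λ = 1` there with multiplicity at least two, so `P(1) = P'(1) = 0`.
Finally `P'(1) - P(1) = ∑ (-1)^k (n - k) σ_k`.
-/

open Polynomial Finset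

namespace Multiset

variable {R : Type*} [CommRing R]

theorem eval_one_prod_X_sub_C (s : Multiset R) :
    ((s.map fun r => X - C r).prod).eval 1 =
      ∑ k ∈ Finset.range (card s + 1), (-1) ^ k * s.esymm k := by
  simp [prod_X_sub_X_eq_sum_esymm, eval_finsetSum]

theorem eval_one_derivative_prod_X_sub_C (s : Multiset R) :
    (derivative (s.map fun r => X - C r).prod).eval 1 =
      ∑ k ∈ Finset.range (card s + 1), (-1) ^ k * ((card s : R) - k) * s.esymm k := by
  rw [prod_X_sub_X_eq_sum_esymm, derivative_sum, eval_finsetSum]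
  refine sum_congr rfl fun k hk => ?_
  rw [show ((-1 : R[X]) ^ k) = C ((-1) ^ k) by simp, ← mul_assoc, ← C_mul,
    derivative_C_mul_X_pow, eval_C_mul, eval_pow, eval_X, one_pow,
    Nat.cast_sub (Nat.le_of_lt_succ (mem_range.mp hk))]
  ring

theorem sum_alternating_mul_esymm_eq {m : ℕ} (s : Multiset R) (hs : card s = m + 1) :
    ∑ k ∈ Finset.range (m + 2), (-1) ^ k * ((m : R) - k) * s.esymm k =
      (derivative (s.map fun r => X - C r).prod).eval 1 -
        ((s.map fun r => X - C r).prod).eval 1 := by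
  rw [eval_one_derivative_prod_X_sub_C, eval_one_prod_X_sub_C, ← sum_sub_distrib, hs]
  refine sum_congr rfl fun k _ => ?_
  push_cast
  ring

theorem isRoot_prod_X_sub_C_and_derivative [IsDomain R] {s : Multiset R} {x : R}
    (hx : replicate 2 x ≤ s) :
    ((s.map fun r => X - C r).prod).IsRoot x ∧
      (derivative (s.map fun r => X - C r).prod).IsRoot x := by
  classical
  have hP : (s.map fun r => X - C r).prod ≠ 0 :=
    (monic_multiset_prod_of_monic _ _ fun r _ => monic_X_sub_C r).ne_zero
  rw [← le_count_iff_replicate_le, ← roots_multiset_prod_X_sub_C s, count_roots] at hx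
  exact (one_lt_rootMultiplicity_iff_isRoot hP).mp hx

end Multiset

theorem Polynomial.Splits.sum_roots_eval_div_eval_derivative {K : Type*} [Field K]
    {f q : K[X]} (hf : f.Splits) (hnd : f.roots.Nodup) (hq : q.degree < f.natDegree) :
    (f.roots.map fun z => q.eval z / f.derivative.eval z).sum =
      q.coeff (f.natDegree - 1) / f.leadingCoeff := by
  classical
  set s := f.roots.toFinset
  have hs : s.val = f.roots := Multiset.dedup_eq_self.mpr hnd
  have hcard : #s = f.natDegree := by rw [card_def, hs, splits_iff_card_roots.mp hf]
  have hf_eq : f = C f.leadingCoeff * Lagrange.nodal s id := by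
    rw [Lagrange.nodal_eq, prod_eq_multiset_prod, hs]
    exact hf.eq_prod_roots
  have hderiv :
      ∀ z ∈ s, f.derivative.eval z = f.leadingCoeff * ∏ w ∈ s.erase z, (z - w) := by
    intro z hz
    conv_lhs => rw [hf_eq, derivative_C_mul, eval_C_mul]
    exact congrArg _ ((Lagrange.eval_nodal_derivative_eval_node_eq (v := id) hz).trans
      Lagrange.eval_nodal)
  calc (f.roots.map fun z => q.eval z / f.derivative.eval z).sum
      = ∑ z ∈ s, q.eval z / f.derivative.eval z := by rw [sum_eq_multiset_sum, hs]
    _ = (∑ z ∈ s, q.eval z / ∏ w ∈ s.erase z, (z - w)) / f.leadingCoeff := by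
      rw [sum_div]
      exact sum_congr rfl fun z hz => by rw [hderiv z hz, div_mul_eq_div_div_swap]
    _ = q.coeff (f.natDegree - 1) / f.leadingCoeff := by
      rw [← hcard, Lagrange.coeff_eq_sum (v := id) (Set.injOn_id _) (by rwa [hcard])]
      rfl

theorem Polynomial.eval_derivative_ne_zero_of_nodup_roots {K : Type*} [Field K] {f : K[X]}
    {z : K} (hnd : f.roots.Nodup) (hz : z ∈ f.roots) : f.derivative.eval z ≠ 0 := by
  classical
  have hf : f ≠ 0 := fun h => by simp [h] at hz
  intro hz'
  have := (one_lt_rootMultiplicity_iff_isRoot hf).mpr ⟨isRoot_of_mem_roots hz, hz'⟩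
  rw [← count_roots] at this
  exact absurd (Multiset.nodup_iff_count_le_one.mp hnd z) (not_le.mpr this)

section Bicritical

variable {K : Type*} [Field K] {n : ℕ} {a b c d z : K}

noncomputable def bicriticalFixedPointPoly (n : ℕ) (a b c d : K) : K[X] :=
  C c * X ^ (n + 1) - C a * X ^ n + C d * X - C b

def bicriticalMultiplier (n : ℕ) (c d z : K) : K :=
  n * z ^ (n - 1) / (c * z ^ n + d) ^ 2

noncomputable def bicriticalMultipliers (n : ℕ) (a b c d : K) : Multiset K :=
  (bicriticalFixedPointPoly n a b c d).roots.map (bicriticalMultiplier n c d)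

theorem natDegree_bicriticalFixedPointPoly (hn : n ≠ 0) (hc : c ≠ 0) :
    (bicriticalFixedPointPoly n a b c d).natDegree = n + 1 := by
  unfold bicriticalFixedPointPoly
  compute_degree!
  simpa [hn] using hc

theorem leadingCoeff_bicriticalFixedPointPoly (hn : n ≠ 0) (hc : c ≠ 0) :
    (bicriticalFixedPointPoly n a b c d).leadingCoeff = c := by
  rw [leadingCoeff, natDegree_bicriticalFixedPointPoly hn hc, bicriticalFixedPointPoly]
  simp [coeff_C, coeff_X_pow, hn]

theorem isRoot_bicriticalFixedPointPoly_iff :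
    (bicriticalFixedPointPoly n a b c d).IsRoot z ↔
      c * z ^ (n + 1) - a * z ^ n + d * z - b = 0 := by
  simp [bicriticalFixedPointPoly]

theorem eval_derivative_bicriticalFixedPointPoly :
    (derivative (bicriticalFixedPointPoly n a b c d)).eval z =
      (n + 1) * c * z ^ n - n * a * z ^ (n - 1) + d := by
  simp only [bicriticalFixedPointPoly, derivative_sub, derivative_add, derivative_C_mul_X_pow,
    derivative_C_mul_X, derivative_C, eval_sub, eval_add, eval_C_mul, eval_pow, eval_X, eval_C,
    eval_zero]
  push_cast
  ring

theorem denom_ne_zero_of_isRoot_bicriticalFixedPointPoly (h : a * d - b * c = 1)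
    (hz : (bicriticalFixedPointPoly n a b c d).IsRoot z) : c * z ^ n + d ≠ 0 := by
  rw [isRoot_bicriticalFixedPointPoly_iff] at hz
  intro hQ
  exact one_ne_zero (by linear_combination (a - c * z) * hQ + c * hz - h : (1 : K) = 0)

theorem one_sub_bicriticalMultiplier (hn : n ≠ 0) (h : a * d - b * c = 1)
    (hz : (bicriticalFixedPointPoly n a b c d).IsRoot z) :
    1 - bicriticalMultiplier n c d z =
      (derivative (bicriticalFixedPointPoly n a b c d)).eval z / (c * z ^ n + d) := by
  have hQ := denom_ne_zero_of_isRoot_bicriticalFixedPointPoly h hz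
  rw [isRoot_bicriticalFixedPointPoly_iff] at hz
  obtain ⟨m, rfl⟩ := Nat.exists_eq_add_one_of_ne_zero hn
  rw [bicriticalMultiplier, eval_derivative_bicriticalFixedPointPoly, eq_div_iff hQ]
  field_simp
  push_cast
  linear_combination (-((m + 1 : K) * z ^ m * c)) * hz + ((m + 1 : K) * z ^ m) * h

theorem sum_roots_inv_one_sub_bicriticalMultiplier (hn : n ≠ 0) (h : a * d - b * c = 1)
    (hc : c ≠ 0) (hsplit : (bicriticalFixedPointPoly n a b c d).Splits)
    (hnd : (bicriticalFixedPointPoly n a b c d).roots.Nodup) :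
    ((bicriticalFixedPointPoly n a b c d).roots.map
      fun z => 1 / (1 - bicriticalMultiplier n c d z)).sum = 1 := by
  have hdeg := natDegree_bicriticalFixedPointPoly (a := a) (b := b) (d := d) hn hc
  have hq : (C c * X ^ n + C d : K[X]).degree < ↑(n + 1) := by
    compute_degree
    exact WithBot.coe_lt_coe.mpr n.lt_succ_self
  have hcoeff : (C c * X ^ n + C d : K[X]).coeff n = c := by
    simp [coeff_C, hn]
  calc _ = ((bicriticalFixedPointPoly n a b c d).roots.map fun z => (C c * X ^ n + C d).eval z /
          (bicriticalFixedPointPoly n a b c d).derivative.eval z).sum := by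
        refine congrArg _ (Multiset.map_congr rfl fun z hz => ?_)
        rw [one_sub_bicriticalMultiplier hn h (isRoot_of_mem_roots hz), one_div, inv_div]
        simp
    _ = 1 := by
      rw [hsplit.sum_roots_eval_div_eval_derivative hnd (hdeg ▸ hq), hdeg, Nat.add_sub_cancel,
        hcoeff, leadingCoeff_bicriticalFixedPointPoly hn hc, div_self hc]

theorem bicriticalMultiplier_eq_one_iff (hn : n ≠ 0) (h : a * d - b * c = 1)
    (hz : (bicriticalFixedPointPoly n a b c d).IsRoot z) :
    bicriticalMultiplier n c d z = 1 ↔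
      (derivative (bicriticalFixedPointPoly n a b c d)).eval z = 0 := by
  rw [eq_comm, ← sub_eq_zero, one_sub_bicriticalMultiplier hn h hz,
    div_eq_zero_iff, or_iff_left (denom_ne_zero_of_isRoot_bicriticalFixedPointPoly h hz)]

theorem replicate_two_one_le_bicriticalMultipliers (hn : n ≠ 0) (h : a * d - b * c = 1)
    (hc : c ≠ 0) (hnd : ¬(bicriticalFixedPointPoly n a b c d).roots.Nodup) :
    Multiset.replicate 2 1 ≤ bicriticalMultipliers n a b c d := by
  classical
  obtain ⟨z, hz⟩ : ∃ z, 1 < (bicriticalFixedPointPoly n a b c d).roots.count z := by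
    simpa [Multiset.nodup_iff_count_le_one] using hnd
  have hΦ : bicriticalFixedPointPoly n a b c d ≠ 0 := by
    rw [← leadingCoeff_ne_zero, leadingCoeff_bicriticalFixedPointPoly hn hc]
    exact hc
  have hrep := Multiset.le_count_iff_replicate_le.mp hz
  rw [count_roots] at hz
  obtain ⟨hroot, hroot'⟩ := (one_lt_rootMultiplicity_iff_isRoot hΦ).mp hz
  have hz1 := (bicriticalMultiplier_eq_one_iff hn h hroot).mpr hroot'
  simpa [bicriticalMultipliers, hz1] using
    Multiset.map_le_map (f := bicriticalMultiplier n c d) hrep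

theorem eval_one_derivative_prod_X_sub_bicriticalMultipliers (hn : n ≠ 0)
    (h : a * d - b * c = 1) (hc : c ≠ 0) (hsplit : (bicriticalFixedPointPoly n a b c d).Splits) :
    (derivative ((bicriticalMultipliers n a b c d).map fun r => X - C r).prod).eval 1 =
      (((bicriticalMultipliers n a b c d).map fun r => X - C r).prod).eval 1 := by
  by_cases hnd : (bicriticalFixedPointPoly n a b c d).roots.Nodup
  · have hP : (((bicriticalMultipliers n a b c d).map fun r => X - C r).prod).eval 1 ≠ 0 := by
      rw [eval_multiset_prod, bicriticalMultipliers, Multiset.map_map, Multiset.map_map]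
      refine Multiset.prod_ne_zero fun hmem => ?_
      obtain ⟨z, hz, hz1⟩ := Multiset.mem_map.mp hmem
      refine eval_derivative_ne_zero_of_nodup_roots hnd hz
        ((bicriticalMultiplier_eq_one_iff hn h (isRoot_of_mem_roots hz)).mp ?_)
      simp only [Function.comp_apply, eval_sub, eval_X, eval_C] at hz1
      exact (sub_eq_zero.mp hz1).symm
    have hsplitP : (((bicriticalMultipliers n a b c d).map fun r => X - C r).prod).Splits :=
      Splits.multisetProd fun p hp => by
        obtain ⟨r, -, rfl⟩ := Multiset.mem_map.mp hp
        exact Splits.X_sub_C r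
    rw [hsplitP.eval_derivative_eq_eval_mul_sum hP, roots_multiset_prod_X_sub_C,
      bicriticalMultipliers, Multiset.map_map (fun z => 1 / (1 - z)), Function.comp_def,
      sum_roots_inv_one_sub_bicriticalMultiplier hn h hc hsplit hnd, mul_one]
  · obtain ⟨hP, hP'⟩ := Multiset.isRoot_prod_X_sub_C_and_derivative
      (replicate_two_one_le_bicriticalMultipliers hn h hc hnd)
    rw [hP.eq_zero, hP'.eq_zero]

end Bicritical

/-- Remark 2.9: the linear relation `Σ_{k=0}^{n+1} (-1)^k (n-k) σ_k = 0` among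
the elementary symmetric functions `σ_k` of the `n+1` fixed-point multipliers
of a bicritical map `f(z) = (a z^n + b)/(c z^n + d)` (`ad - bc = 1`, `c ≠ 0`),
arising from the holomorphic fixed point formula. -/
theorem stmt15 (n : ℕ) (hn : 2 ≤ n) (a b c d : ℂ)
    (h : a * d - b * c = 1) (hc : c ≠ 0) :
    let M : Multiset ℂ :=
      ((Polynomial.C c * Polynomial.X ^ (n + 1) - Polynomial.C a * Polynomial.X ^ n +
        Polynomial.C d * Polynomial.X - Polynomial.C b : Polynomial ℂ).roots).map
        fun z => (n : ℂ) * z ^ (n - 1) / (c * z ^ n + d) ^ 2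
    ∑ k ∈ Finset.range (n + 2), (-1 : ℂ) ^ k * ((n : ℂ) - (k : ℂ)) * M.esymm k = 0 := by
  show ∑ k ∈ Finset.range (n + 2), (-1 : ℂ) ^ k * ((n : ℂ) - k) *
    (bicriticalMultipliers n a b c d).esymm k = 0
  have hn0 : n ≠ 0 := by omega
  have hsplit := IsAlgClosed.splits (bicriticalFixedPointPoly n a b c d)
  have hcard : Multiset.card (bicriticalMultipliers n a b c d) = n + 1 := by
    rw [bicriticalMultipliers, Multiset.card_map, splits_iff_card_roots.mp hsplit,
      natDegree_bicriticalFixedPointPoly hn0 hc]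
  rw [Multiset.sum_alternating_mul_esymm_eq _ hcard, sub_eq_zero]
  exact eval_one_derivative_prod_X_sub_bicriticalMultipliers hn0 h hc hsplit
end

section
/- Fix n ≥ 2 and b ∈ ℂ, and consider the unicritical polynomial f(z) = z^n + b. Let R be the multiset of roots, counted with multiplicity, of z^n − z + b in ℂ (the finite fixed points of f), and let M be the multiset obtained by mapping each element z of R to its multiplier n z^{n−1}. Then the k-th elementary symmetric function of M equals n^k · C(n−1, k) for every 0 ≤ k ≤ n−1, while the n-th elementary symmetric function of M (the product of the n multipliers) equals n^n b^{n−1}. (Remark 2.8: together with the multiplier 0 at the fixed point ∞, this says σ_k = n^k C(n−1,k) for all k ≠ n and σ_n = n^n Y, where Y = b^{n−1} is the invariant of f; e.g. for f(z) = z² + b the finite fixed points satisfy λ₁ + λ₂ = 2 and λ₁λ₂ = 4b.) -/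
/-!
At a finite fixed point `z` of `zⁿ + b` we have `zⁿ = z - b`, so the multiplier `λ = n zⁿ⁻¹`
satisfies `z (y + λ) = (y + n) z - n b`. Multiplying over all roots, `∏ (c - a z)` is the
homogenisation `cⁿ - c aⁿ⁻¹ + b aⁿ` of `zⁿ - z + b`, and `∏ z = (-1)ⁿ b`; for `b ≠ 0` this gives
`∏ (y + λ) = y (y + n)ⁿ⁻¹ + nⁿ bⁿ⁻¹`. For `b = 0` the roots are `0` and the `(n-1)`-th roots of
unity, with multipliers `0` and `n`, giving the same polynomial. The elementary symmetric
functions of the multipliers are its coefficients.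
-/

open Polynomial

theorem Polynomial.Splits.prod_roots_sub_mul {K : Type*} [Field K] {f : K[X]} (hf : f.Splits)
    (hm : f.Monic) {a : K} (ha : a ≠ 0) (c : K) :
    (f.roots.map fun z => c - a * z).prod = a ^ f.natDegree * f.eval (c / a) := by
  calc (f.roots.map fun z => c - a * z).prod = (f.roots.map fun z => a * (c / a - z)).prod := by
        congr! 2 with z; field_simp
    _ = a ^ f.natDegree * f.eval (c / a) := by
        rw [Multiset.prod_map_mul, Multiset.map_const', Multiset.prod_replicate,
          ← hf.natDegree_eq_card_roots, hf.eval_eq_prod_roots_of_monic hm]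

theorem monic_X_pow_sub_X_add_C {R : Type*} [CommRing R] {n : ℕ} (hn : 2 ≤ n) (b : R) :
    (X ^ n - X + C b : R[X]).Monic := by
  rw [sub_add]
  exact monic_X_pow_sub (degree_X_sub_C_le b |>.trans_lt (by exact_mod_cast hn))

theorem natDegree_X_pow_sub_X_add_C {R : Type*} [CommRing R] [Nontrivial R] {n : ℕ}
    (hn : 2 ≤ n) (b : R) : (X ^ n - X + C b : R[X]).natDegree = n := by
  rw [sub_add, natDegree_sub_eq_left_of_natDegree_lt] <;>
    simp only [natDegree_X_pow, natDegree_X_sub_C]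
  omega

section AlgClosed

variable {K : Type*} [Field K] [IsAlgClosed K]

theorem card_roots_X_pow_sub_X_add_C {n : ℕ} (hn : 2 ≤ n) (b : K) :
    Multiset.card (X ^ n - X + C b : K[X]).roots = n := by
  rw [← (IsAlgClosed.splits _).natDegree_eq_card_roots, natDegree_X_pow_sub_X_add_C hn]

theorem prod_roots_X_pow_sub_X_add_C_sub_mul {n : ℕ} (hn : 2 ≤ n) (b a c : K) :
    ((X ^ n - X + C b : K[X]).roots.map fun z => c - a * z).prod
      = c ^ n - c * a ^ (n - 1) + b * a ^ n := by
  obtain ⟨m, rfl⟩ := Nat.exists_eq_add_of_le' hn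
  rcases eq_or_ne a 0 with rfl | ha
  · simp [card_roots_X_pow_sub_X_add_C hn]
    ring
  rw [(IsAlgClosed.splits _).prod_roots_sub_mul (monic_X_pow_sub_X_add_C hn b) ha,
    natDegree_X_pow_sub_X_add_C hn, show m + 2 - 1 = m + 1 from rfl]
  simp only [eval_add, eval_sub, eval_pow, eval_X, eval_C, div_pow]
  field_simp
  ring

theorem prod_roots_X_pow_sub_X_add_C {n : ℕ} (hn : 2 ≤ n) (b : K) :
    (X ^ n - X + C b : K[X]).roots.prod = (-1) ^ n * b := by
  simpa [zero_pow (by omega : n ≠ 0), mul_comm] using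
    prod_roots_X_pow_sub_X_add_C_sub_mul hn b (-1) 0

theorem prod_X_add_multiplier_roots_X_pow_sub_X_add_C_of_ne_zero {n : ℕ} (hn : 2 ≤ n) {b : K}
    (hb : b ≠ 0) :
    ((X ^ n - X + C b : K[X]).roots.map fun z => X + C ((n : K) * z ^ (n - 1))).prod
      = X * (X + C (n : K)) ^ (n - 1) + C ((n : K) ^ n * b ^ (n - 1)) := by
  set R := (X ^ n - X + C b : K[X]).roots
  have hfixed : ∀ z ∈ R, z ^ n = z - b := fun z hz => by
    have := (mem_roots'.mp hz).2
    simp only [IsRoot, eval_add, eval_sub, eval_pow, eval_X, eval_C] at this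
    linear_combination this
  refine Polynomial.funext fun y => ?_
  have hscaled : (R.map fun z => z * (y + n * z ^ (n - 1))).prod
      = (R.map fun z => -(n * b) - (-(y + n)) * z).prod := by
    refine congrArg Multiset.prod (Multiset.map_congr rfl fun z hz => ?_)
    linear_combination (n : K) * mul_pow_sub_one (by omega : n ≠ 0) z + n * hfixed z hz
  rw [Multiset.prod_map_mul, Multiset.map_id', prod_roots_X_pow_sub_X_add_C hn,
    prod_roots_X_pow_sub_X_add_C_sub_mul hn] at hscaled
  rw [eval_multiset_prod, Multiset.map_map]
  refine mul_left_cancel₀ (mul_ne_zero (pow_ne_zero n (neg_ne_zero.mpr one_ne_zero)) hb) ?_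
  obtain ⟨m, rfl⟩ := Nat.exists_eq_add_of_le' hn
  simp only [Function.comp_def, eval_add, eval_mul, eval_pow, eval_X, eval_C,
    show m + 2 - 1 = m + 1 from rfl] at hscaled ⊢
  rw [neg_pow (_ * b), neg_pow (y + _), neg_pow (y + _)] at hscaled
  linear_combination hscaled

theorem prod_X_add_multiplier_roots_X_pow_sub_X {n : ℕ} (hn : 2 ≤ n) :
    ((X ^ n - X : K[X]).roots.map fun z => X + C ((n : K) * z ^ (n - 1))).prod
      = X * (X + C (n : K)) ^ (n - 1) := by
  obtain ⟨m, rfl⟩ := Nat.exists_eq_add_of_le' hn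
  have hfac : (X ^ (m + 2) - X : K[X]) = X * (X ^ (m + 1) - C 1) := by rw [C_1]; ring
  have hne : (X ^ (m + 1) - C 1 : K[X]) ≠ 0 := (monic_X_pow_sub_C 1 (by omega)).ne_zero
  have hunity :
      ((nthRoots (m + 1) (1 : K)).map fun z => X + C (((m + 2 : ℕ) : K) * z ^ (m + 1)))
      = Multiset.replicate (m + 1) (X + C ((m + 2 : ℕ) : K)) := by
    refine Multiset.eq_replicate.mpr ⟨?_, ?_⟩
    · rw [Multiset.card_map, nthRoots, ← (IsAlgClosed.splits _).natDegree_eq_card_roots,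
        natDegree_X_pow_sub_C]
    · intro _ hp
      obtain ⟨z, hz, rfl⟩ := Multiset.mem_map.mp hp
      rw [(mem_nthRoots (by omega)).mp hz, mul_one]
  rw [hfac, roots_mul (mul_ne_zero X_ne_zero hne), roots_X, ← nthRoots, Multiset.singleton_add,
    Multiset.map_cons, Multiset.prod_cons, show m + 2 - 1 = m + 1 from rfl, hunity,
    Multiset.prod_replicate]
  simp

theorem prod_X_add_multiplier_roots_X_pow_sub_X_add_C {n : ℕ} (hn : 2 ≤ n) (b : K) :
    ((X ^ n - X + C b : K[X]).roots.map fun z => X + C ((n : K) * z ^ (n - 1))).prod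
      = X * (X + C (n : K)) ^ (n - 1) + C ((n : K) ^ n * b ^ (n - 1)) := by
  rcases eq_or_ne b 0 with rfl | hb
  · simpa [zero_pow (by omega : n - 1 ≠ 0)] using
      prod_X_add_multiplier_roots_X_pow_sub_X (K := K) hn
  · exact prod_X_add_multiplier_roots_X_pow_sub_X_add_C_of_ne_zero hn hb

end AlgClosed

theorem Multiset.esymm_eq_coeff_prod_X_add_C {R : Type*} [CommSemiring R] (s : Multiset R)
    {k : ℕ} (hk : k ≤ Multiset.card s) :
    s.esymm k = (s.map fun r => X + C r).prod.coeff (Multiset.card s - k) := by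
  rw [prod_X_add_C_coeff s (Nat.sub_le _ _), Nat.sub_sub_self hk]

theorem coeff_X_mul_X_add_C_pow_add_C_succ {R : Type*} [CommSemiring R] (r s : R) (m j : ℕ) :
    (X * (X + C r) ^ m + C s).coeff (j + 1) = r ^ (m - j) * m.choose j := by
  rw [coeff_add, coeff_X_mul, coeff_C_succ, add_zero, coeff_X_add_C_pow]

theorem coeff_X_mul_X_add_C_pow_add_C_zero {R : Type*} [CommSemiring R] (r s : R) (m : ℕ) :
    (X * (X + C r) ^ m + C s).coeff 0 = s := by
  simp

/-- Remark 2.8: for the unicritical polynomial `f(z) = zⁿ + b`, with `M` the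
multiset of multipliers `n z^{n-1}` at the finite fixed points (the roots of
`zⁿ - z + b`), the `k`-th elementary symmetric function of `M` equals
`n^k C(n-1, k)` for `0 ≤ k ≤ n-1`, while the product of the `n` multipliers
equals `nⁿ b^{n-1}`. -/
theorem stmt16 (n : ℕ) (hn : 2 ≤ n) (b : ℂ) :
    let M : Multiset ℂ :=
      ((Polynomial.X ^ n - Polynomial.X + Polynomial.C b : Polynomial ℂ).roots).map
        fun z => (n : ℂ) * z ^ (n - 1)
    (∀ k ≤ n - 1, M.esymm k = (n : ℂ) ^ k * ((n - 1).choose k : ℂ)) ∧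
      M.esymm n = (n : ℂ) ^ n * b ^ (n - 1) := by
  intro M
  have hcard : Multiset.card M = n := by
    rw [Multiset.card_map, card_roots_X_pow_sub_X_add_C hn]
  have hprod : (M.map fun r => X + C r).prod
      = X * (X + C (n : ℂ)) ^ (n - 1) + C ((n : ℂ) ^ n * b ^ (n - 1)) := by
    rw [Multiset.map_map]
    exact prod_X_add_multiplier_roots_X_pow_sub_X_add_C hn b
  refine ⟨fun k hk => ?_, ?_⟩
  · rw [M.esymm_eq_coeff_prod_X_add_C (by omega), hprod, hcard,
      show n - k = n - 1 - k + 1 by omega, coeff_X_mul_X_add_C_pow_add_C_succ,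
      show n - 1 - (n - 1 - k) = k by omega, Nat.choose_symm hk]
  · rw [M.esymm_eq_coeff_prod_X_add_C hcard.ge, hprod, hcard, Nat.sub_self,
      coeff_X_mul_X_add_C_pow_add_C_zero]
end

section
/- Fix n ≥ 2 and b ∈ ℂ with b ≠ 0 and b^{n−1} ≠ (n−1)^{n−1}/n^n. Then the fixed-point polynomial z^n − z + b has n distinct roots, all nonzero; no root z satisfies n z^{n−1} = 1; and any two distinct roots z ≠ w have distinct multipliers, n z^{n−1} ≠ n w^{n−1}. Hence the n+1 fixed points of f(z) = z^n + b (the n finite roots together with ∞, whose multiplier is 0) have pairwise distinct, and for the finite ones nonzero, multipliers. (Genericity claim from the proof of Theorem 2.6: for generic parameters the n+1 fixed-point multipliers of a bicritical map are distinct.) -/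
open Polynomial

lemma aux_nonzero (n : ℕ) (hn : 2 ≤ n) (b : ℂ) (hb : b ≠ 0) :
    ∀ z : ℂ, z ^ n - z + b = 0 → z ≠ 0 := by
  intro z hz h0
  rw [h0, zero_pow (show n ≠ 0 by omega), sub_zero, zero_add] at hz
  exact hb hz

lemma aux_mult_ne_one (n : ℕ) (hn : 2 ≤ n) (b : ℂ) (hb : b ≠ 0)
    (hb' : b ^ (n - 1) ≠ ((n : ℂ) - 1) ^ (n - 1) / (n : ℂ) ^ n) :
    ∀ z : ℂ, z ^ n - z + b = 0 → (n : ℂ) * z ^ (n - 1) ≠ 1 := by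
  intro z hz hm
  have hn0 : (n : ℂ) ≠ 0 := by
    exact_mod_cast Nat.cast_ne_zero.mpr (by omega)
  have hpow : z ^ n = z ^ (n - 1) * z := by
    rw [← pow_succ, Nat.sub_add_cancel (by omega)]
  set a := z ^ (n - 1) with ha
  rw [hpow] at hz
  -- (n-1) z = n b
  have h2 : ((n : ℂ) - 1) * z = (n : ℂ) * b := by
    linear_combination z * hm - (n : ℂ) * hz
  -- raise to (n-1)
  have h3 : (((n : ℂ) - 1) * z) ^ (n - 1) = ((n : ℂ) * b) ^ (n - 1) := by rw [h2]
  rw [mul_pow, mul_pow, ← ha] at h3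
  -- h3 : (n-1)^(n-1) * a = n^(n-1) * b^(n-1)
  have hnn : (n : ℂ) ^ n = (n : ℂ) ^ (n - 1) * n := by
    rw [← pow_succ, Nat.sub_add_cancel (by omega)]
  apply hb'
  rw [eq_div_iff (pow_ne_zero _ hn0)]
  calc b ^ (n - 1) * (n : ℂ) ^ n = ((n:ℂ) ^ (n-1) * b ^ (n-1)) * n := by rw [hnn]; ring
    _ = (((n : ℂ) - 1) ^ (n - 1) * a) * n := by rw [h3]
    _ = ((n : ℂ) - 1) ^ (n - 1) * ((n:ℂ) * a) := by ring
    _ = ((n : ℂ) - 1) ^ (n - 1) := by rw [hm, mul_one]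

lemma aux_distinct (n : ℕ) (hn : 2 ≤ n) (b : ℂ) (hb : b ≠ 0) :
    ∀ z w : ℂ, z ^ n - z + b = 0 → w ^ n - w + b = 0 → z ≠ w →
      (n : ℂ) * z ^ (n - 1) ≠ (n : ℂ) * w ^ (n - 1) := by
  intro z w hz hw hzw hm
  have hn0 : (n : ℂ) ≠ 0 := by
    exact_mod_cast Nat.cast_ne_zero.mpr (by omega)
  have hm' : z ^ (n - 1) = w ^ (n - 1) := mul_left_cancel₀ hn0 hm
  have hpz : z ^ n = z ^ (n - 1) * z := by
    rw [← pow_succ, Nat.sub_add_cancel (by omega)]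
  have hpw : w ^ n = w ^ (n - 1) * w := by
    rw [← pow_succ, Nat.sub_add_cancel (by omega)]
  rw [hpz] at hz
  rw [hpw, ← hm'] at hw
  -- (z - w)(z^{n-1} - 1) = 0
  have h4 : (z - w) * (z ^ (n - 1) - 1) = 0 := by linear_combination hz - hw
  rcases mul_eq_zero.mp h4 with h | h
  · exact hzw (sub_eq_zero.mp h)
  · have h1 : z ^ (n - 1) = 1 := sub_eq_zero.mp h
    rw [h1, one_mul] at hz
    simp only [sub_self, zero_add] at hz
    exact hb hz

/-- Genericity claim from the proof of Theorem 2.6: if `b ≠ 0` and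
`b^{n-1} ≠ (n-1)^{n-1}/nⁿ`, then the fixed-point polynomial `zⁿ - z + b` of
`f(z) = zⁿ + b` has `n` distinct roots, all nonzero; no root has multiplier
`n z^{n-1} = 1`; and distinct roots have distinct multipliers.  Hence the
`n+1` fixed points of `f` (including `∞`, of multiplier `0`) have pairwise
distinct multipliers, nonzero at the finite fixed points. -/
theorem stmt17 (n : ℕ) (hn : 2 ≤ n) (b : ℂ) (hb : b ≠ 0)
    (hb' : b ^ (n - 1) ≠ ((n : ℂ) - 1) ^ (n - 1) / (n : ℂ) ^ n) :
    (Polynomial.X ^ n - Polynomial.X + Polynomial.C b : Polynomial ℂ).roots.toFinset.card = n ∧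
    (∀ z : ℂ, z ^ n - z + b = 0 → z ≠ 0) ∧
    (∀ z : ℂ, z ^ n - z + b = 0 → (n : ℂ) * z ^ (n - 1) ≠ 1) ∧
    (∀ z w : ℂ, z ^ n - z + b = 0 → w ^ n - w + b = 0 → z ≠ w →
      (n : ℂ) * z ^ (n - 1) ≠ (n : ℂ) * w ^ (n - 1)) := by
  refine ⟨?_, aux_nonzero n hn b hb, aux_mult_ne_one n hn b hb hb', aux_distinct n hn b hb⟩
  set p : Polynomial ℂ := X ^ n - X + C b with hp
  have hdeg : p.natDegree = n := by
    rw [hp]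
    compute_degree!
    · norm_num [show ¬(1 = n) by omega, show ¬(n = 0) by omega]
    · omega
  have hp0 : p ≠ 0 := by
    intro h
    rw [h] at hdeg
    simp at hdeg
    omega
  have hder : p.derivative = C (n : ℂ) * X ^ (n - 1) - 1 := by
    rw [hp]
    simp [derivative_X_pow]
  have hsep : p.Separable := by
    rw [Polynomial.Separable]
    rw [Polynomial.isCoprime_iff_aeval_ne_zero_of_isAlgClosed (k := ℂ) ℂ p p.derivative]
    intro a
    by_cases h : (Polynomial.aeval a) p = 0
    · right
      rw [hder]
      have ha : a ^ n - a + b = 0 := by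
        rw [hp] at h; simpa using h
      have := aux_mult_ne_one n hn b hb hb' a ha
      simp only [map_sub, map_mul, map_pow, aeval_C, aeval_X, map_one, Algebra.algebraMap_self, RingHom.id_apply]
      intro h'
      exact this (by linear_combination h')
    · left; exact h
  have hnodup : p.roots.Nodup := Polynomial.nodup_roots hsep
  have hcard : p.roots.card = n := by
    rw [← hdeg]
    exact (Polynomial.splits_iff_card_roots.mp (IsAlgClosed.splits p))
  rw [Multiset.toFinset_card_of_nodup hnodup, hcard]
end

section
/- Fix n ≥ 2 and α ∈ ℂ, and set a = n+1+α, b = n−1−α, c = n−1+α, d = n+1−α, and f(z) = (a z^n + b)/(c z^n + d). Then ad − bc = 4n, f(1) = 1 and f′(1) = 1, so f has a parabolic fixed point of multiplier 1 at z = 1; and the invariant of f is X = bc/(ad − bc) = ((n−1)² − α²)/(4n), so that every complex value of X is realized by this family. Moreover, if α ∉ {0, n+1, −(n−1)}, the two critical values satisfy f(0) = b/d = 1 + 2/(α w₁) and f(∞) = a/c = 1 + 2/(α w₂), where w₁ = 1 − (n+1)/α and w₂ = 1 + (n−1)/α. (The normal form (12) of §4, parametrizing the curve Per₁(1) of conjugacy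 classes with a parabolic fixed point of multiplier 1.) -/
/-!
With `a + b = c + d = 2n` the point `1` is fixed, and the multiplier there,
`n (ad - bc) / (c + d)²`, equals `1` exactly because `ad - bc = 4n = (c + d)² / n`.
The critical values are quotients `(x + 2) / x` with `x = α - (n + 1)`, resp. `x = α + (n - 1)`,
and the invariant `((n - 1)² - α²) / 4n` is surjective in `α` since every complex number is a square.
-/

section BicriticalMap

variable {K : Type*} [Field K]

def bicriticalMap (n : ℕ) (a b c d : K) (z : K) : K := (a * z ^ n + b) / (c * z ^ n + d)

theorem bicriticalMap_one (n : ℕ) (a b c d : K) :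
    bicriticalMap n a b c d 1 = (a + b) / (c + d) := by
  simp [bicriticalMap]

theorem bicriticalMap_zero {n : ℕ} (hn : n ≠ 0) (a b c d : K) :
    bicriticalMap n a b c d 0 = b / d := by
  simp [bicriticalMap, zero_pow hn]

variable {𝕜 : Type*} [NontriviallyNormedField 𝕜]

theorem hasDerivAt_bicriticalMap (n : ℕ) (a b c d : 𝕜) {z : 𝕜} (hz : c * z ^ n + d ≠ 0) :
    HasDerivAt (bicriticalMap n a b c d)
      (n * z ^ (n - 1) * (a * d - b * c) / (c * z ^ n + d) ^ 2) z := by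
  have hnum := ((hasDerivAt_pow n z).const_mul a).add_const b
  have hden := ((hasDerivAt_pow n z).const_mul c).add_const d
  exact (hnum.div hden hz).congr_deriv (by ring)

theorem deriv_bicriticalMap_one (n : ℕ) (a b c d : 𝕜) (hcd : c + d ≠ 0) :
    deriv (bicriticalMap n a b c d) 1 = n * (a * d - b * c) / (c + d) ^ 2 := by
  rw [(hasDerivAt_bicriticalMap n a b c d (by simpa using hcd)).deriv]
  simp

end BicriticalMap

theorem mul_one_add_div_self {K : Type*} [Field K] {α : K} (hα : α ≠ 0) (m : K) :
    α * (1 + m / α) = α + m := by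
  rw [mul_add, mul_one, mul_div_cancel₀ _ hα]

theorem exists_div_sub_sq_eq {K : Type*} [Field K] [IsAlgClosed K] {p : K} (hp : p ≠ 0)
    (q X : K) : ∃ β : K, (q - β ^ 2) / p = X := by
  obtain ⟨β, hβ⟩ := IsAlgClosed.exists_pow_nat_eq (q - p * X) two_pos
  exact ⟨β, by rw [hβ, sub_sub_cancel, mul_div_cancel_left₀ _ hp]⟩

/-- The normal form (12) of §4 parametrizing `Per₁(1)`: with
`a = n+1+α`, `b = n-1-α`, `c = n-1+α`, `d = n+1-α` and
`f(z) = (a zⁿ + b)/(c zⁿ + d)`, one has `ad - bc = 4n`, `f(1) = 1` and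
`f'(1) = 1` (a parabolic fixed point of multiplier `1`), the invariant is
`X = bc/(ad - bc) = ((n-1)² - α²)/(4n)`, every complex value of `X` is
realized by this family, and for `α ∉ {0, n+1, -(n-1)}` the critical values
are `f(0) = b/d = 1 + 2/(α w₁)` and `f(∞) = a/c = 1 + 2/(α w₂)` with
`w₁ = 1 - (n+1)/α` and `w₂ = 1 + (n-1)/α`. -/
theorem stmt19 (n : ℕ) (hn : 2 ≤ n) (α : ℂ) :
    let a : ℂ := (n : ℂ) + 1 + α
    let b : ℂ := (n : ℂ) - 1 - α
    let c : ℂ := (n : ℂ) - 1 + α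
    let d : ℂ := (n : ℂ) + 1 - α
    let f : ℂ → ℂ := fun z => (a * z ^ n + b) / (c * z ^ n + d)
    a * d - b * c = 4 * (n : ℂ) ∧ f 1 = 1 ∧ deriv f 1 = 1 ∧
      b * c / (a * d - b * c) = (((n : ℂ) - 1) ^ 2 - α ^ 2) / (4 * (n : ℂ)) ∧
      (∀ X : ℂ, ∃ β : ℂ, (((n : ℂ) - 1) ^ 2 - β ^ 2) / (4 * (n : ℂ)) = X) ∧
      (α ≠ 0 → α ≠ (n : ℂ) + 1 → α ≠ -((n : ℂ) - 1) →
        f 0 = b / d ∧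
        b / d = 1 + 2 / (α * (1 - ((n : ℂ) + 1) / α)) ∧
        a / c = 1 + 2 / (α * (1 + ((n : ℂ) - 1) / α))) := by
  intro a b c d f
  have hn0 : (n : ℂ) ≠ 0 := Nat.cast_ne_zero.mpr (by omega)
  have hdet : a * d - b * c = 4 * n := by ring
  have hcd : c + d = 2 * n := by ring
  have hab : a + b = 2 * n := by ring
  have h4n : (4 : ℂ) * n ≠ 0 := by simp [hn0]
  refine ⟨hdet, ?_, ?_, ?_, exists_div_sub_sq_eq h4n _, ?_⟩
  · change bicriticalMap n a b c d 1 = 1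
    rw [bicriticalMap_one, hab, hcd, div_self (by simp [hn0])]
  · change deriv (bicriticalMap n a b c d) 1 = 1
    rw [deriv_bicriticalMap_one _ _ _ _ _ (by simp [hcd, hn0]), hdet, hcd]
    field_simp
    ring
  · rw [hdet]
    ring
  · intro hα hd hc
    have hw₁ : α * (1 - ((n : ℂ) + 1) / α) = α - (n + 1) := by
      rw [sub_eq_add_neg, ← neg_div, mul_one_add_div_self hα, ← sub_eq_add_neg]
    have hw₂ := mul_one_add_div_self hα ((n : ℂ) - 1)
    refine ⟨bicriticalMap_zero (by omega) a b c d, ?_, ?_⟩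
    · rw [hw₁, ← same_add_div (sub_ne_zero.mpr hd), ← neg_div_neg_eq]
      congr 1 <;> ring
    · rw [hw₂, ← same_add_div (by contrapose! hc; linear_combination hc)]
      congr 1 <;> ring
end
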